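/- arXiv:2109.12222 — 13 statements merged into one kernel-verified Lean document; each statement's English description precedes it below -/
import Mathlib

section
/- Let τ, σ > 0, let x̄ ∈ dom g ∩ int(dom φ_X) and ȳ⋆ ∈ dom h⋆ ∩ int(dom φ_{Y⋆}), and let (x̃, ỹ⋆) ∈ X × Y⋆. Suppose x̂ ∈ dom g ∩ int(dom φ_X) minimizes x ↦ g(x) + ⟨ỹ⋆, Ax⟩ + (1/τ)·D_X(x, x̄) over X, and ŷ⋆ ∈ dom h⋆ ∩ int(dom φ_{Y⋆}) maximizes y⋆ ↦ −h⋆(y⋆) + ⟨y⋆, Ax̃⟩ − (1/σ)·D_Y(y⋆, ȳ⋆) over Y⋆. Then for every x ∈ dom g ∩ dom φ_X and every y⋆ ∈ dom h⋆ ∩ dom φ_{Y⋆}, the descent rule holds: L(x̂, y⋆) − L(x, ŷ⋆) ≤ (1/τ)(D_X(x, x̄) − D_X(x̂, x̄) − D_X(x, x̂)) + (1/σ)(D_Y(y⋆, ȳ⋆) − D_Y(ŷ⋆, ȳ⋆) − D_Y(y⋆, ŷ⋆)) + ⟨ỹ⋆ − ŷ⋆, A(x − x̃)⟩ − ⟨y⋆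 − ỹ⋆, A(x̃ − x̂)⟩. -/
open Filter Topology

lemma slope_limit {f : ℝ → ℝ} {d c : ℝ} (hf : HasDerivAt f d 0)
    (h : ∀ t ∈ Set.Ioo (0:ℝ) 1, 0 ≤ t * c + (f t - f 0)) : 0 ≤ c + d := by
  have hs : Tendsto (slope f 0) (𝓝[≠] (0:ℝ)) (𝓝 d) :=
    hasDerivAt_iff_tendsto_slope.mp hf
  have h2 : Tendsto (slope f 0) (𝓝[>] (0:ℝ)) (𝓝 d) :=
    hs.mono_left (nhdsWithin_mono _ (fun t ht => ne_of_gt ht))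
  have h3 : Tendsto (fun t => c + slope f 0 t) (𝓝[>] (0:ℝ)) (𝓝 (c + d)) :=
    tendsto_const_nhds.add h2
  refine ge_of_tendsto h3 ?_
  filter_upwards [Ioo_mem_nhdsGT_of_mem (by norm_num : (0:ℝ) ∈ Set.Ico 0 1)] with t ht
  have h0 := h t ht
  have ht0 : (0:ℝ) < t := ht.1
  have hsl : slope f 0 t = (f t - f 0) / t := by simp [slope_def_field]
  rw [hsl]
  have := div_nonneg h0 ht0.le
  rw [add_div] at this
  rw [mul_div_cancel_left₀ _ (ne_of_gt ht0)] at this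
  linarith


theorem descent_rule
    {X Y : Type*} [NormedAddCommGroup X] [NormedSpace ℝ X] [CompleteSpace X]
    [NormedAddCommGroup Y] [NormedSpace ℝ Y] [CompleteSpace Y]
    (A : X →L[ℝ] Y)
    (φX : X → ℝ) (SX : Set X) (gX : X → (X →L[ℝ] ℝ))
    (φY : (Y →L[ℝ] ℝ) → ℝ) (SY : Set (Y →L[ℝ] ℝ)) (gY : (Y →L[ℝ] ℝ) → Y)
    (hSXne : SX.Nonempty) (hφXconv : ConvexOn ℝ SX φX)
    (hφXlsc : LowerSemicontinuousOn φX SX)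
    (hSYne : SY.Nonempty) (hφYconv : ConvexOn ℝ SY φY)
    (hφYlsc : LowerSemicontinuousOn φY SY)
    (hφXdiff : ∀ x ∈ interior SX, ∀ w : X,
      HasDerivAt (fun t : ℝ => φX (x + t • w)) (gX x w) 0)
    (hφYdiff : ∀ p ∈ interior SY, ∀ q : Y →L[ℝ] ℝ,
      HasDerivAt (fun t : ℝ => φY (p + t • q)) (q (gY p)) 0)
    (DX : X → X → ℝ) (hDXdef : ∀ x x', DX x x' = φX x - φX x' - gX x' (x - x'))
    (DY : (Y →L[ℝ] ℝ) → (Y →L[ℝ] ℝ) → ℝ)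
    (hDYdef : ∀ p q, DY p q = φY p - φY q - (p - q) (gY q))
    (g : X → ℝ) (Sg : Set X) (hSgne : Sg.Nonempty)
    (hgconv : ConvexOn ℝ Sg g) (hglsc : LowerSemicontinuousOn g Sg)
    (hst : (Y →L[ℝ] ℝ) → ℝ) (Sh : Set (Y →L[ℝ] ℝ)) (hShne : Sh.Nonempty)
    (hhconv : ConvexOn ℝ Sh hst) (hhlsc : LowerSemicontinuousOn hst Sh)
    (L : X → (Y →L[ℝ] ℝ) → ℝ) (hLdef : ∀ x p, L x p = g x + p (A x) - hst p)
    (τ σ : ℝ) (hτ : 0 < τ) (hσ : 0 < σ)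
    (xbar : X) (hxbar : xbar ∈ Sg ∩ interior SX)
    (ybar : Y →L[ℝ] ℝ) (hybar : ybar ∈ Sh ∩ interior SY)
    (xt : X) (yt : Y →L[ℝ] ℝ)
    (xh : X) (hxh : xh ∈ Sg ∩ interior SX)
    (hxhmin : ∀ x ∈ Sg ∩ SX,
      g xh + yt (A xh) + (1/τ) * DX xh xbar ≤ g x + yt (A x) + (1/τ) * DX x xbar)
    (yh : Y →L[ℝ] ℝ) (hyh : yh ∈ Sh ∩ interior SY)
    (hyhmax : ∀ p ∈ Sh ∩ SY,
      -hst p + p (A xt) - (1/σ) * DY p ybar ≤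
        -hst yh + yh (A xt) - (1/σ) * DY yh ybar) :
    ∀ x ∈ Sg ∩ SX, ∀ p ∈ Sh ∩ SY,
      L xh p - L x yh ≤
        (1/τ) * (DX x xbar - DX xh xbar - DX x xh)
        + (1/σ) * (DY p ybar - DY yh ybar - DY p yh)
        + (yt - yh) (A (x - xt)) - (p - yt) (A (xt - xh)) := by
  intro x hx p hp
  -- X-side first-order optimality via limiting slope
  have hXineq : 0 ≤ (g x - g xh) + (yt (A x) - yt (A xh))
      + (1/τ) * ((gX xh x - gX xh xh) - (gX xbar x - gX xbar xh)) := by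
    have hd : HasDerivAt (fun t : ℝ => (1/τ) * φX (xh + t • (x - xh)))
        ((1/τ) * (gX xh (x - xh))) 0 :=
      (hφXdiff xh hxh.2 (x - xh)).const_mul (1/τ)
    have key := slope_limit (c := (g x - g xh) + (yt (A x) - yt (A xh))
        - (1/τ) * (gX xbar x - gX xbar xh)) hd ?_
    · have hgx : gX xh (x - xh) = gX xh x - gX xh xh := map_sub _ _ _
      rw [hgx] at key
      linarith [key]
    · intro t ht
      have hxteq : xh + t • (x - xh) = (1 - t) • xh + t • x := by module
      have hxt : xh + t • (x - xh) ∈ Sg ∩ SX := by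
        rw [hxteq]
        constructor
        · exact hgconv.1 hxh.1 hx.1 (by linarith [ht.2]) ht.1.le (by ring)
        · exact hφXconv.1 (interior_subset hxh.2) hx.2 (by linarith [ht.2]) ht.1.le (by ring)
      have hmin := hxhmin _ hxt
      have hgc : g (xh + t • (x - xh)) ≤ (1 - t) * g xh + t * g x := by
        rw [hxteq]
        exact hgconv.2 hxh.1 hx.1 (by linarith [ht.2]) ht.1.le (by ring)
      rw [hDXdef, hDXdef] at hmin
      simp only [map_add, map_sub, map_smul, smul_eq_mul, zero_smul, add_zero] at hmin ⊢
      ring_nf at hmin hgc ⊢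
      linarith [hmin, hgc]
  -- Y-side first-order optimality via limiting slope
  have hYineq : 0 ≤ (hst p - hst yh) - (p (A xt) - yh (A xt))
      + (1/σ) * ((p (gY yh) - yh (gY yh)) - (p (gY ybar) - yh (gY ybar))) := by
    have hd : HasDerivAt (fun t : ℝ => (1/σ) * φY (yh + t • (p - yh)))
        ((1/σ) * ((p - yh) (gY yh))) 0 :=
      (hφYdiff yh hyh.2 (p - yh)).const_mul (1/σ)
    have key := slope_limit (c := (hst p - hst yh) - (p (A xt) - yh (A xt))
        - (1/σ) * (p (gY ybar) - yh (gY ybar))) hd ?_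
    · have hq : (p - yh) (gY yh) = p (gY yh) - yh (gY yh) :=
        ContinuousLinearMap.sub_apply _ _ _
      rw [hq] at key
      linarith [key]
    · intro t ht
      have hpteq : yh + t • (p - yh) = (1 - t) • yh + t • p := by module
      have hpt : yh + t • (p - yh) ∈ Sh ∩ SY := by
        rw [hpteq]
        constructor
        · exact hhconv.1 hyh.1 hp.1 (by linarith [ht.2]) ht.1.le (by ring)
        · exact hφYconv.1 (interior_subset hyh.2) hp.2 (by linarith [ht.2]) ht.1.le (by ring)
      have hmax := hyhmax _ hpt
      have hhc : hst (yh + t • (p - yh)) ≤ (1 - t) * hst yh + t * hst p := by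
        rw [hpteq]
        exact hhconv.2 hyh.1 hp.1 (by linarith [ht.2]) ht.1.le (by ring)
      rw [hDYdef, hDYdef] at hmax
      simp only [ContinuousLinearMap.add_apply, ContinuousLinearMap.sub_apply,
        ContinuousLinearMap.smul_apply, smul_eq_mul, zero_smul, add_zero] at hmax ⊢
      ring_nf at hmax hhc ⊢
      linarith [hmax, hhc]
  -- combine
  rw [hLdef, hLdef, hDXdef, hDXdef, hDXdef, hDYdef, hDYdef, hDYdef]
  simp only [map_sub, ContinuousLinearMap.sub_apply]
  ring_nf at hXineq hYineq ⊢
  linarith [hXineq, hYineq]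
end

section
/- Let τ, σ > 0, let x̄ ∈ dom g ∩ int(dom φ_X) and ȳ⋆ ∈ dom h⋆ ∩ int(dom φ_{Y⋆}), and let (x̃, ỹ⋆) ∈ X × Y⋆. Suppose γ_g > 0 is such that g − γ_g·φ_X is convex on dom g ∩ dom φ_X, and γ_{h⋆} > 0 is such that h⋆ − γ_{h⋆}·φ_{Y⋆} is convex on dom h⋆ ∩ dom φ_{Y⋆}. Suppose x̂ ∈ dom g ∩ int(dom φ_X) minimizes x ↦ g(x) + ⟨ỹ⋆, Ax⟩ + (1/τ)·D_X(x, x̄) over X, and ŷ⋆ ∈ dom h⋆ ∩ int(dom φ_{Y⋆}) maximizes y⋆ ↦ −h⋆(y⋆) + ⟨y⋆, Ax̃⟩ − (1/σ)·D_Y(y⋆, ȳ⋆) over Y⋆. Then for every x ∈ dom g ∩ dom φ_X and every y⋆ ∈ dom h⋆ ∩ dom φ_{Y⋆}: L(x̂, y⋆) − L(x, ŷ⋆) ≤ (1/τ)(D_X(x, x̄) − D_X(x̂, x̄)) − ((1 + γ_g τ)/τ)·D_X(x, x̂) + (1/σ)(D_Y(y⋆, ȳ⋆) − D_Y(ŷ⋆,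 ȳ⋆)) − ((1 + γ_{h⋆} σ)/σ)·D_Y(y⋆, ŷ⋆) + ⟨ỹ⋆ − ŷ⋆, A(x − x̃)⟩ − ⟨y⋆ − ỹ⋆, A(x̃ − x̂)⟩. -/
open Filter Topology

/-!
Along the segment `z_t = x̂ + t (x - x̂)` the minimality of `x̂` and the convexity of `F - c φ`
give `c (φ x - φ x̂ - (φ z_t - φ x̂) / t) ≤ F x - F x̂`; letting `t → 0⁺` turns the difference
quotient into the directional derivative of `φ` at `x̂`, i.e. the left side into `c D(x, x̂)`.
Both proximal subproblems have this form: their objective minus `(γ + 1/τ) φ` is the strongly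
convex part minus `γ φ` plus an affine function. Adding the two resulting inequalities and
expanding the Lagrangian gives the descent rule.
-/

section ThreePoint

variable {E : Type*} [AddCommGroup E] [Module ℝ E] {s : Set E} {F φ : E → ℝ} {c : ℝ}
  {xh x : E}

lemma ConvexOn.mul_sub_sub_slope_le_of_isMinOn (hconv : ConvexOn ℝ s (fun z => F z - c * φ z))
    (hxh : xh ∈ s) (hx : x ∈ s) (hmin : IsMinOn F s xh) {t : ℝ} (ht0 : 0 < t) (ht1 : t ≤ 1) :
    c * (φ x - φ xh - (φ (xh + t • (x - xh)) - φ xh) / t) ≤ F x - F xh := by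
  have hseg : xh + t • (x - xh) = (1 - t) • xh + t • x := by
    rw [smul_sub, sub_smul, one_smul]; abel
  have hz : xh + t • (x - xh) ∈ s := hseg ▸ hconv.1 hxh hx (by linarith) ht0.le (by ring)
  have hψ := hconv.2 hxh hx (by linarith : (0:ℝ) ≤ 1 - t) ht0.le (by ring)
  rw [← hseg, smul_eq_mul, smul_eq_mul] at hψ
  have hFz : F xh ≤ F (xh + t • (x - xh)) := isMinOn_iff.mp hmin _ hz
  rw [mul_sub, mul_div_assoc', sub_le_iff_le_add, ← sub_le_iff_le_add', le_div_iff₀ ht0]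
  linarith

lemma ConvexOn.mul_sub_sub_deriv_le_of_isMinOn (hconv : ConvexOn ℝ s (fun z => F z - c * φ z))
    (hxh : xh ∈ s) (hx : x ∈ s) (hmin : IsMinOn F s xh)
    {φ' : ℝ} (hderiv : HasDerivAt (fun t : ℝ => φ (xh + t • (x - xh))) φ' 0) :
    c * (φ x - φ xh - φ') ≤ F x - F xh := by
  have hslope : Tendsto (fun t => (φ (xh + t • (x - xh)) - φ xh) / t) (𝓝[>] 0) (𝓝 φ') := by
    refine ((hasDerivAt_iff_tendsto_slope.mp hderiv).mono_left
      (nhdsWithin_mono _ fun t (ht : (0:ℝ) < t) => ht.ne')).congr fun t => ?_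
    simp [slope_def_field]
  refine le_of_tendsto ((tendsto_const_nhds.sub hslope).const_mul c) ?_
  filter_upwards [Ioc_mem_nhdsGT (zero_lt_one' ℝ)] with t ht
  exact hconv.mul_sub_sub_slope_le_of_isMinOn hxh hx hmin ht.1 ht.2

end ThreePoint

lemma ConvexOn.sub_mul_of_eq_add_affine {E : Type*} [AddCommGroup E] [Module ℝ E] {s : Set E}
    {F ψ φ : E → ℝ} {γ μ : ℝ} (hψ : ConvexOn ℝ s (fun z => ψ z - γ * φ z))
    (ℓ : E →ₗ[ℝ] ℝ) (a : ℝ) (hF : ∀ z, F z = ψ z + μ * φ z + ℓ z + a) :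
    ConvexOn ℝ s (fun z => F z - (γ + μ) * φ z) := by
  refine (hψ.add ((ℓ.convexOn hψ.1).add_const a)).congr fun z _ => ?_
  simp only [hF, Pi.add_apply]
  ring

theorem descent_rule_strong_general
    {X Y : Type*} [NormedAddCommGroup X] [NormedSpace ℝ X]
    [NormedAddCommGroup Y] [NormedSpace ℝ Y]
    (A : X →L[ℝ] Y)
    (φX : X → ℝ) (SX : Set X) (gX : X → (X →L[ℝ] ℝ))
    (φY : (Y →L[ℝ] ℝ) → ℝ) (SY : Set (Y →L[ℝ] ℝ)) (gY : (Y →L[ℝ] ℝ) → Y)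
    (hφXdiff : ∀ x ∈ interior SX, ∀ w : X,
      HasDerivAt (fun t : ℝ => φX (x + t • w)) (gX x w) 0)
    (hφYdiff : ∀ p ∈ interior SY, ∀ q : Y →L[ℝ] ℝ,
      HasDerivAt (fun t : ℝ => φY (p + t • q)) (q (gY p)) 0)
    (DX : X → X → ℝ) (hDXdef : ∀ x x', DX x x' = φX x - φX x' - gX x' (x - x'))
    (DY : (Y →L[ℝ] ℝ) → (Y →L[ℝ] ℝ) → ℝ)
    (hDYdef : ∀ p q, DY p q = φY p - φY q - (p - q) (gY q))
    (g : X → ℝ) (Sg : Set X)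
    (hst : (Y →L[ℝ] ℝ) → ℝ) (Sh : Set (Y →L[ℝ] ℝ))
    (L : X → (Y →L[ℝ] ℝ) → ℝ) (hLdef : ∀ x p, L x p = g x + p (A x) - hst p)
    (γg γh : ℝ)
    (hA6 : ConvexOn ℝ (Sg ∩ SX) (fun x => g x - γg * φX x))
    (hA7 : ConvexOn ℝ (Sh ∩ SY) (fun p => hst p - γh * φY p))
    (τ σ : ℝ) (hτ : 0 < τ) (hσ : 0 < σ)
    (xbar : X)
    (ybar : Y →L[ℝ] ℝ)
    (xt : X) (yt : Y →L[ℝ] ℝ)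
    (xh : X) (hxh : xh ∈ Sg ∩ interior SX)
    (hxhmin : ∀ x ∈ Sg ∩ SX,
      g xh + yt (A xh) + (1/τ) * DX xh xbar ≤ g x + yt (A x) + (1/τ) * DX x xbar)
    (yh : Y →L[ℝ] ℝ) (hyh : yh ∈ Sh ∩ interior SY)
    (hyhmax : ∀ p ∈ Sh ∩ SY,
      -hst p + p (A xt) - (1/σ) * DY p ybar ≤
        -hst yh + yh (A xt) - (1/σ) * DY yh ybar):
    ∀ x ∈ Sg ∩ SX, ∀ p ∈ Sh ∩ SY,
      L xh p - L x yh ≤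
        (1/τ) * (DX x xbar - DX xh xbar) - ((1 + γg * τ)/τ) * DX x xh
        + (1/σ) * (DY p ybar - DY yh ybar) - ((1 + γh * σ)/σ) * DY p yh
        + (yt - yh) (A (x - xt)) - (p - yt) (A (xt - xh)) := by
  intro x hx p hp
  have hconvX := hA6.sub_mul_of_eq_add_affine (F := fun z => g z + yt (A z) + (1/τ) * DX z xbar)
    (μ := 1/τ) ((yt.comp A - (1/τ) • gX xbar : X →L[ℝ] ℝ) : X →ₗ[ℝ] ℝ)
    ((1/τ) * (gX xbar xbar - φX xbar)) fun z => by
      simp only [hDXdef, ContinuousLinearMap.coe_coe, sub_apply, ContinuousLinearMap.comp_apply,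
        smul_apply, smul_eq_mul, map_sub]
      ring
  have hconvY := hA7.sub_mul_of_eq_add_affine
    (F := fun q => -(-hst q + q (A xt) - (1/σ) * DY q ybar)) (μ := 1/σ)
    ((-ContinuousLinearMap.apply ℝ ℝ (A xt) - (1/σ) • ContinuousLinearMap.apply ℝ ℝ (gY ybar) :
      (Y →L[ℝ] ℝ) →L[ℝ] ℝ) : (Y →L[ℝ] ℝ) →ₗ[ℝ] ℝ)
    ((1/σ) * (ybar (gY ybar) - φY ybar)) fun q => by
      simp only [hDYdef, ContinuousLinearMap.coe_coe, sub_apply, neg_apply,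
        ContinuousLinearMap.apply_apply, smul_apply, smul_eq_mul]
      ring
  have hX := hconvX.mul_sub_sub_deriv_le_of_isMinOn ⟨hxh.1, interior_subset hxh.2⟩ hx
    (isMinOn_iff.mpr hxhmin) (hφXdiff xh hxh.2 (x - xh))
  have hY := hconvY.mul_sub_sub_deriv_le_of_isMinOn ⟨hyh.1, interior_subset hyh.2⟩ hp
    (isMaxOn_iff.mpr hyhmax).neg (hφYdiff yh hyh.2 (p - yh))
  rw [← hDXdef] at hX
  rw [show φY p - φY yh - (p - yh) (gY yh) = DY p yh from (hDYdef p yh).symm] at hY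
  have hcX : (1 + γg * τ) / τ = γg + 1 / τ := by field_simp; ring
  have hcY : (1 + γh * σ) / σ = γh + 1 / σ := by field_simp; ring
  rw [hLdef, hLdef, hcX, hcY]
  simp only [map_sub, sub_apply]
  linear_combination hX + hY

theorem descent_rule_strong
    {X Y : Type*} [NormedAddCommGroup X] [NormedSpace ℝ X] [CompleteSpace X]
    [NormedAddCommGroup Y] [NormedSpace ℝ Y] [CompleteSpace Y]
    (A : X →L[ℝ] Y)
    (φX : X → ℝ) (SX : Set X) (gX : X → (X →L[ℝ] ℝ))
    (φY : (Y →L[ℝ] ℝ) → ℝ) (SY : Set (Y →L[ℝ] ℝ)) (gY : (Y →L[ℝ] ℝ) → Y)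
    (hSXne : SX.Nonempty) (hφXconv : ConvexOn ℝ SX φX)
    (hφXlsc : LowerSemicontinuousOn φX SX)
    (hSYne : SY.Nonempty) (hφYconv : ConvexOn ℝ SY φY)
    (hφYlsc : LowerSemicontinuousOn φY SY)
    (hφXdiff : ∀ x ∈ interior SX, ∀ w : X,
      HasDerivAt (fun t : ℝ => φX (x + t • w)) (gX x w) 0)
    (hφYdiff : ∀ p ∈ interior SY, ∀ q : Y →L[ℝ] ℝ,
      HasDerivAt (fun t : ℝ => φY (p + t • q)) (q (gY p)) 0)
    (DX : X → X → ℝ) (hDXdef : ∀ x x', DX x x' = φX x - φX x' - gX x' (x - x'))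
    (DY : (Y →L[ℝ] ℝ) → (Y →L[ℝ] ℝ) → ℝ)
    (hDYdef : ∀ p q, DY p q = φY p - φY q - (p - q) (gY q))
    (g : X → ℝ) (Sg : Set X) (hSgne : Sg.Nonempty)
    (hgconv : ConvexOn ℝ Sg g) (hglsc : LowerSemicontinuousOn g Sg)
    (hst : (Y →L[ℝ] ℝ) → ℝ) (Sh : Set (Y →L[ℝ] ℝ)) (hShne : Sh.Nonempty)
    (hhconv : ConvexOn ℝ Sh hst) (hhlsc : LowerSemicontinuousOn hst Sh)
    (L : X → (Y →L[ℝ] ℝ) → ℝ) (hLdef : ∀ x p, L x p = g x + p (A x) - hst p)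
    (γg γh : ℝ) (hγg : 0 < γg) (hγh : 0 < γh)
    (hA6 : ConvexOn ℝ (Sg ∩ SX) (fun x => g x - γg * φX x))
    (hA7 : ConvexOn ℝ (Sh ∩ SY) (fun p => hst p - γh * φY p))
    (τ σ : ℝ) (hτ : 0 < τ) (hσ : 0 < σ)
    (xbar : X) (hxbar : xbar ∈ Sg ∩ interior SX)
    (ybar : Y →L[ℝ] ℝ) (hybar : ybar ∈ Sh ∩ interior SY)
    (xt : X) (yt : Y →L[ℝ] ℝ)
    (xh : X) (hxh : xh ∈ Sg ∩ interior SX)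
    (hxhmin : ∀ x ∈ Sg ∩ SX,
      g xh + yt (A xh) + (1/τ) * DX xh xbar ≤ g x + yt (A x) + (1/τ) * DX x xbar)
    (yh : Y →L[ℝ] ℝ) (hyh : yh ∈ Sh ∩ interior SY)
    (hyhmax : ∀ p ∈ Sh ∩ SY,
      -hst p + p (A xt) - (1/σ) * DY p ybar ≤
        -hst yh + yh (A xt) - (1/σ) * DY yh ybar) :
    ∀ x ∈ Sg ∩ SX, ∀ p ∈ Sh ∩ SY,
      L xh p - L x yh ≤
        (1/τ) * (DX x xbar - DX xh xbar) - ((1 + γg * τ)/τ) * DX x xh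
        + (1/σ) * (DY p ybar - DY yh ybar) - ((1 + γh * σ)/σ) * DY p yh
        + (yt - yh) (A (x - xt)) - (p - yt) (A (xt - xh)) :=
  descent_rule_strong_general A φX SX gX φY SY gY hφXdiff hφYdiff DX hDXdef DY hDYdef g Sg hst Sh L
    hLdef γg γh hA6 hA7 τ σ hτ hσ xbar ybar xt yt xh hxh hxhmin yh hyh hyhmax
end

section
/- Let τ, σ > 0 satisfy τσ‖A‖² < 1. For any x ∈ dom φ_X, x' ∈ int(dom φ_X), y⋆ ∈ dom φ_{Y⋆}, y⋆' ∈ int(dom φ_{Y⋆}), define Δ = (1/τ)·D_X(x, x') + (1/σ)·D_Y(y⋆, y⋆') − ⟨y⋆ − y⋆', A(x − x')⟩. Then 0 ≤ (1 − √(τσ)·‖A‖)·((1/τ)·D_X(x, x') + (1/σ)·D_Y(y⋆, y⋆')) ≤ Δ ≤ (1 + √(τσ)·‖A‖)·((1/τ)·D_X(x, x') + (1/σ)·D_Y(y⋆, y⋆')). -/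
open Filter Topology

theorem delta_bounds_basic
    {X Y : Type*} [NormedAddCommGroup X] [NormedSpace ℝ X] [CompleteSpace X]
    [NormedAddCommGroup Y] [NormedSpace ℝ Y] [CompleteSpace Y]
    (A : X →L[ℝ] Y)
    (φX : X → ℝ) (SX : Set X) (gX : X → (X →L[ℝ] ℝ))
    (φY : (Y →L[ℝ] ℝ) → ℝ) (SY : Set (Y →L[ℝ] ℝ)) (gY : (Y →L[ℝ] ℝ) → Y)
    (hSXne : SX.Nonempty) (hφXconv : ConvexOn ℝ SX φX)
    (hφXlsc : LowerSemicontinuousOn φX SX)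
    (hSYne : SY.Nonempty) (hφYconv : ConvexOn ℝ SY φY)
    (hφYlsc : LowerSemicontinuousOn φY SY)
    (hφXdiff : ∀ x ∈ interior SX, ∀ w : X,
      HasDerivAt (fun t : ℝ => φX (x + t • w)) (gX x w) 0)
    (hφYdiff : ∀ p ∈ interior SY, ∀ q : Y →L[ℝ] ℝ,
      HasDerivAt (fun t : ℝ => φY (p + t • q)) (q (gY p)) 0)
    (DX : X → X → ℝ) (hDXdef : ∀ x x', DX x x' = φX x - φX x' - gX x' (x - x'))
    (DY : (Y →L[ℝ] ℝ) → (Y →L[ℝ] ℝ) → ℝ)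
    (hDYdef : ∀ p q, DY p q = φY p - φY q - (p - q) (gY q))
    (hscX : ∀ x ∈ SX, ∀ x' ∈ interior SX, (1/2) * ‖x - x'‖ ^ 2 ≤ DX x x')
    (hscY : ∀ p ∈ SY, ∀ q ∈ interior SY, (1/2) * ‖p - q‖ ^ 2 ≤ DY p q)
    (τ σ : ℝ) (hτ : 0 < τ) (hσ : 0 < σ) (hpar : τ * σ * ‖A‖ ^ 2 < 1) :
    ∀ x ∈ SX, ∀ x' ∈ interior SX, ∀ p ∈ SY, ∀ q ∈ interior SY,
      0 ≤ (1 - Real.sqrt (τ * σ) * ‖A‖) * ((1/τ) * DX x x' + (1/σ) * DY p q) ∧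
      (1 - Real.sqrt (τ * σ) * ‖A‖) * ((1/τ) * DX x x' + (1/σ) * DY p q) ≤
        (1/τ) * DX x x' + (1/σ) * DY p q - (p - q) (A (x - x')) ∧
      (1/τ) * DX x x' + (1/σ) * DY p q - (p - q) (A (x - x')) ≤
        (1 + Real.sqrt (τ * σ) * ‖A‖) * ((1/τ) * DX x x' + (1/σ) * DY p q) := by

  intro x hx x' hx' p hp q hq
  have hDX := hscX x hx x' hx'
  have hDY := hscY p hp q hq
  set a := ‖x - x'‖ with ha'
  set b := ‖p - q‖ with hb'
  have ha : 0 ≤ a := norm_nonneg _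
  have hb : 0 ≤ b := norm_nonneg _
  set s := Real.sqrt τ with hs'
  set t := Real.sqrt σ with ht'
  have hs : 0 ≤ s := Real.sqrt_nonneg _
  have ht : 0 ≤ t := Real.sqrt_nonneg _
  have hs2 : s ^ 2 = τ := Real.sq_sqrt hτ.le
  have ht2 : t ^ 2 = σ := Real.sq_sqrt hσ.le
  have hst : Real.sqrt (τ * σ) = s * t := Real.sqrt_mul hτ.le σ
  set S := (1/τ) * DX x x' + (1/σ) * DY p q with hS'
  set c := Real.sqrt (τ * σ) * ‖A‖ with hc'
  have hc0 : 0 ≤ c := mul_nonneg (Real.sqrt_nonneg _) (norm_nonneg _)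
  have hDX0 : 0 ≤ DX x x' := le_trans (by positivity) hDX
  have hDY0 : 0 ≤ DY p q := le_trans (by positivity) hDY
  have hS0 : 0 ≤ S := by
    have := div_nonneg hDX0 hτ.le
    have := div_nonneg hDY0 hσ.le
    rw [hS']; positivity
  have hcsq : c ^ 2 = τ * σ * ‖A‖ ^ 2 := by
    rw [hc', mul_pow, Real.sq_sqrt (mul_nonneg hτ.le hσ.le)]
  have hc1 : c ≤ 1 := by nlinarith [hcsq, hc0, hpar]
  -- key AM-GM inequality
  have h1 : s * t * (a * b) ≤ σ * DX x x' + τ * DY p q := by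
    nlinarith [sq_nonneg (t * a - s * b), mul_le_mul_of_nonneg_left hDX hσ.le,
      mul_le_mul_of_nonneg_left hDY hτ.le]
  have key : ‖A‖ * (a * b) ≤ c * S := by
    have hτσ : 0 < τ * σ := mul_pos hτ hσ
    rw [← mul_le_mul_iff_of_pos_right hτσ]
    have hSτσ : S * (τ * σ) = σ * DX x x' + τ * DY p q := by
      rw [hS']; field_simp
    have hcs : c * S * (τ * σ) = s * t * ‖A‖ * (σ * DX x x' + τ * DY p q) := by
      rw [hc', hst, mul_assoc, mul_assoc, hSτσ]; ring
    rw [hcs]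
    have h2 := mul_le_mul_of_nonneg_left h1
      (mul_nonneg (mul_nonneg hs ht) (norm_nonneg A))
    have heq : ‖A‖ * (a * b) * (τ * σ) = s * t * ‖A‖ * (s * t * (a * b)) := by
      rw [← hs2, ← ht2]; ring
    rw [heq]; exact h2
  have hP : |(p - q) (A (x - x'))| ≤ ‖A‖ * (a * b) := by
    have h3 : ‖(p - q) (A (x - x'))‖ ≤ ‖p - q‖ * ‖A (x - x')‖ :=
      (p - q).le_opNorm _
    have h4 : ‖A (x - x')‖ ≤ ‖A‖ * ‖x - x'‖ := A.le_opNorm _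
    rw [Real.norm_eq_abs] at h3
    calc |(p - q) (A (x - x'))| ≤ b * ‖A (x - x')‖ := h3
      _ ≤ b * (‖A‖ * a) := mul_le_mul_of_nonneg_left h4 hb
      _ = ‖A‖ * (a * b) := by ring
  have habs : |(p - q) (A (x - x'))| ≤ c * S := le_trans hP key
  obtain ⟨hl, hr⟩ := abs_le.mp habs
  have e1 : (1 - c) * S = S - c * S := by ring
  have e2 : (1 + c) * S = S + c * S := by ring
  exact ⟨mul_nonneg (by linarith) hS0, by rw [e1]; linarith, by rw [e2]; linarith⟩
end

section
/- Assume τσ‖A‖² < 1. Then for every x ∈ dom g ∩ dom φ_X, every y⋆ ∈ dom h⋆ ∩ dom φ_{Y⋆}, and every integer k ≥ 0, the iterates of the basic nonlinear PDHG method satisfy L(x_{k+1}, y⋆) − L(x, y_{k+1}⋆) ≤ Δ_k(x, y⋆) − Δ_{k+1}(x, y⋆). -/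
open Filter Topology

lemma pdhg_aux {E : Type*} [NormedAddCommGroup E] [NormedSpace ℝ E]
    (f φ : E → ℝ) (T S : Set E) (hf : ConvexOn ℝ T f) (hS : Convex ℝ S)
    (u₀ u₁ x : E) (hu₁ : u₁ ∈ T ∩ S) (hx : x ∈ T ∩ S)
    (ℓ L₀ L₁ : E →L[ℝ] ℝ) (c : ℝ) (hc : 0 < c)
    (hderiv : HasDerivAt (fun t : ℝ => φ (u₁ + t • (x - u₁))) (L₁ (x - u₁)) 0)
    (hmin : ∀ z ∈ T ∩ S,
      f u₁ + ℓ u₁ + c * (φ u₁ - φ u₀ - L₀ (u₁ - u₀)) ≤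
      f z + ℓ z + c * (φ z - φ u₀ - L₀ (z - u₀))) :
    f u₁ - f x ≤ ℓ (x - u₁) + c * (L₁ (x - u₁) - L₀ (x - u₁)) := by
  set w := x - u₁ with hw
  set ψ : ℝ → ℝ := fun t => φ (u₁ + t • w) with hψ
  have hψ0 : ψ 0 = φ u₁ := by simp [hψ]
  have key : ∀ t : ℝ, t ∈ Set.Ioc (0:ℝ) 1 →
      f u₁ - f x ≤ ℓ w + c * ((ψ t - ψ 0) / t - L₀ w) := by
    intro t ht
    obtain ⟨ht0, ht1⟩ := ht
    have hcomb : u₁ + t • w = (1 - t) • u₁ + t • x := by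
      rw [hw]; module
    have hzT : u₁ + t • w ∈ T := by
      rw [hcomb]; exact hf.1 hu₁.1 hx.1 (by linarith) ht0.le (by ring)
    have hzS : u₁ + t • w ∈ S := by
      rw [hcomb]; exact hS hu₁.2 hx.2 (by linarith) ht0.le (by ring)
    have hmz := hmin _ ⟨hzT, hzS⟩
    have hfz : f (u₁ + t • w) ≤ (1 - t) * f u₁ + t * f x := by
      rw [hcomb]
      simpa [smul_eq_mul] using
        hf.2 hu₁.1 hx.1 (by linarith : (0:ℝ) ≤ 1 - t) ht0.le (by ring)
    have hℓz : ℓ (u₁ + t • w) = ℓ u₁ + t * ℓ w := by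
      rw [map_add, map_smul, smul_eq_mul]
    have hLz : L₀ (u₁ + t • w - u₀) = L₀ (u₁ - u₀) + t * L₀ w := by
      have e : u₁ + t • w - u₀ = (u₁ - u₀) + t • w := by abel
      rw [e, map_add, map_smul, smul_eq_mul]
    rw [hℓz, hLz] at hmz
    have hφψ : φ (u₁ + t • w) = ψ t := rfl
    rw [hφψ, ← hψ0] at hmz
    have h2 : 0 ≤ t * (f x - f u₁) + t * ℓ w + c * (ψ t - ψ 0 - t * L₀ w) := by
      nlinarith [hmz, hfz]
    have hne : t ≠ 0 := ne_of_gt ht0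
    have he : t * ((f x - f u₁) + ℓ w + c * ((ψ t - ψ 0) / t - L₀ w)) =
        t * (f x - f u₁) + t * ℓ w + c * (ψ t - ψ 0 - t * L₀ w) := by
      field_simp
    have h5 : 0 ≤ t * ((f x - f u₁) + ℓ w + c * ((ψ t - ψ 0) / t - L₀ w)) := by
      rw [he]; exact h2
    have h4 : 0 ≤ (f x - f u₁) + ℓ w + c * ((ψ t - ψ 0) / t - L₀ w) :=
      le_of_mul_le_mul_left (by simpa using h5) ht0
    linarith
  have hd : HasDerivAt ψ (L₁ w) 0 := hderiv
  have h2 : Tendsto (slope ψ 0) (𝓝[>] (0:ℝ)) (𝓝 (L₁ w)) :=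
    (hasDerivAt_iff_tendsto_slope.mp hd).mono_left
      (nhdsWithin_mono 0 (fun t ht => ne_of_gt ht))
  have h4 : Tendsto (fun t : ℝ => (ψ t - ψ 0) / t) (𝓝[>] (0:ℝ)) (𝓝 (L₁ w)) := by
    refine h2.congr fun t => ?_
    simp [slope_def_field]
  have h3 : Tendsto (fun t : ℝ => ℓ w + c * ((ψ t - ψ 0) / t - L₀ w)) (𝓝[>] (0:ℝ))
      (𝓝 (ℓ w + c * (L₁ w - L₀ w))) :=
    tendsto_const_nhds.add ((h4.sub tendsto_const_nhds).const_mul c)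
  refine ge_of_tendsto h3 ?_
  filter_upwards [Ioc_mem_nhdsGT_of_mem (by constructor <;> norm_num : (0:ℝ) ∈ Set.Ico (0:ℝ) 1)]
    with t ht using key t ht


open Filter Topology

set_option maxHeartbeats 1000000 in
theorem basic_pdhg_descent
    {X Y : Type*} [NormedAddCommGroup X] [NormedSpace ℝ X] [CompleteSpace X]
    [NormedAddCommGroup Y] [NormedSpace ℝ Y] [CompleteSpace Y]
    (A : X →L[ℝ] Y)
    (φX : X → ℝ) (SX : Set X) (gX : X → (X →L[ℝ] ℝ))
    (φY : (Y →L[ℝ] ℝ) → ℝ) (SY : Set (Y →L[ℝ] ℝ)) (gY : (Y →L[ℝ] ℝ) → Y)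
    (hSXne : SX.Nonempty) (hφXconv : ConvexOn ℝ SX φX)
    (hφXlsc : LowerSemicontinuousOn φX SX)
    (hSYne : SY.Nonempty) (hφYconv : ConvexOn ℝ SY φY)
    (hφYlsc : LowerSemicontinuousOn φY SY)
    (hφXdiff : ∀ x ∈ interior SX, ∀ w : X,
      HasDerivAt (fun t : ℝ => φX (x + t • w)) (gX x w) 0)
    (hφYdiff : ∀ p ∈ interior SY, ∀ q : Y →L[ℝ] ℝ,
      HasDerivAt (fun t : ℝ => φY (p + t • q)) (q (gY p)) 0)
    (DX : X → X → ℝ) (hDXdef : ∀ x x', DX x x' = φX x - φX x' - gX x' (x - x'))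
    (DY : (Y →L[ℝ] ℝ) → (Y →L[ℝ] ℝ) → ℝ)
    (hDYdef : ∀ p q, DY p q = φY p - φY q - (p - q) (gY q))
    (hscX : ∀ x ∈ SX, ∀ x' ∈ interior SX, (1/2) * ‖x - x'‖ ^ 2 ≤ DX x x')
    (hscY : ∀ p ∈ SY, ∀ q ∈ interior SY, (1/2) * ‖p - q‖ ^ 2 ≤ DY p q)
    (g : X → ℝ) (Sg : Set X) (hSgne : Sg.Nonempty)
    (hgconv : ConvexOn ℝ Sg g) (hglsc : LowerSemicontinuousOn g Sg)
    (hst : (Y →L[ℝ] ℝ) → ℝ) (Sh : Set (Y →L[ℝ] ℝ)) (hShne : Sh.Nonempty)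
    (hhconv : ConvexOn ℝ Sh hst) (hhlsc : LowerSemicontinuousOn hst Sh)
    (L : X → (Y →L[ℝ] ℝ) → ℝ) (hLdef : ∀ x p, L x p = g x + p (A x) - hst p)
    (τ σ : ℝ) (hτ : 0 < τ) (hσ : 0 < σ) (hpar : τ * σ * ‖A‖ ^ 2 < 1)
    (u : ℕ → X) (v : ℕ → (Y →L[ℝ] ℝ))
    (hu : ∀ k, u k ∈ Sg ∩ interior SX)
    (hv : ∀ k, v k ∈ Sh ∩ interior SY)
    (hstepx : ∀ k : ℕ, ∀ x ∈ Sg ∩ SX,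
      g (u (k+1)) + (v k) (A (u (k+1))) + (1/τ) * DX (u (k+1)) (u k) ≤
        g x + (v k) (A x) + (1/τ) * DX x (u k))
    (hstepy : ∀ k : ℕ, ∀ p ∈ Sh ∩ SY,
      -hst p + p (A ((2:ℝ) • u (k+1) - u k)) - (1/σ) * DY p (v k) ≤
        -hst (v (k+1)) + (v (k+1)) (A ((2:ℝ) • u (k+1) - u k)) - (1/σ) * DY (v (k+1)) (v k))
    (Δ : ℕ → X → (Y →L[ℝ] ℝ) → ℝ)
    (hΔdef : ∀ (k : ℕ) (x : X) (p : Y →L[ℝ] ℝ),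
      Δ k x p = (1/τ) * DX x (u k) + (1/σ) * DY p (v k) - (p - v k) (A (x - u k)))
    :
    ∀ x ∈ Sg ∩ SX, ∀ p ∈ Sh ∩ SY, ∀ k : ℕ,
      L (u (k+1)) p - L x (v (k+1)) ≤ Δ k x p - Δ (k+1) x p := by
  intro x hx p hp k
  -- abbreviations
  have huk := hu k
  have huk1 := hu (k+1)
  have hvk := hv k
  have hvk1 := hv (k+1)
  have hu1TS : u (k+1) ∈ Sg ∩ SX := ⟨huk1.1, interior_subset huk1.2⟩
  have hv1TS : v (k+1) ∈ Sh ∩ SY := ⟨hvk1.1, interior_subset hvk1.2⟩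
  -- X-step strengthened inequality
  have IX : g (u (k+1)) - g x ≤ ((v k).comp A) (x - u (k+1)) +
      (1/τ) * ((gX (u (k+1))) (x - u (k+1)) - (gX (u k)) (x - u (k+1))) := by
    refine pdhg_aux g φX Sg SX hgconv hφXconv.1 (u k) (u (k+1)) x hu1TS hx
      ((v k).comp A) (gX (u k)) (gX (u (k+1))) (1/τ) (by positivity)
      (hφXdiff (u (k+1)) huk1.2 (x - u (k+1))) ?_
    intro z hz
    have h := hstepx k z hz
    rw [hDXdef, hDXdef] at h
    simpa using h
  -- Y-step strengthened inequality
  have IY : hst (v (k+1)) - hst p ≤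
      (-(ContinuousLinearMap.apply ℝ ℝ (A ((2:ℝ) • u (k+1) - u k)))) (p - v (k+1)) +
      (1/σ) * ((ContinuousLinearMap.apply ℝ ℝ (gY (v (k+1)))) (p - v (k+1)) -
        (ContinuousLinearMap.apply ℝ ℝ (gY (v k))) (p - v (k+1))) := by
    refine pdhg_aux hst φY Sh SY hhconv hφYconv.1 (v k) (v (k+1)) p hv1TS hp
      (-(ContinuousLinearMap.apply ℝ ℝ (A ((2:ℝ) • u (k+1) - u k))))
      (ContinuousLinearMap.apply ℝ ℝ (gY (v k)))
      (ContinuousLinearMap.apply ℝ ℝ (gY (v (k+1)))) (1/σ) (by positivity)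
      ?_ ?_
    · simpa using hφYdiff (v (k+1)) hvk1.2 (p - v (k+1))
    · intro q hq
      have h := hstepy k q hq
      rw [hDYdef, hDYdef] at h
      simp only [ContinuousLinearMap.neg_apply, ContinuousLinearMap.apply_apply]
      linarith
  -- three point identities
  have TPX : DX x (u k) - DX x (u (k+1)) - DX (u (k+1)) (u k) =
      (gX (u (k+1))) (x - u (k+1)) - (gX (u k)) (x - u (k+1)) := by
    rw [hDXdef, hDXdef, hDXdef]
    have e1 : (gX (u k)) (x - u (k+1)) =
        (gX (u k)) (x - u k) - (gX (u k)) (u (k+1) - u k) := by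
      rw [← map_sub]; congr 1; abel
    linarith [e1]
  have TPY : DY p (v k) - DY p (v (k+1)) - DY (v (k+1)) (v k) =
      (p - v (k+1)) (gY (v (k+1))) - (p - v (k+1)) (gY (v k)) := by
    rw [hDYdef, hDYdef, hDYdef]
    have e1 : (p - v (k+1)) (gY (v k)) =
        (p - v k) (gY (v k)) - (v (k+1) - v k) (gY (v k)) := by
      rw [← ContinuousLinearMap.sub_apply]; congr 1; abel
    linarith [e1]
  -- bilinear bound
  have hbil : (v (k+1) - v k) (A (u (k+1) - u k)) ≤
      (1/τ) * DX (u (k+1)) (u k) + (1/σ) * DY (v (k+1)) (v k) := by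
    set a := ‖u (k+1) - u k‖ with ha
    set b := ‖v (k+1) - v k‖ with hb
    set c := ‖A‖ with hc
    have ha0 : 0 ≤ a := norm_nonneg _
    have hb0 : 0 ≤ b := norm_nonneg _
    have hc0 : 0 ≤ c := norm_nonneg _
    have h1 : (v (k+1) - v k) (A (u (k+1) - u k)) ≤ b * (c * a) := by
      calc (v (k+1) - v k) (A (u (k+1) - u k))
          ≤ ‖(v (k+1) - v k) (A (u (k+1) - u k))‖ := le_abs_self _
        _ ≤ b * ‖A (u (k+1) - u k)‖ := (v (k+1) - v k).le_opNorm _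
        _ ≤ b * (c * a) := by
            have := A.le_opNorm (u (k+1) - u k)
            exact mul_le_mul_of_nonneg_left this hb0
    have hDXv : (1/2) * a ^ 2 ≤ DX (u (k+1)) (u k) :=
      hscX (u (k+1)) (interior_subset huk1.2) (u k) huk.2
    have hDYv : (1/2) * b ^ 2 ≤ DY (v (k+1)) (v k) :=
      hscY (v (k+1)) (interior_subset hvk1.2) (v k) hvk.2
    have hcert1 : 0 ≤ σ * (a - τ * c * b) ^ 2 := by positivity
    have hcert2 : 0 ≤ τ * b ^ 2 * (1 - τ * σ * c ^ 2) := by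
      have : 0 ≤ 1 - τ * σ * c ^ 2 := by linarith
      positivity
    have hkey : 2 * τ * σ * (c * a * b) ≤ σ * a ^ 2 + τ * b ^ 2 := by nlinarith
    have h2τσ : (0:ℝ) < 2 * τ * σ := by positivity
    have hq : c * a * b ≤ 1 / (2 * τ) * a ^ 2 + 1 / (2 * σ) * b ^ 2 := by
      rw [← mul_le_mul_iff_right₀ h2τσ]
      have e2 : 2 * τ * σ * (1 / (2 * τ) * a ^ 2 + 1 / (2 * σ) * b ^ 2) =
          σ * a ^ 2 + τ * b ^ 2 := by
        field_simp
      rw [e2]; exact hkey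
    have hmul1 : (1/τ) * ((1/2) * a ^ 2) ≤ (1/τ) * DX (u (k+1)) (u k) :=
      mul_le_mul_of_nonneg_left hDXv (by positivity)
    have hmul2 : (1/σ) * ((1/2) * b ^ 2) ≤ (1/σ) * DY (v (k+1)) (v k) :=
      mul_le_mul_of_nonneg_left hDYv (by positivity)
    have e3 : (1/τ) * ((1/2) * a ^ 2) = 1 / (2 * τ) * a ^ 2 := by ring
    have e4 : (1/σ) * ((1/2) * b ^ 2) = 1 / (2 * σ) * b ^ 2 := by ring
    rw [e3] at hmul1
    rw [e4] at hmul2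
    linarith [h1, hq, hmul1, hmul2]
  -- final assembly
  rw [hLdef, hLdef, hΔdef, hΔdef]
  simp only [ContinuousLinearMap.comp_apply, ContinuousLinearMap.neg_apply,
    ContinuousLinearMap.apply_apply, ContinuousLinearMap.sub_apply, ContinuousLinearMap.smul_apply, map_sub, map_smul,
    smul_eq_mul] at IX IY TPX TPY hbil ⊢
  rw [← TPX] at IX
  rw [← TPY] at IY
  linarith [IX, IY, hbil]
end

section
/- Assume τσ‖A‖² < 1. For K ≥ 1, define the averages X_K = (1/K)·Σ_{k=1}^{K} x_k and Y_K⋆ = (1/K)·Σ_{k=1}^{K} y_k⋆. Then for every x ∈ dom g ∩ dom φ_X and every y⋆ ∈ dom h⋆ ∩ dom φ_{Y⋆}: L(X_K, y⋆) − L(x, Y_K⋆) ≤ ((1 + √(τσ)·‖A‖)/K)·((1/τ)·D_X(x, x_0) + (1/σ)·D_Y(y⋆, y_0⋆)) − ((1 − √(τσ)·‖A‖)/K)·((1/τ)·D_X(x, x_K) + (1/σ)·D_Y(y⋆, y_K⋆)). -/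
open Filter Topology

lemma key_step {E : Type*} [NormedAddCommGroup E] [NormedSpace ℝ E]
    (f : E → ℝ) (Sf : Set E) (hf : ConvexOn ℝ Sf f)
    (S : Set E) (hS : Convex ℝ S)
    (φ : E → ℝ) (ℓ : E → ℝ) (m c d : ℝ) (hc : 0 < c)
    (u x : E) (huf : u ∈ Sf) (huS : u ∈ S) (hxf : x ∈ Sf) (hxS : x ∈ S)
    (hℓ : ∀ t : ℝ, ℓ (u + t • (x - u)) = ℓ u + t * m)
    (hd : HasDerivAt (fun t : ℝ => φ (u + t • (x - u))) d 0)
    (hmin : ∀ z ∈ Sf ∩ S, f u + ℓ u + c * φ u ≤ f z + ℓ z + c * φ z) :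
    0 ≤ f x - f u + m + c * d := by
  set ψ : ℝ → ℝ := fun t => φ (u + t • (x - u)) with hψ
  have hpt : ∀ t ∈ Set.Ioc (0:ℝ) 1,
      0 ≤ f x - f u + m + c * ((ψ t - ψ 0) / t) := by
    intro t ht
    obtain ⟨ht0, ht1⟩ := ht
    have hz : u + t • (x - u) = (1 - t) • u + t • x := by
      rw [smul_sub, sub_smul, one_smul]; abel
    have hmemf : u + t • (x - u) ∈ Sf := by
      rw [hz]; exact hf.1 huf hxf (by linarith) ht0.le (by ring)
    have hmemS : u + t • (x - u) ∈ S := by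
      rw [hz]; exact hS huS hxS (by linarith) ht0.le (by ring)
    have h1 := hmin _ ⟨hmemf, hmemS⟩
    have h2 : f (u + t • (x - u)) ≤ (1 - t) * f u + t * f x := by
      rw [hz]; exact hf.2 huf hxf (by linarith) ht0.le (by ring)
    have h3 := hℓ t
    have hψ0 : ψ 0 = φ u := by simp [hψ]
    have key : 0 ≤ t * (f x - f u) + t * m + c * (ψ t - ψ 0) := by
      have : ψ t = φ (u + t • (x - u)) := rfl
      nlinarith [h1, h2, h3]
    have heq : f x - f u + m + c * ((ψ t - ψ 0) / t)
        = (t * (f x - f u) + t * m + c * (ψ t - ψ 0)) / t := by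
      field_simp
    rw [heq]
    positivity
  have hslope : Tendsto (fun t : ℝ => (ψ t - ψ 0) / t) (𝓝[>] (0:ℝ)) (𝓝 d) := by
    have := hasDerivAt_iff_tendsto_slope.mp hd
    have h2 : Tendsto (slope ψ 0) (𝓝[>] (0:ℝ)) (𝓝 d) :=
      this.mono_left (nhdsWithin_mono _ (fun t ht => ne_of_gt ht))
    refine h2.congr (fun t => ?_)
    simp [slope, vsub_eq_sub, div_eq_inv_mul]
  have htend : Tendsto (fun t : ℝ => f x - f u + m + c * ((ψ t - ψ 0) / t))
      (𝓝[>] (0:ℝ)) (𝓝 (f x - f u + m + c * d)) :=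
    (hslope.const_mul c).const_add (f x - f u + m)
  refine ge_of_tendsto htend ?_
  filter_upwards [Ioc_mem_nhdsGT_of_mem (by norm_num : (0:ℝ) ∈ Set.Ico (0:ℝ) 1)] with t ht
  exact hpt t ht

set_option maxHeartbeats 3200000 in
theorem basic_pdhg_rate
    {X Y : Type*} [NormedAddCommGroup X] [NormedSpace ℝ X] [CompleteSpace X]
    [NormedAddCommGroup Y] [NormedSpace ℝ Y] [CompleteSpace Y]
    (A : X →L[ℝ] Y)
    (φX : X → ℝ) (SX : Set X) (gX : X → (X →L[ℝ] ℝ))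
    (φY : (Y →L[ℝ] ℝ) → ℝ) (SY : Set (Y →L[ℝ] ℝ)) (gY : (Y →L[ℝ] ℝ) → Y)
    (hSXne : SX.Nonempty) (hφXconv : ConvexOn ℝ SX φX)
    (hφXlsc : LowerSemicontinuousOn φX SX)
    (hSYne : SY.Nonempty) (hφYconv : ConvexOn ℝ SY φY)
    (hφYlsc : LowerSemicontinuousOn φY SY)
    (hφXdiff : ∀ x ∈ interior SX, ∀ w : X,
      HasDerivAt (fun t : ℝ => φX (x + t • w)) (gX x w) 0)
    (hφYdiff : ∀ p ∈ interior SY, ∀ q : Y →L[ℝ] ℝ,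
      HasDerivAt (fun t : ℝ => φY (p + t • q)) (q (gY p)) 0)
    (DX : X → X → ℝ) (hDXdef : ∀ x x', DX x x' = φX x - φX x' - gX x' (x - x'))
    (DY : (Y →L[ℝ] ℝ) → (Y →L[ℝ] ℝ) → ℝ)
    (hDYdef : ∀ p q, DY p q = φY p - φY q - (p - q) (gY q))
    (hscX : ∀ x ∈ SX, ∀ x' ∈ interior SX, (1/2) * ‖x - x'‖ ^ 2 ≤ DX x x')
    (hscY : ∀ p ∈ SY, ∀ q ∈ interior SY, (1/2) * ‖p - q‖ ^ 2 ≤ DY p q)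
    (g : X → ℝ) (Sg : Set X) (hSgne : Sg.Nonempty)
    (hgconv : ConvexOn ℝ Sg g) (hglsc : LowerSemicontinuousOn g Sg)
    (hst : (Y →L[ℝ] ℝ) → ℝ) (Sh : Set (Y →L[ℝ] ℝ)) (hShne : Sh.Nonempty)
    (hhconv : ConvexOn ℝ Sh hst) (hhlsc : LowerSemicontinuousOn hst Sh)
    (L : X → (Y →L[ℝ] ℝ) → ℝ) (hLdef : ∀ x p, L x p = g x + p (A x) - hst p)
    (τ σ : ℝ) (hτ : 0 < τ) (hσ : 0 < σ) (hpar : τ * σ * ‖A‖ ^ 2 < 1)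
    (u : ℕ → X) (v : ℕ → (Y →L[ℝ] ℝ))
    (hu : ∀ k, u k ∈ Sg ∩ interior SX)
    (hv : ∀ k, v k ∈ Sh ∩ interior SY)
    (hstepx : ∀ k : ℕ, ∀ x ∈ Sg ∩ SX,
      g (u (k+1)) + (v k) (A (u (k+1))) + (1/τ) * DX (u (k+1)) (u k) ≤
        g x + (v k) (A x) + (1/τ) * DX x (u k))
    (hstepy : ∀ k : ℕ, ∀ p ∈ Sh ∩ SY,
      -hst p + p (A ((2:ℝ) • u (k+1) - u k)) - (1/σ) * DY p (v k) ≤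
        -hst (v (k+1)) + (v (k+1)) (A ((2:ℝ) • u (k+1) - u k)) - (1/σ) * DY (v (k+1)) (v k))
    (XK : ℕ → X) (YK : ℕ → (Y →L[ℝ] ℝ))
    (hXK : ∀ K : ℕ, XK K = ((K : ℝ))⁻¹ • ∑ k ∈ Finset.Icc 1 K, u k)
    (hYK : ∀ K : ℕ, YK K = ((K : ℝ))⁻¹ • ∑ k ∈ Finset.Icc 1 K, v k) :
    ∀ K : ℕ, 1 ≤ K → ∀ x ∈ Sg ∩ SX, ∀ p ∈ Sh ∩ SY,
      L (XK K) p - L x (YK K) ≤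
        ((1 + Real.sqrt (τ * σ) * ‖A‖) / (K : ℝ)) * ((1/τ) * DX x (u 0) + (1/σ) * DY p (v 0))
        - ((1 - Real.sqrt (τ * σ) * ‖A‖) / (K : ℝ)) * ((1/τ) * DX x (u K) + (1/σ) * DY p (v K)) := by
  intro K hK x hx p hp
  obtain ⟨hxg, hxX⟩ := hx
  obtain ⟨hpg, hpY⟩ := hp
  have hτ' : (0:ℝ) < 1/τ := by positivity
  have hσ' : (0:ℝ) < 1/σ := by positivity
  set s : ℝ := Real.sqrt (τ * σ) * ‖A‖ with hs
  have hsq : Real.sqrt (τ * σ) ^ 2 = τ * σ := Real.sq_sqrt (by positivity)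
  have hs0 : 0 ≤ s := by positivity
  have hs1 : s ≤ 1 := by nlinarith [hs0, hsq, norm_nonneg A]
  -- Step inequality I (x-update)
  have stepI : ∀ k : ℕ,
      g (u (k+1)) - g x + ((v k) (A (u (k+1))) - (v k) (A x)) ≤
        (1/τ) * (DX x (u k) - DX x (u (k+1)) - DX (u (k+1)) (u k)) := by
    intro k
    obtain ⟨hug, huX⟩ := hu (k+1)
    obtain ⟨hukg, hukX⟩ := hu k
    have hkey := key_step g Sg hgconv SX hφXconv.1 φX
      (fun z => (v k) (A z) - (1/τ) * (gX (u k) z))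
      ((v k) (A x) - (v k) (A (u (k+1))) - (1/τ) * (gX (u k) x - gX (u k) (u (k+1))))
      (1/τ) (gX (u (k+1)) (x - u (k+1))) hτ'
      (u (k+1)) x hug (interior_subset huX) hxg hxX
      (by intro t; simp only [map_add, map_sub, map_smul, smul_eq_mul]; ring)
      (hφXdiff (u (k+1)) huX (x - u (k+1)))
      (by
        intro z hz
        have h := hstepx k z hz
        rw [hDXdef (u (k+1)) (u k), hDXdef z (u k)] at h
        simp only [map_sub] at h
        nlinarith [h])
    have h3pt : (1/τ) * (DX x (u k) - DX x (u (k+1)) - DX (u (k+1)) (u k)) =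
        (1/τ) * (gX (u (k+1)) (x - u (k+1)) - (gX (u k) x - gX (u k) (u (k+1)))) := by
      simp only [hDXdef, map_sub]; ring
    rw [h3pt]
    nlinarith [hkey]
  -- Step inequality II (y-update)
  have stepII : ∀ k : ℕ,
      hst (v (k+1)) - hst p -
        ((v (k+1)) (A ((2:ℝ) • u (k+1) - u k)) - p (A ((2:ℝ) • u (k+1) - u k))) ≤
        (1/σ) * (DY p (v k) - DY p (v (k+1)) - DY (v (k+1)) (v k)) := by
    intro k
    obtain ⟨hvh, hvY⟩ := hv (k+1)
    obtain ⟨hvkh, hvkY⟩ := hv k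
    have hkey := key_step hst Sh hhconv SY hφYconv.1 φY
      (fun q => -(q (A ((2:ℝ) • u (k+1) - u k))) - (1/σ) * (q (gY (v k))))
      (-(p (A ((2:ℝ) • u (k+1) - u k)) - (v (k+1)) (A ((2:ℝ) • u (k+1) - u k)))
        - (1/σ) * (p (gY (v k)) - (v (k+1)) (gY (v k))))
      (1/σ) ((p - v (k+1)) (gY (v (k+1)))) hσ'
      (v (k+1)) p hvh (interior_subset hvY) hpg hpY
      (by
        intro t
        simp only [ContinuousLinearMap.add_apply, ContinuousLinearMap.smul_apply,
          ContinuousLinearMap.sub_apply, smul_eq_mul]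
        ring)
      (hφYdiff (v (k+1)) hvY (p - v (k+1)))
      (by
        intro z hz
        have h := hstepy k z hz
        rw [hDYdef (v (k+1)) (v k), hDYdef z (v k)] at h
        simp only [ContinuousLinearMap.sub_apply] at h
        nlinarith [h])
    have h3pt : (1/σ) * (DY p (v k) - DY p (v (k+1)) - DY (v (k+1)) (v k)) =
        (1/σ) * ((p - v (k+1)) (gY (v (k+1))) - (p (gY (v k)) - (v (k+1)) (gY (v k)))) := by
      simp only [hDYdef, ContinuousLinearMap.sub_apply]; ring
    rw [h3pt]
    simp only [ContinuousLinearMap.sub_apply] at hkey ⊢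
    nlinarith [hkey]
  -- combined per-step inequality
  have step : ∀ k : ℕ,
      L (u (k+1)) p - L x (v (k+1)) ≤
        (((1/τ) * DX x (u k) + (1/σ) * DY p (v k))
          - ((1/τ) * DX x (u (k+1)) + (1/σ) * DY p (v (k+1))))
        - ((1/τ) * DX (u (k+1)) (u k) + (1/σ) * DY (v (k+1)) (v k))
        + ((v (k+1) - v k) (A (u (k+1) - x)))
        - ((p - v (k+1)) (A (u (k+1) - u k))) := by
    intro k
    have h1 := stepI k
    have h2 := stepII k
    rw [hLdef, hLdef]
    simp only [map_sub, map_smul, ContinuousLinearMap.sub_apply, smul_eq_mul] at h1 h2 ⊢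
    linarith
  -- sum it
  have sum0 : ∑ k ∈ Finset.range K, (L (u (k+1)) p - L x (v (k+1))) ≤
      (((1/τ) * DX x (u 0) + (1/σ) * DY p (v 0))
        - ((1/τ) * DX x (u K) + (1/σ) * DY p (v K)))
      - ∑ k ∈ Finset.range K, ((1/τ) * DX (u (k+1)) (u k) + (1/σ) * DY (v (k+1)) (v k))
      + ∑ k ∈ Finset.range K,
          (((v (k+1) - v k) (A (u (k+1) - x))) - ((p - v (k+1)) (A (u (k+1) - u k)))) := by
    have h := Finset.sum_le_sum (fun k (_ : k ∈ Finset.range K) => step k)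
    calc ∑ k ∈ Finset.range K, (L (u (k+1)) p - L x (v (k+1)))
        ≤ ∑ k ∈ Finset.range K,
            ((((1/τ) * DX x (u k) + (1/σ) * DY p (v k))
              - ((1/τ) * DX x (u (k+1)) + (1/σ) * DY p (v (k+1))))
            - ((1/τ) * DX (u (k+1)) (u k) + (1/σ) * DY (v (k+1)) (v k))
            + ((v (k+1) - v k) (A (u (k+1) - x)))
            - ((p - v (k+1)) (A (u (k+1) - u k)))) := h
      _ = _ := by
          have tele : ∑ k ∈ Finset.range K,
              (((1/τ) * DX x (u k) + (1/σ) * DY p (v k))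
                - ((1/τ) * DX x (u (k+1)) + (1/σ) * DY p (v (k+1))))
              = ((1/τ) * DX x (u 0) + (1/σ) * DY p (v 0))
                - ((1/τ) * DX x (u K) + (1/σ) * DY p (v K)) :=
            Finset.sum_range_sub' (fun k => (1/τ) * DX x (u k) + (1/σ) * DY p (v k)) K
          rw [← tele, ← Finset.sum_sub_distrib, ← Finset.sum_add_distrib]
          exact Finset.sum_congr rfl (fun k _ => by ring)
  -- Abel summation identity
  have abel : ∀ n : ℕ, ∑ k ∈ Finset.range n,
      ((v (k+1) - v k) (A (u (k+1) - x)) - (p - v (k+1)) (A (u (k+1) - u k)))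
      = (v n - p) (A (u n - x)) - (v 0 - p) (A (u 0 - x))
        + ∑ k ∈ Finset.range n, (v (k+1) - v k) (A (u (k+1) - u k)) := by
    intro n
    induction n with
    | zero => simp
    | succ n ih =>
        rw [Finset.sum_range_succ, Finset.sum_range_succ (fun k => (v (k+1) - v k) (A (u (k+1) - u k))), ih]
        simp only [map_sub, ContinuousLinearMap.sub_apply]
        ring
  -- pairing bound
  have pairb : ∀ (q : Y →L[ℝ] ℝ) (z : X),
      q (A z) ≤ s * ((1/τ) * ((1/2) * ‖z‖^2) + (1/σ) * ((1/2) * ‖q‖^2)) := by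
    intro q z
    have h1 : q (A z) ≤ ‖q‖ * ‖A z‖ := le_trans (le_abs_self _) (q.le_opNorm (A z))
    have h3 : ‖q‖ * ‖A z‖ ≤ ‖q‖ * (‖A‖ * ‖z‖) :=
      mul_le_mul_of_nonneg_left (A.le_opNorm z) (norm_nonneg q)
    have hτs : Real.sqrt τ ^ 2 = τ := Real.sq_sqrt hτ.le
    have hσs : Real.sqrt σ ^ 2 = σ := Real.sq_sqrt hσ.le
    have hms : Real.sqrt (τ*σ) = Real.sqrt τ * Real.sqrt σ := Real.sqrt_mul hτ.le σ
    have key : ‖q‖ * ‖z‖ ≤ Real.sqrt (τ*σ) * ((1/τ) * ((1/2) * ‖z‖^2) + (1/σ) * ((1/2) * ‖q‖^2)) := by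
      rw [hms]
      have h := sq_nonneg (Real.sqrt σ * ‖z‖ - Real.sqrt τ * ‖q‖)
      have h2' : 2 * (Real.sqrt τ * Real.sqrt σ) * (‖q‖ * ‖z‖) ≤ σ * ‖z‖^2 + τ * ‖q‖^2 := by
        nlinarith [h, hτs, hσs]
      have h3' : 2*τ*σ*(‖q‖*‖z‖) ≤ Real.sqrt τ * Real.sqrt σ * (σ*‖z‖^2 + τ*‖q‖^2) := by
        have hmul := mul_le_mul_of_nonneg_left h2'
          (by positivity : (0:ℝ) ≤ Real.sqrt τ * Real.sqrt σ)
        have hts : (Real.sqrt τ * Real.sqrt σ)^2 = τ*σ := by rw [mul_pow, hτs, hσs]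
        have expand : Real.sqrt τ * Real.sqrt σ * (2 * (Real.sqrt τ * Real.sqrt σ) * (‖q‖ * ‖z‖))
            = 2*τ*σ*(‖q‖*‖z‖) := by
          linear_combination (2*(‖q‖*‖z‖)) * hts
        linarith [hmul, expand.symm.le, expand.le]
      have goal' : Real.sqrt τ * Real.sqrt σ * ((1/τ) * ((1/2) * ‖z‖^2) + (1/σ) * ((1/2) * ‖q‖^2))
          = (Real.sqrt τ * Real.sqrt σ * (σ*‖z‖^2 + τ*‖q‖^2)) / (2*τ*σ) := by
        field_simp
      rw [goal', le_div_iff₀ (by positivity)]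
      linarith [h3']
    have h4 := mul_le_mul_of_nonneg_left key (norm_nonneg A)
    rw [hs]
    nlinarith [h1, h3, h4]
  -- bounds on the three cross terms
  have boundK : (v K - p) (A (u K - x)) ≤ s * ((1/τ) * DX x (u K) + (1/σ) * DY p (v K)) := by
    have h := pairb (v K - p) (u K - x)
    rw [norm_sub_rev (u K) x, norm_sub_rev (v K) p] at h
    have hX := hscX x hxX (u K) (hu K).2
    have hY := hscY p hpY (v K) (hv K).2
    nlinarith [h, mul_nonneg (mul_nonneg hs0 hτ'.le) (sub_nonneg.mpr hX),
      mul_nonneg (mul_nonneg hs0 hσ'.le) (sub_nonneg.mpr hY)]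
  have bound0 : -((v 0 - p) (A (u 0 - x))) ≤ s * ((1/τ) * DX x (u 0) + (1/σ) * DY p (v 0)) := by
    have h := pairb (p - v 0) (u 0 - x)
    have hneg : (p - v 0) (A (u 0 - x)) = -((v 0 - p) (A (u 0 - x))) := by
      simp only [ContinuousLinearMap.sub_apply]; ring
    rw [hneg, norm_sub_rev (u 0) x] at h
    have hX := hscX x hxX (u 0) (hu 0).2
    have hY := hscY p hpY (v 0) (hv 0).2
    nlinarith [h, mul_nonneg (mul_nonneg hs0 hτ'.le) (sub_nonneg.mpr hX),
      mul_nonneg (mul_nonneg hs0 hσ'.le) (sub_nonneg.mpr hY)]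
  have boundG : ∀ k : ℕ, (v (k+1) - v k) (A (u (k+1) - u k)) ≤
      s * ((1/τ) * DX (u (k+1)) (u k) + (1/σ) * DY (v (k+1)) (v k)) := by
    intro k
    have h := pairb (v (k+1) - v k) (u (k+1) - u k)
    have hX := hscX (u (k+1)) (interior_subset (hu (k+1)).2) (u k) (hu k).2
    have hY := hscY (v (k+1)) (interior_subset (hv (k+1)).2) (v k) (hv k).2
    nlinarith [h, mul_nonneg (mul_nonneg hs0 hτ'.le) (sub_nonneg.mpr hX),
      mul_nonneg (mul_nonneg hs0 hσ'.le) (sub_nonneg.mpr hY)]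
  have rhononneg : ∀ k : ℕ, (0:ℝ) ≤ (1/τ) * DX (u (k+1)) (u k) + (1/σ) * DY (v (k+1)) (v k) := by
    intro k
    have hX := hscX (u (k+1)) (interior_subset (hu (k+1)).2) (u k) (hu k).2
    have hY := hscY (v (k+1)) (interior_subset (hv (k+1)).2) (v k) (hv k).2
    have h1 : (0:ℝ) ≤ DX (u (k+1)) (u k) := le_trans (by positivity) hX
    have h2 : (0:ℝ) ≤ DY (v (k+1)) (v k) := le_trans (by positivity) hY
    have := mul_nonneg hτ'.le h1
    have := mul_nonneg hσ'.le h2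
    linarith
  have sumG : ∑ k ∈ Finset.range K, (v (k+1) - v k) (A (u (k+1) - u k)) ≤
      s * ∑ k ∈ Finset.range K, ((1/τ) * DX (u (k+1)) (u k) + (1/σ) * DY (v (k+1)) (v k)) := by
    rw [Finset.mul_sum]
    exact Finset.sum_le_sum (fun k _ => boundG k)
  have sumrho : (0:ℝ) ≤ ∑ k ∈ Finset.range K,
      ((1/τ) * DX (u (k+1)) (u k) + (1/σ) * DY (v (k+1)) (v k)) :=
    Finset.sum_nonneg (fun k _ => rhononneg k)
  have sumtotal : ∑ k ∈ Finset.range K, (L (u (k+1)) p - L x (v (k+1))) ≤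
      (1+s) * ((1/τ) * DX x (u 0) + (1/σ) * DY p (v 0))
      - (1-s) * ((1/τ) * DX x (u K) + (1/σ) * DY p (v K)) := by
    have h := sum0
    rw [abel K] at h
    nlinarith [h, boundK, bound0, sumG, sumrho, mul_nonneg (sub_nonneg.mpr hs1) sumrho]
  -- Jensen / averaging
  have hKpos : (0:ℝ) < (K:ℝ) := by exact_mod_cast Nat.pos_of_ne_zero (by omega)
  have hcard : (Finset.Icc 1 K).card = K := by rw [Nat.card_Icc]; omega
  have hw : ∑ k ∈ Finset.Icc 1 K, ((K:ℝ))⁻¹ = 1 := by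
    rw [Finset.sum_const, hcard, nsmul_eq_mul]
    field_simp
  have hconst : ∀ c : ℝ, ∑ k ∈ Finset.Icc 1 K, ((K:ℝ))⁻¹ * c = c := by
    intro c; rw [← Finset.sum_mul, hw, one_mul]
  have hgJ : g (XK K) ≤ ∑ k ∈ Finset.Icc 1 K, ((K:ℝ))⁻¹ * g (u k) := by
    rw [hXK K, Finset.smul_sum]
    exact hgconv.map_sum_le (fun i _ => by positivity) hw (fun i _ => (hu i).1)
  have hhJ : hst (YK K) ≤ ∑ k ∈ Finset.Icc 1 K, ((K:ℝ))⁻¹ * hst (v k) := by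
    rw [hYK K, Finset.smul_sum]
    exact hhconv.map_sum_le (fun i _ => by positivity) hw (fun i _ => (hv i).1)
  have hlin1 : p (A (XK K)) = ∑ k ∈ Finset.Icc 1 K, ((K:ℝ))⁻¹ * p (A (u k)) := by
    rw [hXK K]
    simp [map_smul, map_sum, smul_eq_mul, Finset.mul_sum]
  have hlin2 : (YK K) (A x) = ∑ k ∈ Finset.Icc 1 K, ((K:ℝ))⁻¹ * (v k) (A x) := by
    rw [hYK K]
    simp [ContinuousLinearMap.smul_apply, ContinuousLinearMap.sum_apply, smul_eq_mul,
      Finset.mul_sum]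
  have hRHS : ∑ k ∈ Finset.Icc 1 K, ((K:ℝ))⁻¹ * (L (u k) p - L x (v k))
      = (∑ k ∈ Finset.Icc 1 K, ((K:ℝ))⁻¹ * g (u k))
        + (∑ k ∈ Finset.Icc 1 K, ((K:ℝ))⁻¹ * p (A (u k)))
        - hst p - g x
        - (∑ k ∈ Finset.Icc 1 K, ((K:ℝ))⁻¹ * (v k) (A x))
        + (∑ k ∈ Finset.Icc 1 K, ((K:ℝ))⁻¹ * hst (v k)) := by
    have h1 : ∑ k ∈ Finset.Icc 1 K, ((K:ℝ))⁻¹ * (L (u k) p - L x (v k))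
        = ∑ k ∈ Finset.Icc 1 K, (((K:ℝ))⁻¹ * g (u k) + ((K:ℝ))⁻¹ * p (A (u k))
          - ((K:ℝ))⁻¹ * hst p - ((K:ℝ))⁻¹ * g x - ((K:ℝ))⁻¹ * ((v k) (A x))
          + ((K:ℝ))⁻¹ * hst (v k)) :=
      Finset.sum_congr rfl (fun k _ => by rw [hLdef, hLdef]; ring)
    rw [h1]
    simp only [Finset.sum_add_distrib, Finset.sum_sub_distrib]
    rw [hconst (hst p), hconst (g x)]
  have e : ∑ k ∈ Finset.Icc 1 K, ((K:ℝ))⁻¹ * (L (u k) p - L x (v k))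
      = ((K:ℝ))⁻¹ * ∑ k ∈ Finset.range K, (L (u (k+1)) p - L x (v (k+1))) := by
    rw [← Finset.Ico_add_one_right_eq_Icc, Finset.sum_Ico_eq_sum_range, Finset.mul_sum]
    refine Finset.sum_congr (by norm_num) (fun k _ => by rw [Nat.add_comm 1 k])
  have javg : L (XK K) p - L x (YK K) ≤
      ((K:ℝ))⁻¹ * ∑ k ∈ Finset.range K, (L (u (k+1)) p - L x (v (k+1))) := by
    rw [← e, hRHS, hLdef, hLdef, hlin1, hlin2]
    linarith [hgJ, hhJ]
  have final : L (XK K) p - L x (YK K) ≤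
      ((K:ℝ))⁻¹ * ((1+s) * ((1/τ) * DX x (u 0) + (1/σ) * DY p (v 0))
        - (1-s) * ((1/τ) * DX x (u K) + (1/σ) * DY p (v K))) :=
    le_trans javg (mul_le_mul_of_nonneg_left sumtotal (inv_pos.mpr hKpos).le)
  have eq2 : ((1 + s) / (K:ℝ)) * ((1/τ) * DX x (u 0) + (1/σ) * DY p (v 0))
      - ((1 - s) / (K:ℝ)) * ((1/τ) * DX x (u K) + (1/σ) * DY p (v K))
      = ((K:ℝ))⁻¹ * ((1+s) * ((1/τ) * DX x (u 0) + (1/σ) * DY p (v 0))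
        - (1-s) * ((1/τ) * DX x (u K) + (1/σ) * DY p (v K))) := by
    field_simp
  rw [eq2]
  exact final
end

section
/- Assume τσ‖A‖² < 1 and let (x_s, y_s⋆) ∈ (dom g ∩ dom φ_X) × (dom h⋆ ∩ dom φ_{Y⋆}) be a saddle point of L. Then for every K ≥ 1 the iterates of the basic nonlinear PDHG method satisfy the global bound (1/τ)·D_X(x_s, x_K) + (1/σ)·D_Y(y_s⋆, y_K⋆) ≤ ((1 + √(τσ)·‖A‖)/(1 − √(τσ)·‖A‖))·((1/τ)·D_X(x_s, x_0) + (1/σ)·D_Y(y_s⋆, y_0⋆)). -/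
open Filter Topology

lemma neg_deriv_le' {F : ℝ → ℝ} {d C : ℝ} (hd : HasDerivAt F d 0)
    (h : ∀ t : ℝ, 0 < t → t ≤ 1 → F 0 - F t ≤ t * C) : -d ≤ C := by
  have h1 : Tendsto (slope F 0) (𝓝[>] 0) (𝓝 d) :=
    (hasDerivAt_iff_tendsto_slope.1 hd).mono_left
      (nhdsWithin_mono _ (fun x hx => ne_of_gt hx))
  have h2 : ∀ᶠ t in 𝓝[>] (0:ℝ), -C ≤ slope F 0 t := by
    filter_upwards [Ioc_mem_nhdsGT_of_mem (by norm_num : (0:ℝ) ∈ Set.Ico (0:ℝ) 1)] with t ht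
    have hb := h t ht.1 ht.2
    rw [slope_def_field, sub_zero, le_div_iff₀ ht.1]
    linarith
  have := ge_of_tendsto h1 h2
  linarith

lemma three_point' {E : Type*} [NormedAddCommGroup E] [NormedSpace ℝ E]
    {f : E → ℝ} {T : Set E} (hf : ConvexOn ℝ T f)
    {S : Set E} (hS : Convex ℝ S) {φ : E → ℝ}
    {lin : E → ℝ} {c : ℝ} (hc : 0 < c)
    {z x : E} (hzT : z ∈ T) (hzS : z ∈ S) (hxT : x ∈ T) (hxS : x ∈ S)
    (hlin : ∀ t : ℝ, lin (z + t • (x - z)) = lin z + t * (lin x - lin z))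
    {d : ℝ} (hd : HasDerivAt (fun t : ℝ => φ (z + t • (x - z))) d 0)
    (hmin : ∀ y ∈ T ∩ S, f z + lin z + c * φ z ≤ f y + lin y + c * φ y) :
    c * (φ x - φ z - d) ≤ (f x + lin x + c * φ x) - (f z + lin z + c * φ z) := by
  have key : -d ≤ (f x - f z + (lin x - lin z)) / c := by
    apply neg_deriv_le' hd
    intro t ht0 ht1
    have hcm : z + t • (x - z) = (1-t) • z + t • x := by module
    have hmemT : (1-t) • z + t • x ∈ T := hf.1 hzT hxT (by linarith) ht0.le (by ring)
    have hmemS : (1-t) • z + t • x ∈ S := hS hzS hxS (by linarith) ht0.le (by ring)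
    have hfc : f ((1-t) • z + t • x) ≤ (1-t) * f z + t * f x :=
      hf.2 hzT hxT (by linarith) ht0.le (by ring)
    have hm := hmin (z + t • (x - z)) ⟨hcm ▸ hmemT, hcm ▸ hmemS⟩
    rw [hlin t] at hm
    rw [hcm] at hm
    rw [show z + (0:ℝ) • (x - z) = z by simp, hcm, ← mul_div_assoc, le_div_iff₀ hc]
    nlinarith [hm, hfc]
  rw [le_div_iff₀ hc] at key
  nlinarith [key]

set_option maxHeartbeats 2000000 in
theorem basic_pdhg_global_bound
    {X Y : Type*} [NormedAddCommGroup X] [NormedSpace ℝ X] [CompleteSpace X]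
    [NormedAddCommGroup Y] [NormedSpace ℝ Y] [CompleteSpace Y]
    (A : X →L[ℝ] Y)
    (φX : X → ℝ) (SX : Set X) (gX : X → (X →L[ℝ] ℝ))
    (φY : (Y →L[ℝ] ℝ) → ℝ) (SY : Set (Y →L[ℝ] ℝ)) (gY : (Y →L[ℝ] ℝ) → Y)
    (hSXne : SX.Nonempty) (hφXconv : ConvexOn ℝ SX φX)
    (hφXlsc : LowerSemicontinuousOn φX SX)
    (hSYne : SY.Nonempty) (hφYconv : ConvexOn ℝ SY φY)
    (hφYlsc : LowerSemicontinuousOn φY SY)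
    (hφXdiff : ∀ x ∈ interior SX, ∀ w : X,
      HasDerivAt (fun t : ℝ => φX (x + t • w)) (gX x w) 0)
    (hφYdiff : ∀ p ∈ interior SY, ∀ q : Y →L[ℝ] ℝ,
      HasDerivAt (fun t : ℝ => φY (p + t • q)) (q (gY p)) 0)
    (DX : X → X → ℝ) (hDXdef : ∀ x x', DX x x' = φX x - φX x' - gX x' (x - x'))
    (DY : (Y →L[ℝ] ℝ) → (Y →L[ℝ] ℝ) → ℝ)
    (hDYdef : ∀ p q, DY p q = φY p - φY q - (p - q) (gY q))
    (hscX : ∀ x ∈ SX, ∀ x' ∈ interior SX, (1/2) * ‖x - x'‖ ^ 2 ≤ DX x x')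
    (hscY : ∀ p ∈ SY, ∀ q ∈ interior SY, (1/2) * ‖p - q‖ ^ 2 ≤ DY p q)
    (g : X → ℝ) (Sg : Set X) (hSgne : Sg.Nonempty)
    (hgconv : ConvexOn ℝ Sg g) (hglsc : LowerSemicontinuousOn g Sg)
    (hst : (Y →L[ℝ] ℝ) → ℝ) (Sh : Set (Y →L[ℝ] ℝ)) (hShne : Sh.Nonempty)
    (hhconv : ConvexOn ℝ Sh hst) (hhlsc : LowerSemicontinuousOn hst Sh)
    (L : X → (Y →L[ℝ] ℝ) → ℝ) (hLdef : ∀ x p, L x p = g x + p (A x) - hst p)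
    (τ σ : ℝ) (hτ : 0 < τ) (hσ : 0 < σ) (hpar : τ * σ * ‖A‖ ^ 2 < 1)
    (u : ℕ → X) (v : ℕ → (Y →L[ℝ] ℝ))
    (hu : ∀ k, u k ∈ Sg ∩ interior SX)
    (hv : ∀ k, v k ∈ Sh ∩ interior SY)
    (hstepx : ∀ k : ℕ, ∀ x ∈ Sg ∩ SX,
      g (u (k+1)) + (v k) (A (u (k+1))) + (1/τ) * DX (u (k+1)) (u k) ≤
        g x + (v k) (A x) + (1/τ) * DX x (u k))
    (hstepy : ∀ k : ℕ, ∀ p ∈ Sh ∩ SY,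
      -hst p + p (A ((2:ℝ) • u (k+1) - u k)) - (1/σ) * DY p (v k) ≤
        -hst (v (k+1)) + (v (k+1)) (A ((2:ℝ) • u (k+1) - u k)) - (1/σ) * DY (v (k+1)) (v k))
    (xs : X) (ys : Y →L[ℝ] ℝ) (hxs : xs ∈ Sg ∩ SX) (hys : ys ∈ Sh ∩ SY)
    (hsaddle1 : ∀ p ∈ Sh, L xs p ≤ L xs ys)
    (hsaddle2 : ∀ x ∈ Sg, L xs ys ≤ L x ys)
    :
    ∀ K : ℕ, 1 ≤ K →
      (1/τ) * DX xs (u K) + (1/σ) * DY ys (v K) ≤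
        ((1 + Real.sqrt (τ * σ) * ‖A‖) / (1 - Real.sqrt (τ * σ) * ‖A‖)) *
          ((1/τ) * DX xs (u 0) + (1/σ) * DY ys (v 0)) := by
  have hτ' : (0:ℝ) < 1/τ := by positivity
  have hσ' : (0:ℝ) < 1/σ := by positivity
  set θ := Real.sqrt (τ*σ) * ‖A‖ with hθdef
  have hθ0 : 0 ≤ θ := by positivity
  have hθsq : θ^2 = τ*σ*‖A‖^2 := by
    rw [hθdef, mul_pow, Real.sq_sqrt (by positivity)]
  have hθ1 : θ < 1 := by nlinarith
  -- Young's inequality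
  have young : ∀ a b : ℝ, ‖A‖ * (a*b) ≤ θ * ((1/τ) * (a^2/2)) + θ * ((1/σ) * (b^2/2)) := by
    intro a b
    have e1 : Real.sqrt τ * Real.sqrt τ = τ := Real.mul_self_sqrt hτ.le
    have e2 : Real.sqrt σ * Real.sqrt σ = σ := Real.mul_self_sqrt hσ.le
    have e3 : Real.sqrt (τ*σ) = Real.sqrt τ * Real.sqrt σ := Real.sqrt_mul hτ.le σ
    have h0 : 0 ≤ ‖A‖ * (Real.sqrt τ * Real.sqrt σ) * (Real.sqrt σ * a - Real.sqrt τ * b)^2 := by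
      positivity
    have key : 2*τ*σ*(‖A‖*(a*b)) ≤ 2*τ*σ*(θ * ((1/τ) * (a^2/2)) + θ * ((1/σ) * (b^2/2))) := by
      have hr : 2*τ*σ*(θ * ((1/τ) * (a^2/2)) + θ * ((1/σ) * (b^2/2)))
          = (Real.sqrt τ * Real.sqrt σ * ‖A‖) * (σ*a^2 + τ*b^2) := by
        rw [hθdef, e3]; field_simp
      have expand : Real.sqrt τ * Real.sqrt σ * ‖A‖ * (σ*a^2 + τ*b^2)
          - 2*τ*σ*(‖A‖*(a*b))
          = ‖A‖ * (Real.sqrt τ * Real.sqrt σ) * (Real.sqrt σ * a - Real.sqrt τ * b)^2 := by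
        linear_combination (-(Real.sqrt τ*Real.sqrt σ*‖A‖*b^2)
            + 2*‖A‖*a*b*(Real.sqrt σ*Real.sqrt σ)) * e1
          + (-(Real.sqrt τ*Real.sqrt σ*‖A‖*a^2) + 2*‖A‖*a*b*τ) * e2
      rw [hr]
      linarith [h0, expand]
    exact le_of_mul_le_mul_left key (by positivity)
  -- strong convexity consequences
  have hDXs : ∀ k, (1/2) * ‖u k - xs‖^2 ≤ DX xs (u k) := by
    intro k
    have := hscX xs hxs.2 (u k) (hu k).2
    rwa [norm_sub_rev] at this
  have hDYs : ∀ k, (1/2) * ‖v k - ys‖^2 ≤ DY ys (v k) := by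
    intro k
    have := hscY ys hys.2 (v k) (hv k).2
    rwa [norm_sub_rev] at this
  have hDXstep : ∀ k, (1/2) * ‖u (k+1) - u k‖^2 ≤ DX (u (k+1)) (u k) :=
    fun k => hscX (u (k+1)) (interior_subset (hu (k+1)).2) (u k) (hu k).2
  have hDYstep : ∀ k, (1/2) * ‖v (k+1) - v k‖^2 ≤ DY (v (k+1)) (v k) :=
    fun k => hscY (v (k+1)) (interior_subset (hv (k+1)).2) (v k) (hv k).2
  -- bound on the coupling term
  have habs : ∀ k, |(v k - ys) (A (u k - xs))| ≤
      θ * ((1/τ) * DX xs (u k)) + θ * ((1/σ) * DY ys (v k)) := by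
    intro k
    have h1 : |(v k - ys) (A (u k - xs))| ≤ ‖A‖ * (‖u k - xs‖ * ‖v k - ys‖) := by
      calc |(v k - ys) (A (u k - xs))| = ‖(v k - ys) (A (u k - xs))‖ := (Real.norm_eq_abs _).symm
        _ ≤ ‖v k - ys‖ * ‖A (u k - xs)‖ := ContinuousLinearMap.le_opNorm _ _
        _ ≤ ‖v k - ys‖ * (‖A‖ * ‖u k - xs‖) := by
            exact mul_le_mul_of_nonneg_left (A.le_opNorm _) (norm_nonneg _)
        _ = ‖A‖ * (‖u k - xs‖ * ‖v k - ys‖) := by ring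
    have h2 := young ‖u k - xs‖ ‖v k - ys‖
    have h3 : θ * ((1/τ) * (‖u k - xs‖^2/2)) ≤ θ * ((1/τ) * DX xs (u k)) := by
      apply mul_le_mul_of_nonneg_left _ hθ0
      apply mul_le_mul_of_nonneg_left _ hτ'.le
      linarith [hDXs k]
    have h4 : θ * ((1/σ) * (‖v k - ys‖^2/2)) ≤ θ * ((1/σ) * DY ys (v k)) := by
      apply mul_le_mul_of_nonneg_left _ hθ0
      apply mul_le_mul_of_nonneg_left _ hσ'.le
      linarith [hDYs k]
    linarith
  -- one-step monotonicity
  have hmono : ∀ k : ℕ,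
      ((1/τ) * DX xs (u (k+1)) + (1/σ) * DY ys (v (k+1))) - (v (k+1) - ys) (A (u (k+1) - xs))
      ≤ ((1/τ) * DX xs (u k) + (1/σ) * DY ys (v k)) - (v k - ys) (A (u k - xs)) := by
    intro k
    -- three-point inequality for the x-step
    have tpx := three_point' (f := g) hgconv hφXconv.1 (φ := φX)
        (lin := fun y => (v k) (A y) - (1/τ) * (gX (u k) y)) hτ'
        (z := u (k+1)) (x := xs) (hu (k+1)).1 (interior_subset (hu (k+1)).2) hxs.1 hxs.2
        (by intro t; simp only [map_add, map_smul, map_sub, smul_eq_mul]; ring)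
        (hφXdiff (u (k+1)) (hu (k+1)).2 (xs - u (k+1)))
        (by intro y hy
            have h := hstepx k y hy
            rw [hDXdef (u (k+1)) (u k), hDXdef y (u k)] at h
            simp only [map_sub] at h
            ring_nf at h ⊢
            linarith)
    have h1 : (1/τ) * DX xs (u (k+1)) + (1/τ) * DX (u (k+1)) (u k) ≤
        (1/τ) * DX xs (u k) + (g xs - g (u (k+1)) + (v k) (A xs) - (v k) (A (u (k+1)))) := by
      have e1 := hDXdef xs (u (k+1))
      have e2 := hDXdef (u (k+1)) (u k)
      have e3 := hDXdef xs (u k)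
      simp only [map_sub] at e1 e2 e3 tpx
      rw [e1, e2, e3]
      ring_nf at tpx ⊢
      linarith
    -- three-point inequality for the y-step
    have tpy := three_point' (f := hst) hhconv hφYconv.1 (φ := φY)
        (lin := fun p => -(p (A ((2:ℝ) • u (k+1) - u k))) - (1/σ) * (p (gY (v k)))) hσ'
        (z := v (k+1)) (x := ys) (hv (k+1)).1 (interior_subset (hv (k+1)).2) hys.1 hys.2
        (by intro t
            simp only [ContinuousLinearMap.add_apply, ContinuousLinearMap.smul_apply,
              ContinuousLinearMap.sub_apply, smul_eq_mul]
            ring)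
        (hφYdiff (v (k+1)) (hv (k+1)).2 (ys - v (k+1)))
        (by intro p hp
            have h := hstepy k p hp
            rw [hDYdef p (v k), hDYdef (v (k+1)) (v k)] at h
            simp only [ContinuousLinearMap.sub_apply] at h
            ring_nf at h ⊢
            linarith)
    have h2 : (1/σ) * DY ys (v (k+1)) + (1/σ) * DY (v (k+1)) (v k) ≤
        (1/σ) * DY ys (v k) + (hst ys - hst (v (k+1))
          - ys (A ((2:ℝ) • u (k+1) - u k)) + (v (k+1)) (A ((2:ℝ) • u (k+1) - u k))) := by
      have e1 := hDYdef ys (v (k+1))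
      have e2 := hDYdef (v (k+1)) (v k)
      have e3 := hDYdef ys (v k)
      simp only [ContinuousLinearMap.sub_apply] at e1 e2 e3 tpy
      rw [e1, e2, e3]
      ring_nf at tpy ⊢
      linarith
    -- saddle point inequalities
    have h3 : g xs + ys (A xs) ≤ g (u (k+1)) + ys (A (u (k+1))) := by
      have := hsaddle2 (u (k+1)) (hu (k+1)).1
      rw [hLdef, hLdef] at this
      linarith
    have h4 : (v (k+1)) (A xs) - hst (v (k+1)) ≤ ys (A xs) - hst ys := by
      have := hsaddle1 (v (k+1)) (hv (k+1)).1
      rw [hLdef, hLdef] at this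
      linarith
    -- cross term bound
    have h5a : (v (k+1) - v k) (A (u (k+1) - u k)) ≤
        ‖A‖ * (‖u (k+1) - u k‖ * ‖v (k+1) - v k‖) := by
      calc (v (k+1) - v k) (A (u (k+1) - u k))
          ≤ ‖(v (k+1) - v k) (A (u (k+1) - u k))‖ := le_abs_self _
        _ ≤ ‖v (k+1) - v k‖ * ‖A (u (k+1) - u k)‖ := ContinuousLinearMap.le_opNorm _ _
        _ ≤ ‖v (k+1) - v k‖ * (‖A‖ * ‖u (k+1) - u k‖) :=
            mul_le_mul_of_nonneg_left (A.le_opNorm _) (norm_nonneg _)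
        _ = ‖A‖ * (‖u (k+1) - u k‖ * ‖v (k+1) - v k‖) := by ring
    have h5e : (v (k+1) - v k) (A (u (k+1) - u k)) =
        (v (k+1)) (A (u (k+1))) - (v (k+1)) (A (u k))
          - (v k) (A (u (k+1))) + (v k) (A (u k)) := by
      simp only [map_sub, ContinuousLinearMap.sub_apply]
      ring
    have h5b := young ‖u (k+1) - u k‖ ‖v (k+1) - v k‖
    have h5c : θ * ((1/τ) * (‖u (k+1) - u k‖^2/2)) ≤ θ * ((1/τ) * DX (u (k+1)) (u k)) := by
      apply mul_le_mul_of_nonneg_left _ hθ0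
      apply mul_le_mul_of_nonneg_left _ hτ'.le
      linarith [hDXstep k]
    have h5d : θ * ((1/σ) * (‖v (k+1) - v k‖^2/2)) ≤ θ * ((1/σ) * DY (v (k+1)) (v k)) := by
      apply mul_le_mul_of_nonneg_left _ hθ0
      apply mul_le_mul_of_nonneg_left _ hσ'.le
      linarith [hDYstep k]
    have hP1 : 0 ≤ (1/τ) * DX (u (k+1)) (u k) := by
      apply mul_nonneg hτ'.le
      nlinarith [hDXstep k, sq_nonneg ‖u (k+1) - u k‖]
    have hP2 : 0 ≤ (1/σ) * DY (v (k+1)) (v k) := by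
      apply mul_nonneg hσ'.le
      nlinarith [hDYstep k, sq_nonneg ‖v (k+1) - v k‖]
    have h6 : θ * ((1/τ) * DX (u (k+1)) (u k)) + θ * ((1/σ) * DY (v (k+1)) (v k)) ≤
        (1/τ) * DX (u (k+1)) (u k) + (1/σ) * DY (v (k+1)) (v k) := by
      nlinarith [hP1, hP2, hθ1]
    -- bilinear expansions
    have hz1 : ys (A ((2:ℝ) • u (k+1) - u k)) = 2 * ys (A (u (k+1))) - ys (A (u k)) := by
      simp [map_sub, map_smul, smul_eq_mul]
    have hz2 : (v (k+1)) (A ((2:ℝ) • u (k+1) - u k)) =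
        2 * (v (k+1)) (A (u (k+1))) - (v (k+1)) (A (u k)) := by
      simp [map_sub, map_smul, smul_eq_mul]
    simp only [map_sub, ContinuousLinearMap.sub_apply]
    linarith [h1, h2, h3, h4, h5a, h5e, h5b, h5c, h5d, h6, hz1, hz2]
  -- telescoping
  have hchain : ∀ k : ℕ,
      ((1/τ) * DX xs (u k) + (1/σ) * DY ys (v k)) - (v k - ys) (A (u k - xs))
      ≤ ((1/τ) * DX xs (u 0) + (1/σ) * DY ys (v 0)) - (v 0 - ys) (A (u 0 - xs)) := by
    intro k
    induction k with
    | zero => exact le_rfl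
    | succ n ih => exact le_trans (hmono n) ih
  intro K _
  have hK1 := hchain K
  have habsK := abs_le.1 (habs K)
  have habs0 := abs_le.1 (habs 0)
  have hd0 : 0 ≤ (1/τ) * DX xs (u 0) + (1/σ) * DY ys (v 0) := by
    have h1 : 0 ≤ (1/τ) * DX xs (u 0) := by
      apply mul_nonneg hτ'.le
      nlinarith [hDXs 0, sq_nonneg ‖u 0 - xs‖]
    have h2 : 0 ≤ (1/σ) * DY ys (v 0) := by
      apply mul_nonneg hσ'.le
      nlinarith [hDYs 0, sq_nonneg ‖v 0 - ys‖]
    linarith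
  have hrw : ((1 + θ)/(1 - θ)) * ((1/τ) * DX xs (u 0) + (1/σ) * DY ys (v 0))
      = ((1 + θ) * ((1/τ) * DX xs (u 0) + (1/σ) * DY ys (v 0)))/(1 - θ) :=
    div_mul_eq_mul_div _ _ _
  rw [hrw, le_div_iff₀ (by linarith : (0:ℝ) < 1 - θ)]
  nlinarith [hK1, habsK.2, habs0.1, hd0, hθ0, hθ1]
end

section
/- Let γ_g > 0, θ_0 ∈ (0,1], σ_0 > 0, assume A ≠ 0, set τ_0 = 1/(‖A‖²σ_0), and define for k ≥ 0: θ_{k+1} = 1/√(1 + γ_g τ_k), τ_{k+1} = θ_{k+1}·τ_k, σ_{k+1} = σ_k/θ_{k+1}. Then for every k ≥ 1, every x ∈ dom φ_X, x_k ∈ int(dom φ_X), y⋆ ∈ dom φ_{Y⋆}, and y_k⋆, y_{k−1}⋆ ∈ int(dom φ_{Y⋆}), the quantity Δ_k = (1/τ_k)·D_X(x, x_k) + (1/σ_k)·D_Y(y⋆, y_k⋆) + (1/σ_k)·D_Y(y_k⋆, y_{k−1}⋆) + θ_k·⟨y_k⋆ − y_{k−1}⋆, A(x − x_k)⟩ satisfies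 Δ_k ≥ (γ_g/(1 + γ_g τ_0))·D_X(x, x_k) + (1/σ_k)·D_Y(y⋆, y_k⋆). -/
open Filter Topology

set_option maxHeartbeats 1000000 in
theorem accsc_delta_lower_bound
    {X Y : Type*} [NormedAddCommGroup X] [NormedSpace ℝ X] [CompleteSpace X]
    [NormedAddCommGroup Y] [NormedSpace ℝ Y] [CompleteSpace Y]
    (A : X →L[ℝ] Y)
    (φX : X → ℝ) (SX : Set X) (gX : X → (X →L[ℝ] ℝ))
    (φY : (Y →L[ℝ] ℝ) → ℝ) (SY : Set (Y →L[ℝ] ℝ)) (gY : (Y →L[ℝ] ℝ) → Y)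
    (hSXne : SX.Nonempty) (hφXconv : ConvexOn ℝ SX φX)
    (hφXlsc : LowerSemicontinuousOn φX SX)
    (hSYne : SY.Nonempty) (hφYconv : ConvexOn ℝ SY φY)
    (hφYlsc : LowerSemicontinuousOn φY SY)
    (hφXdiff : ∀ x ∈ interior SX, ∀ w : X,
      HasDerivAt (fun t : ℝ => φX (x + t • w)) (gX x w) 0)
    (hφYdiff : ∀ p ∈ interior SY, ∀ q : Y →L[ℝ] ℝ,
      HasDerivAt (fun t : ℝ => φY (p + t • q)) (q (gY p)) 0)
    (DX : X → X → ℝ) (hDXdef : ∀ x x', DX x x' = φX x - φX x' - gX x' (x - x'))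
    (DY : (Y →L[ℝ] ℝ) → (Y →L[ℝ] ℝ) → ℝ)
    (hDYdef : ∀ p q, DY p q = φY p - φY q - (p - q) (gY q))
    (hscX : ∀ x ∈ SX, ∀ x' ∈ interior SX, (1/2) * ‖x - x'‖ ^ 2 ≤ DX x x')
    (hscY : ∀ p ∈ SY, ∀ q ∈ interior SY, (1/2) * ‖p - q‖ ^ 2 ≤ DY p q)
    (γg : ℝ) (hγg : 0 < γg) (hAne : A ≠ 0)
    (θ τ σ : ℕ → ℝ) (hθ0 : 0 < θ 0 ∧ θ 0 ≤ 1) (hσ0 : 0 < σ 0)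
    (hτ0 : τ 0 = 1 / (‖A‖ ^ 2 * σ 0))
    (hθrec : ∀ k : ℕ, θ (k+1) = 1 / Real.sqrt (1 + γg * τ k))
    (hτrec : ∀ k : ℕ, τ (k+1) = θ (k+1) * τ k)
    (hσrec : ∀ k : ℕ, σ (k+1) = σ k / θ (k+1)) :
    ∀ k : ℕ, 1 ≤ k → ∀ x ∈ SX, ∀ xk ∈ interior SX, ∀ p ∈ SY,
      ∀ pk ∈ interior SY, ∀ pk1 ∈ interior SY,
      (γg / (1 + γg * τ 0)) * DX x xk + (1/σ k) * DY p pk ≤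
        (1/τ k) * DX x xk + (1/σ k) * DY p pk + (1/σ k) * DY pk pk1
          + θ k * ((pk - pk1) (A (x - xk))) := by
  have hA : (0:ℝ) < ‖A‖ := norm_pos_iff.mpr hAne
  have hτ0pos : 0 < τ 0 := by rw [hτ0]; positivity
  -- invariants along the recursion
  have hinv : ∀ k, 0 < τ k ∧ 0 < σ k ∧ τ k ≤ τ 0 ∧ ‖A‖ ^ 2 * (τ k * σ k) = 1 := by
    intro k
    induction k with
    | zero =>
      refine ⟨hτ0pos, hσ0, le_refl _, ?_⟩
      rw [hτ0]; field_simp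
    | succ m ih =>
      obtain ⟨hτm, hσm, hτle, hprod⟩ := ih
      have hone : (1:ℝ) ≤ 1 + γg * τ m := by nlinarith
      have hs1 : (1:ℝ) ≤ Real.sqrt (1 + γg * τ m) := by
        nlinarith [Real.sq_sqrt (show (0:ℝ) ≤ 1 + γg * τ m by linarith),
          Real.sqrt_nonneg (1 + γg * τ m)]
      have hspos : 0 < Real.sqrt (1 + γg * τ m) := lt_of_lt_of_le one_pos hs1
      have hθpos : 0 < θ (m+1) := by rw [hθrec]; positivity
      have hθle : θ (m+1) ≤ 1 := by
        rw [hθrec, div_le_one hspos]; exact hs1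
      have hτpos : 0 < τ (m+1) := by rw [hτrec]; exact mul_pos hθpos hτm
      have hσpos : 0 < σ (m+1) := by rw [hσrec]; exact div_pos hσm hθpos
      refine ⟨hτpos, hσpos, ?_, ?_⟩
      · rw [hτrec]
        nlinarith [mul_le_mul_of_nonneg_right hθle hτm.le]
      · rw [hτrec, hσrec]
        have heq : θ (m+1) * τ m * (σ m / θ (m+1)) = τ m * σ m := by
          field_simp
        rw [heq, hprod]
  intro k hk x hx xk hxk p hp pk hpk pk1 hpk1
  obtain ⟨m, rfl⟩ : ∃ m, k = m + 1 := ⟨k - 1, (Nat.succ_pred_eq_of_pos hk).symm⟩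
  obtain ⟨hτm, hσm, hτle, _⟩ := hinv m
  obtain ⟨hτk, hσk, _, hprod⟩ := hinv (m+1)
  set s := Real.sqrt (1 + γg * τ m) with hs
  have hone : (1:ℝ) ≤ 1 + γg * τ m := by nlinarith
  have hssq : s ^ 2 = 1 + γg * τ m := Real.sq_sqrt (by linarith)
  have hs1 : (1:ℝ) ≤ s := by
    nlinarith [Real.sqrt_nonneg (1 + γg * τ m)]
  have hspos : (0:ℝ) < s := lt_of_lt_of_le one_pos hs1
  have hθk : θ (m+1) = 1 / s := hθrec m
  have hθpos : 0 < θ (m+1) := by rw [hθk]; positivity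
  have hτeq : τ (m+1) = τ m / s := by rw [hτrec, hθk]; ring
  have h10 : (0:ℝ) < 1 + γg * τ 0 := by nlinarith
  have h10ne : (1 + γg * τ 0) ≠ 0 := ne_of_gt h10
  have hsle : s ≤ 1 + γg * τ 0 := by
    nlinarith [mul_nonneg (by linarith : (0:ℝ) ≤ s) (by linarith : (0:ℝ) ≤ s - 1),
      mul_le_mul_of_nonneg_left hτle hγg.le]
  -- key coefficient inequality
  have hcσ : ‖A‖ ^ 2 * σ (m+1) = 1 / τ (m+1) := by
    rw [eq_div_iff (ne_of_gt hτk), ← hprod]; ring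
  have hkey : θ (m+1) ^ 2 * (‖A‖ ^ 2 * σ (m+1)) + γg / (1 + γg * τ 0) ≤ 1 / τ (m+1) := by
    rw [hcσ, hτeq, hθk, one_div_div]
    have e1 : (1 / s) ^ 2 * (s / τ m) = 1 / (s * τ m) := by
      field_simp
    rw [e1, div_add_div _ _ (by positivity) h10ne,
      div_le_div_iff₀ (by positivity) hτm]
    have hmul : 1 * (1 + γg * τ 0) + γg * (s * τ m) ≤ s ^ 2 * (1 + γg * τ 0) := by
      nlinarith [mul_nonneg (mul_nonneg hγg.le hτm.le) (sub_nonneg.2 hsle)]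
    nlinarith [mul_le_mul_of_nonneg_right hmul hτm.le]
  -- norm bounds
  set a := ‖x - xk‖ with ha
  set b := ‖pk - pk1‖ with hb
  have hDXge : (1/2) * a ^ 2 ≤ DX x xk := hscX x hx xk hxk
  have hDYpge : 0 ≤ DY p pk := le_trans (by positivity) (hscY p hp pk hpk)
  have hDYkge : (1/2) * b ^ 2 ≤ DY pk pk1 := hscY pk (interior_subset hpk) pk1 hpk1
  have hDXnn : 0 ≤ DX x xk := le_trans (by positivity) hDXge
  -- pairing bound
  have hpair : -(b * (‖A‖ * a)) ≤ (pk - pk1) (A (x - xk)) := by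
    have h1 : ‖(pk - pk1) (A (x - xk))‖ ≤ b * ‖A (x - xk)‖ :=
      (pk - pk1).le_opNorm (A (x - xk))
    have h2 : ‖A (x - xk)‖ ≤ ‖A‖ * a := A.le_opNorm (x - xk)
    have h3 : ‖(pk - pk1) (A (x - xk))‖ ≤ b * (‖A‖ * a) :=
      le_trans h1 (mul_le_mul_of_nonneg_left h2 (norm_nonneg _))
    have h4 := neg_abs_le ((pk - pk1) (A (x - xk)))
    rw [Real.norm_eq_abs] at h3
    linarith
  -- assemble
  set t := θ (m+1) with htdef
  set c := ‖A‖ with hc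
  have hcoef : t ^ 2 * (c ^ 2 * σ (m+1)) ≤ 1 / τ (m+1) - γg / (1 + γg * τ 0) := by
    linarith
  have hcoefnn : 0 ≤ t ^ 2 * (c ^ 2 * σ (m+1)) := by positivity
  have hE : -(t * (b * (c * a))) ≤ t * ((pk - pk1) (A (x - xk))) := by
    have h := mul_le_mul_of_nonneg_left hpair hθpos.le
    rw [mul_neg] at h
    exact h
  have hsq : t ^ 2 * (c ^ 2 * σ (m+1)) * ((1/2) * a ^ 2) + (1 / σ (m+1)) * ((1/2) * b ^ 2)
      - t * (b * (c * a)) = (1 / (2 * σ (m+1))) * (t * c * a * σ (m+1) - b) ^ 2 := by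
    field_simp
    ring
  have h1 : t ^ 2 * (c ^ 2 * σ (m+1)) * ((1/2) * a ^ 2)
      ≤ (1 / τ (m+1)) * DX x xk - (γg / (1 + γg * τ 0)) * DX x xk := by
    rw [← sub_mul]
    calc t ^ 2 * (c ^ 2 * σ (m+1)) * ((1/2) * a ^ 2)
        ≤ t ^ 2 * (c ^ 2 * σ (m+1)) * DX x xk :=
          mul_le_mul_of_nonneg_left hDXge hcoefnn
      _ ≤ (1 / τ (m+1) - γg / (1 + γg * τ 0)) * DX x xk :=
          mul_le_mul_of_nonneg_right hcoef hDXnn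
  have h2 : (1 / σ (m+1)) * ((1/2) * b ^ 2) ≤ (1 / σ (m+1)) * DY pk pk1 :=
    mul_le_mul_of_nonneg_left hDYkge (by positivity)
  have h3 : (0:ℝ) ≤ t ^ 2 * (c ^ 2 * σ (m+1)) * ((1/2) * a ^ 2)
      + (1 / σ (m+1)) * ((1/2) * b ^ 2) - t * (b * (c * a)) := by
    rw [hsq]; positivity
  linarith
end

section
/- For every x ∈ dom g ∩ dom φ_X, every y⋆ ∈ dom h⋆ ∩ dom φ_{Y⋆}, and every integer k ≥ 0, the iterates of the accelerated nonlinear PDHG method for strongly convex problems satisfy the descent rule L(x_{k+1}, y⋆) − L(x, y_{k+1}⋆) ≤ Δ_k(x, y⋆) − Δ_{k+1}(x, y⋆)/θ_{k+1}. -/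
open Filter Topology

private def evalLM {Y : Type*} [NormedAddCommGroup Y] [NormedSpace ℝ Y] (y : Y) :
    (Y →L[ℝ] ℝ) →ₗ[ℝ] ℝ where
  toFun q := q y
  map_add' q r := rfl
  map_smul' c q := rfl

@[simp] private lemma evalLM_apply {Y : Type*} [NormedAddCommGroup Y] [NormedSpace ℝ Y]
    (y : Y) (q : Y →L[ℝ] ℝ) : evalLM y q = q y := rfl

private lemma convexOn_linear_add {E : Type*} [AddCommGroup E] [Module ℝ E]
    {S : Set E} (hS : Convex ℝ S) (ℓ : E →ₗ[ℝ] ℝ) (c : ℝ) :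
    ConvexOn ℝ S (fun z => ℓ z + c) := by
  refine ⟨hS, fun x _ y _ a b _ _ hab => le_of_eq ?_⟩
  simp only [map_add, map_smul, smul_eq_mul]
  linear_combination (-c) * hab

private lemma strong_min_aux {E : Type*} [NormedAddCommGroup E] [NormedSpace ℝ E]
    {S : Set E} {C φ F : E → ℝ} {μ : ℝ} (hμ : 0 < μ)
    (hC : ConvexOn ℝ S C)
    (hF : ∀ z, F z = C z + μ * φ z)
    {xs : E} (hxs : xs ∈ S)
    {d : E → ℝ}
    (hd : ∀ w : E, HasDerivAt (fun t : ℝ => φ (xs + t • w)) (d w) 0)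
    (hmin : ∀ z ∈ S, F xs ≤ F z)
    {x : E} (hx : x ∈ S) :
    F xs + μ * (φ x - φ xs - d (x - xs)) ≤ F x := by
  set w := x - xs with hw
  set ψ : ℝ → ℝ := fun t => φ xs + t * (φ x - φ xs) - φ (xs + t • w) with hψdef
  have hψ0 : ψ 0 = 0 := by simp [hψdef]
  have hder : HasDerivAt ψ (φ x - φ xs - d w) 0 := by
    have h1 : HasDerivAt (fun t : ℝ => φ xs + t * (φ x - φ xs)) (φ x - φ xs) 0 := by
      simpa using ((hasDerivAt_id (0:ℝ)).mul_const (φ x - φ xs)).const_add (φ xs)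
    exact h1.sub (hd w)
  have hslope : Tendsto (fun t : ℝ => ψ t / t) (𝓝[>] (0:ℝ)) (𝓝 (φ x - φ xs - d w)) := by
    have h := (hasDerivAt_iff_tendsto_slope.mp hder).mono_left
      (nhdsWithin_mono _ (fun t ht => (ne_of_gt ht)))
    refine h.congr (fun t => ?_)
    simp [slope_def_field, hψ0]
  have hbound : ∀ᶠ t in 𝓝[>] (0:ℝ), ψ t / t ≤ (F x - F xs) / μ := by
    filter_upwards [Ioc_mem_nhdsGT_of_mem (Set.mem_Ico.mpr ⟨le_refl (0:ℝ), zero_lt_one⟩)] with t ht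
    have ht0 : (0:ℝ) < t := ht.1
    have hxt : xs + t • w ∈ S := by
      have h := hC.1 hxs hx (sub_nonneg.mpr ht.2) ht0.le (by ring)
      have he : (1 - t) • xs + t • x = xs + t • w := by
        rw [hw]; simp [smul_sub, sub_smul, one_smul]; abel
      rwa [he] at h
    have hcv : C (xs + t • w) ≤ (1 - t) * C xs + t * C x := by
      have h := hC.2 hxs hx (sub_nonneg.mpr ht.2) ht0.le (by ring)
      have he : (1 - t) • xs + t • x = xs + t • w := by
        rw [hw]; simp [smul_sub, sub_smul, one_smul]; abel
      rw [he] at h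
      simpa [smul_eq_mul] using h
    have hm := hmin _ hxt
    rw [hF xs, hF (xs + t • w)] at hm
    have k1 : μ * ψ t ≤ (C (xs + t • w) - C xs) + t * μ * (φ x - φ xs) := by
      simp only [hψdef]; ring_nf; ring_nf at hm; linarith
    have k2 : C (xs + t • w) - C xs ≤ t * (C x - C xs) := by linarith
    have key : μ * ψ t ≤ t * (F x - F xs) := by
      rw [hF x, hF xs]; ring_nf; ring_nf at k1 k2; linarith
    rw [div_le_div_iff₀ ht0 hμ]
    linarith
  have hlim := le_of_tendsto hslope hbound
  have := (le_div_iff₀ hμ).mp hlim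
  linarith

private lemma rb_arith {NA c3 V U b4 a3 σk τk θk : ℝ}
    (hNA : 0 < NA) (hσ : 0 < σk) (hτ : 0 < τk) (hθ : 0 < θk) (hθ1 : θk ≤ 1)
    (hV : 0 ≤ V) (hU : 0 ≤ U)
    (hinv : NA ^ 2 * (σk * τk) = 1)
    (hc3 : c3 ≤ V * (NA * U))
    (hb4 : 1/2 * V ^ 2 ≤ b4) (ha3 : 1/2 * U ^ 2 ≤ a3) :
    θk * c3 ≤ (1/σk) * b4 + (1/τk) * a3 := by
  set s := Real.sqrt σk with hsdef
  set t := Real.sqrt τk with htdef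
  have hs2 : s ^ 2 = σk := Real.sq_sqrt hσ.le
  have ht2 : t ^ 2 = τk := Real.sq_sqrt hτ.le
  have hsp : 0 < s := Real.sqrt_pos.mpr hσ
  have htp : 0 < t := Real.sqrt_pos.mpr hτ
  have hAst : NA * (s * t) = 1 := by
    have h : (NA * (s * t)) ^ 2 = 1 := by rw [mul_pow, mul_pow, hs2, ht2]; exact hinv
    have hfac : (NA * (s * t) - 1) * (NA * (s * t) + 1) = 0 := by linear_combination h
    have hp : 0 < NA * (s * t) := mul_pos hNA (mul_pos hsp htp)
    rcases mul_eq_zero.mp hfac with h' | h' <;> linarith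
  have h0 : 0 ≤ V * (NA * U) := mul_nonneg hV (mul_nonneg hNA.le hU)
  have hθc3 : θk * c3 ≤ NA * (V * U) := by nlinarith [mul_le_mul_of_nonneg_left hc3 hθ.le]
  have hστ : 0 < σk * τk := mul_pos hσ hτ
  have e1 : σk * τk * (NA * (V * U)) = s * t * (V * U) := by
    rw [← hs2, ← ht2]; linear_combination (s * t * (V * U)) * hAst
  have e2 : s * t * (V * U) ≤ τk * b4 + σk * a3 := by
    rw [← hs2, ← ht2]
    nlinarith [mul_le_mul_of_nonneg_left hb4 (sq_nonneg t),
      mul_le_mul_of_nonneg_left ha3 (sq_nonneg s), sq_nonneg (t * V - s * U)]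
  have hP : σk * τk * (θk * c3) ≤ τk * b4 + σk * a3 := by
    calc σk * τk * (θk * c3) ≤ σk * τk * (NA * (V * U)) :=
          mul_le_mul_of_nonneg_left hθc3 hστ.le
      _ = s * t * (V * U) := e1
      _ ≤ τk * b4 + σk * a3 := e2
  have h2 : σk * τk * ((1/σk) * b4 + (1/τk) * a3) = τk * b4 + σk * a3 := by
    field_simp
  exact (mul_le_mul_iff_right₀ hστ).mp (by rw [h2]; exact hP)

private lemma hq_arith (θ1 τk σk γ a2 b2 b3 c2 : ℝ) (hθ : θ1 ≠ 0) (hτ : τk ≠ 0) (hσ : σk ≠ 0)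
    (hθsq : θ1 ^ 2 * (1 + γ * τk) = 1) :
    (1/(θ1 * τk) * a2 + 1/(σk/θ1) * b2 + 1/(σk/θ1) * b3 + θ1 * c2) / θ1
      = (γ + 1/τk) * a2 + (1/σk) * b2 + (1/σk) * b3 + c2 := by
  field_simp
  ring_nf
  linear_combination (-(a2 * σk)) * hθsq


theorem accsc_descent_rule
    {X Y : Type*} [NormedAddCommGroup X] [NormedSpace ℝ X] [CompleteSpace X]
    [NormedAddCommGroup Y] [NormedSpace ℝ Y] [CompleteSpace Y]
    (A : X →L[ℝ] Y)
    (φX : X → ℝ) (SX : Set X) (gX : X → (X →L[ℝ] ℝ))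
    (φY : (Y →L[ℝ] ℝ) → ℝ) (SY : Set (Y →L[ℝ] ℝ)) (gY : (Y →L[ℝ] ℝ) → Y)
    (hSXne : SX.Nonempty) (hφXconv : ConvexOn ℝ SX φX)
    (hφXlsc : LowerSemicontinuousOn φX SX)
    (hSYne : SY.Nonempty) (hφYconv : ConvexOn ℝ SY φY)
    (hφYlsc : LowerSemicontinuousOn φY SY)
    (hφXdiff : ∀ x ∈ interior SX, ∀ w : X,
      HasDerivAt (fun t : ℝ => φX (x + t • w)) (gX x w) 0)
    (hφYdiff : ∀ p ∈ interior SY, ∀ q : Y →L[ℝ] ℝ,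
      HasDerivAt (fun t : ℝ => φY (p + t • q)) (q (gY p)) 0)
    (DX : X → X → ℝ) (hDXdef : ∀ x x', DX x x' = φX x - φX x' - gX x' (x - x'))
    (DY : (Y →L[ℝ] ℝ) → (Y →L[ℝ] ℝ) → ℝ)
    (hDYdef : ∀ p q, DY p q = φY p - φY q - (p - q) (gY q))
    (hscX : ∀ x ∈ SX, ∀ x' ∈ interior SX, (1/2) * ‖x - x'‖ ^ 2 ≤ DX x x')
    (hscY : ∀ p ∈ SY, ∀ q ∈ interior SY, (1/2) * ‖p - q‖ ^ 2 ≤ DY p q)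
    (g : X → ℝ) (Sg : Set X) (hSgne : Sg.Nonempty)
    (hgconv : ConvexOn ℝ Sg g) (hglsc : LowerSemicontinuousOn g Sg)
    (hst : (Y →L[ℝ] ℝ) → ℝ) (Sh : Set (Y →L[ℝ] ℝ)) (hShne : Sh.Nonempty)
    (hhconv : ConvexOn ℝ Sh hst) (hhlsc : LowerSemicontinuousOn hst Sh)
    (L : X → (Y →L[ℝ] ℝ) → ℝ) (hLdef : ∀ x p, L x p = g x + p (A x) - hst p)
    (γg : ℝ) (hγg : 0 < γg)
    (hA6 : ConvexOn ℝ (Sg ∩ SX) (fun x => g x - γg * φX x))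
    (hAne : A ≠ 0)
    (θ τ σ : ℕ → ℝ) (hθ0 : 0 < θ 0 ∧ θ 0 ≤ 1) (hσ0 : 0 < σ 0)
    (hτ0 : τ 0 = 1 / (‖A‖ ^ 2 * σ 0))
    (hθrec : ∀ k : ℕ, θ (k+1) = 1 / Real.sqrt (1 + γg * τ k))
    (hτrec : ∀ k : ℕ, τ (k+1) = θ (k+1) * τ k)
    (hσrec : ∀ k : ℕ, σ (k+1) = σ k / θ (k+1))
    (u : ℕ → X) (v : ℕ → (Y →L[ℝ] ℝ))
    (hu : ∀ k, u k ∈ Sg ∩ interior SX)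
    (hv : ∀ k, v k ∈ Sh ∩ interior SY)
    (hstepx : ∀ k : ℕ, ∀ x ∈ Sg ∩ SX,
      g (u (k+1)) + (v k + θ k • (v k - v (k-1))) (A (u (k+1)))
          + (1/τ k) * DX (u (k+1)) (u k) ≤
        g x + (v k + θ k • (v k - v (k-1))) (A x) + (1/τ k) * DX x (u k))
    (hstepy : ∀ k : ℕ, ∀ p ∈ Sh ∩ SY,
      -hst p + p (A (u (k+1))) - (1/σ k) * DY p (v k) ≤
        -hst (v (k+1)) + (v (k+1)) (A (u (k+1))) - (1/σ k) * DY (v (k+1)) (v k))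
    (Δ : ℕ → X → (Y →L[ℝ] ℝ) → ℝ)
    (hΔdef : ∀ (k : ℕ) (x : X) (p : Y →L[ℝ] ℝ),
      Δ k x p = (1/τ k) * DX x (u k) + (1/σ k) * DY p (v k)
        + (1/σ k) * DY (v k) (v (k-1)) + θ k * ((v k - v (k-1)) (A (x - u k))))
    :
    ∀ x ∈ Sg ∩ SX, ∀ p ∈ Sh ∩ SY, ∀ k : ℕ,
      L (u (k+1)) p - L x (v (k+1)) ≤ Δ k x p - Δ (k+1) x p / θ (k+1) := by
  intro x hx p hp k
  -- basic positivity
  have hAn : (0:ℝ) < ‖A‖ := norm_pos_iff.mpr hAne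
  have hpos : ∀ k, 0 < τ k ∧ 0 < σ k ∧ 0 < θ k ∧ θ k ≤ 1 := by
    intro k
    induction k with
    | zero =>
      refine ⟨?_, hσ0, hθ0.1, hθ0.2⟩
      rw [hτ0]; positivity
    | succ n ih =>
      obtain ⟨hτn, hσn, hθn, _⟩ := ih
      have h1 : (0:ℝ) < 1 + γg * τ n := by nlinarith
      have hs : 0 < Real.sqrt (1 + γg * τ n) := Real.sqrt_pos.mpr h1
      have hs1 : 1 ≤ Real.sqrt (1 + γg * τ n) := by
        have h2 := Real.sqrt_le_sqrt (show (1:ℝ) ≤ 1 + γg * τ n by nlinarith)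
        rwa [Real.sqrt_one] at h2
      have hθp : 0 < θ (n+1) := by rw [hθrec]; positivity
      have hθ1 : θ (n+1) ≤ 1 := by rw [hθrec, div_le_one hs]; exact hs1
      exact ⟨by rw [hτrec]; exact mul_pos hθp hτn,
        by rw [hσrec]; exact div_pos hσn hθp, hθp, hθ1⟩
  have hinv : ∀ k, ‖A‖ ^ 2 * (σ k * τ k) = 1 := by
    intro k
    induction k with
    | zero => rw [hτ0]; field_simp
    | succ n ih =>
      have hθne : θ (n+1) ≠ 0 := (hpos (n+1)).2.2.1.ne'
      rw [hσrec, hτrec,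
        show σ n / θ (n+1) * (θ (n+1) * τ n) = σ n * τ n from by field_simp]
      exact ih
  obtain ⟨hτk, hσk, hθk, hθk1⟩ := hpos k
  obtain ⟨hτk1, hσk1, hθk1p, hθk11⟩ := hpos (k+1)
  have hθsqk : θ (k+1) ^ 2 * (1 + γg * τ k) = 1 := by
    have h1 : (0:ℝ) < 1 + γg * τ k := by nlinarith
    rw [hθrec, div_pow, one_pow, Real.sq_sqrt h1.le]
    field_simp
  have hSXc : Convex ℝ (Sg ∩ SX) := hgconv.1.inter hφXconv.1
  have hSYc : Convex ℝ (Sh ∩ SY) := hhconv.1.inter hφYconv.1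
  -- strengthened x-step inequality
  have Ix : g (u (k+1)) + (v k + θ k • (v k - v (k-1))) (A (u (k+1)))
      + (1/τ k) * DX (u (k+1)) (u k) + (γg + 1/τ k) * DX x (u (k+1)) ≤
      g x + (v k + θ k • (v k - v (k-1))) (A x) + (1/τ k) * DX x (u k) := by
    set yt : Y →L[ℝ] ℝ := v k + θ k • (v k - v (k-1)) with hyt
    set ℓx : X →ₗ[ℝ] ℝ :=
      ((yt.comp A : X →L[ℝ] ℝ) : X →ₗ[ℝ] ℝ) - (1/τ k) • ((gX (u k) : X →L[ℝ] ℝ) : X →ₗ[ℝ] ℝ)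
        with hℓx
    set cx : ℝ := -(1/τ k) * (φX (u k) - gX (u k) (u k)) with hcx
    have hμ : (0:ℝ) < γg + 1/τ k := by positivity
    have hC : ConvexOn ℝ (Sg ∩ SX) (fun z => (g z - γg * φX z) + (ℓx z + cx)) :=
      hA6.add (convexOn_linear_add hSXc ℓx cx)
    have hFeq : ∀ z, g z + yt (A z) + (1/τ k) * DX z (u k)
        = ((g z - γg * φX z) + (ℓx z + cx)) + (γg + 1/τ k) * φX z := by
      intro z
      simp only [hDXdef, hℓx, hcx, LinearMap.sub_apply, LinearMap.smul_apply,
        ContinuousLinearMap.coe_coe, ContinuousLinearMap.comp_apply, smul_eq_mul, map_sub]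
      ring
    have hxs : u (k+1) ∈ Sg ∩ SX := ⟨(hu (k+1)).1, interior_subset (hu (k+1)).2⟩
    have hres := strong_min_aux (F := fun z => g z + yt (A z) + (1/τ k) * DX z (u k))
      (d := fun w => gX (u (k+1)) w) hμ hC hFeq hxs
      (hφXdiff (u (k+1)) (hu (k+1)).2)
      (fun z hz => hstepx k z hz) hx
    rw [show φX x - φX (u (k+1)) - (gX (u (k+1))) (x - u (k+1)) = DX x (u (k+1)) from
      (hDXdef _ _).symm] at hres
    exact hres
  -- strengthened y-step inequality
  have Iy : hst (v (k+1)) - (v (k+1)) (A (u (k+1))) + (1/σ k) * DY (v (k+1)) (v k)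
      + (1/σ k) * DY p (v (k+1)) ≤
      hst p - p (A (u (k+1))) + (1/σ k) * DY p (v k) := by
    set ℓy : (Y →L[ℝ] ℝ) →ₗ[ℝ] ℝ :=
      -(evalLM (A (u (k+1)))) - (1/σ k) • evalLM (gY (v k)) with hℓy
    set cy : ℝ := -(1/σ k) * (φY (v k) - (v k) (gY (v k))) with hcy
    have hμ : (0:ℝ) < 1/σ k := by positivity
    have hC : ConvexOn ℝ (Sh ∩ SY) (fun q => hst q + (ℓy q + cy)) :=
      (hhconv.subset Set.inter_subset_left hSYc).add (convexOn_linear_add hSYc ℓy cy)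
    have hFeq : ∀ q, hst q - q (A (u (k+1))) + (1/σ k) * DY q (v k)
        = (hst q + (ℓy q + cy)) + (1/σ k) * φY q := by
      intro q
      simp only [hDYdef, hℓy, hcy, LinearMap.sub_apply, LinearMap.neg_apply,
        LinearMap.smul_apply, evalLM_apply, smul_eq_mul, ContinuousLinearMap.sub_apply]
      ring
    have hxs : v (k+1) ∈ Sh ∩ SY := ⟨(hv (k+1)).1, interior_subset (hv (k+1)).2⟩
    have hmin : ∀ q ∈ Sh ∩ SY,
        hst (v (k+1)) - (v (k+1)) (A (u (k+1))) + (1/σ k) * DY (v (k+1)) (v k) ≤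
        hst q - q (A (u (k+1))) + (1/σ k) * DY q (v k) := by
      intro q hq
      have h := hstepy k q hq
      linarith
    have hres := strong_min_aux
      (F := fun q => hst q - q (A (u (k+1))) + (1/σ k) * DY q (v k))
      (d := fun q => q (gY (v (k+1)))) hμ hC hFeq hxs
      (hφYdiff (v (k+1)) (hv (k+1)).2) hmin hp
    rw [show φY p - φY (v (k+1)) - (p - v (k+1)) (gY (v (k+1))) = DY p (v (k+1)) from
      (hDYdef _ _).symm] at hres
    exact hres
  -- remainder bound
  have RB : θ k * ((v k - v (k-1)) (A (u k - u (k+1)))) ≤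
      (1/σ k) * DY (v k) (v (k-1)) + (1/τ k) * DX (u (k+1)) (u k) := by
    have hb4 : 1/2 * ‖v k - v (k-1)‖ ^ 2 ≤ DY (v k) (v (k-1)) :=
      hscY (v k) (interior_subset (hv k).2) (v (k-1)) (hv (k-1)).2
    have ha3 : 1/2 * ‖u (k+1) - u k‖ ^ 2 ≤ DX (u (k+1)) (u k) :=
      hscX (u (k+1)) (interior_subset (hu (k+1)).2) (u k) (hu k).2
    have hc3 : (v k - v (k-1)) (A (u k - u (k+1))) ≤ ‖v k - v (k-1)‖ * (‖A‖ * ‖u (k+1) - u k‖) := by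
      have h1 := (v k - v (k-1)).le_opNorm (A (u k - u (k+1)))
      have h2 := A.le_opNorm (u k - u (k+1))
      have h3 : (v k - v (k-1)) (A (u k - u (k+1))) ≤ ‖(v k - v (k-1)) (A (u k - u (k+1)))‖ :=
        le_abs_self _
      have h4 : ‖u k - u (k+1)‖ = ‖u (k+1) - u k‖ := norm_sub_rev _ _
      rw [h4] at h2
      calc (v k - v (k-1)) (A (u k - u (k+1)))
          ≤ ‖(v k - v (k-1)) (A (u k - u (k+1)))‖ := h3
        _ ≤ ‖v k - v (k-1)‖ * ‖A (u k - u (k+1))‖ := h1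
        _ ≤ ‖v k - v (k-1)‖ * (‖A‖ * ‖u (k+1) - u k‖) :=
            mul_le_mul_of_nonneg_left h2 (norm_nonneg _)
    exact rb_arith hAn hσk hτk hθk hθk1 (norm_nonneg _) (norm_nonneg _) (hinv k) hc3 hb4 ha3
  -- the division identity
  have hq : Δ (k+1) x p / θ (k+1) = (γg + 1/τ k) * DX x (u (k+1))
      + (1/σ k) * DY p (v (k+1)) + (1/σ k) * DY (v (k+1)) (v k)
      + ((v (k+1) - v k) (A (x - u (k+1)))) := by
    rw [hΔdef]
    simp only [Nat.add_sub_cancel]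
    rw [hτrec, hσrec]
    exact hq_arith (θ (k+1)) (τ k) (σ k) γg _ _ _ _ hθk1p.ne' hτk.ne' hσk.ne' hθsqk
  -- final assembly
  rw [hLdef, hLdef, hΔdef, hq]
  simp only [ContinuousLinearMap.sub_apply, ContinuousLinearMap.add_apply,
    ContinuousLinearMap.smul_apply, map_sub, smul_eq_mul] at Ix RB ⊢
  linarith [Ix, Iy, RB]
end

section
/- Let (x_s, y_s⋆) ∈ (dom g ∩ dom φ_X) × (dom h⋆ ∩ dom φ_{Y⋆}) be a saddle point of L. Then for every K ≥ 1, the iterates of the accelerated nonlinear PDHG method for strongly convex problems satisfy (γ_g/(1 + γ_g τ_0))·D_X(x_s, x_K) + (1/σ_K)·D_Y(y_s⋆, y_K⋆) ≤ Δ_K(x_s, y_s⋆) ≤ (σ_0/σ_K)·Δ_0(x_s, y_s⋆). -/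
/-!
Each Bregman proximal half-step satisfies a three-point inequality: if `F - c φ` is convex and
`F` is minimised at `w`, then `F w + c D(x, w) ≤ F x`. Comparing both half-steps with the
saddle point and adding the two saddle inequalities, everything cancels except Bregman distances
and the extrapolation pairing `θ_k ⟨y_k - y_{k-1}, A (x_k - x_{k+1})⟩`, which Young's inequality
absorbs thanks to the 1-strong convexity of `φ_X`, `φ_{Y⋆}` and `τ_k σ_k ‖A‖² = 1`. The step
sizes satisfy `σ_{k+1} / τ_{k+1} = σ_k (γ + 1 / τ_k)` and `σ_{k+1} θ_{k+1} = σ_k`, which turns the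
one-step estimate into `σ_{k+1} Δ_{k+1} ≤ σ_k Δ_k`. The lower bound on `Δ_K` is Young's
inequality once more, now with the room left by `θ_K (1 + γ τ_0) ≥ 1`, true because `τ` decreases.
-/

open Filter Topology

theorem IsMinOn.add_mul_bregman_le {E : Type*} [AddCommGroup E] [Module ℝ E] {S : Set E}
    {F φ : E → ℝ} {c d : ℝ} {w x : E} (hmin : IsMinOn F S w)
    (hconv : ConvexOn ℝ S fun y => F y - c * φ y) (hw : w ∈ S) (hx : x ∈ S)
    (hd : HasDerivAt (fun t : ℝ => φ (w + t • (x - w))) d 0) :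
    F w + c * (φ x - φ w - d) ≤ F x := by
  set ψ : ℝ → ℝ := fun t => φ (w + t • (x - w))
  have hslope : ∀ᶠ t in 𝓝[>] (0 : ℝ),
      -c * slope ψ 0 t ≤ (F x - c * φ x) - (F w - c * φ w) := by
    filter_upwards [Ioc_mem_nhdsGT (zero_lt_one' ℝ)] with t ⟨ht0, ht1⟩
    have hwt : w + t • (x - w) = (1 - t) • w + t • x := by module
    have hG := hconv.2 hw hx (sub_nonneg.2 ht1) ht0.le (sub_add_cancel 1 t)
    have hF := isMinOn_iff.1 hmin _ (hconv.1 hw hx (sub_nonneg.2 ht1) ht0.le (sub_add_cancel 1 t))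
    simp only [smul_eq_mul] at hG
    rw [slope_def_field, sub_zero, mul_div_assoc', div_le_iff₀ ht0]
    simp only [ψ, zero_smul, add_zero, hwt]
    nlinarith
  have hlim : Tendsto (fun t => -c * slope ψ 0 t) (𝓝[>] 0) (𝓝 (-c * d)) :=
    ((hasDerivAt_iff_tendsto_slope.1 hd).mono_left
      (nhdsWithin_mono _ fun t ht => ne_of_gt ht)).const_mul _
  linarith [le_of_tendsto hlim hslope]

theorem mul_mul_le_of_sq_le_mul {M c₁ c₂ a b : ℝ} (hc₂ : 0 < c₂) (hM : M ^ 2 ≤ c₁ * c₂) :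
    M * (a * b) ≤ c₁ * (a ^ 2 / 2) + c₂ * (b ^ 2 / 2) := by
  -- `2 c₂ (c₁ a² / 2 + c₂ b² / 2 - M a b) = (c₂ b - M a)² + (c₁ c₂ - M²) a²`
  have : 0 ≤ c₂ * (c₁ * (a ^ 2 / 2) + c₂ * (b ^ 2 / 2) - M * (a * b)) := by
    nlinarith [sq_nonneg (c₂ * b - M * a), mul_nonneg (sub_nonneg.2 hM) (sq_nonneg a)]
  nlinarith [(mul_nonneg_iff_of_pos_left hc₂).1 this]

theorem ConvexOn.add_linear_add_bregman_sub {E : Type*} [AddCommGroup E] [Module ℝ E]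
    {S : Set E} {f φ : E → ℝ} {D : E → E → ℝ} (ℓ ℓ₀ : E →ₗ[ℝ] ℝ) {γ c : ℝ} {w : E}
    (hf : ConvexOn ℝ S fun y => f y - γ * φ y)
    (hD : ∀ y, D y w = φ y - φ w - ℓ₀ (y - w)) :
    ConvexOn ℝ S fun y => f y + ℓ y + c * D y w - (γ + c) * φ y := by
  refine ((hf.add ((ℓ - c • ℓ₀).convexOn hf.1)).add_const (c * (ℓ₀ w - φ w))).congr ?_
  intro y _
  simp only [Pi.add_apply, LinearMap.sub_apply, LinearMap.smul_apply, smul_eq_mul, hD, map_sub]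
  ring

theorem pairing_le_of_sq_le_mul {X Y : Type*} [NormedAddCommGroup X] [NormedSpace ℝ X]
    [NormedAddCommGroup Y] [NormedSpace ℝ Y] (A : X →L[ℝ] Y) (q : Y →L[ℝ] ℝ) (x : X)
    {θ c₁ c₂ dx dy : ℝ} (hθ : 0 ≤ θ) (hc₂ : 0 < c₂) (hM : (θ * ‖A‖) ^ 2 ≤ c₁ * c₂)
    (hdx : 1 / 2 * ‖x‖ ^ 2 ≤ dx) (hdy : 1 / 2 * ‖q‖ ^ 2 ≤ dy) :
    θ * q (A x) ≤ c₁ * dx + c₂ * dy := by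
  have hc₁ : 0 ≤ c₁ := nonneg_of_mul_nonneg_left ((sq_nonneg _).trans hM) hc₂
  have hq : q (A x) ≤ ‖A‖ * (‖x‖ * ‖q‖) :=
    calc q (A x) ≤ ‖q‖ * ‖A x‖ := (le_abs_self _).trans (q.le_opNorm _)
      _ ≤ ‖q‖ * (‖A‖ * ‖x‖) := by gcongr; exact A.le_opNorm x
      _ = _ := by ring
  calc θ * q (A x) ≤ θ * ‖A‖ * (‖x‖ * ‖q‖) := by
        rw [mul_assoc]; exact mul_le_mul_of_nonneg_left hq hθ
    _ ≤ c₁ * (‖x‖ ^ 2 / 2) + c₂ * (‖q‖ ^ 2 / 2) := mul_mul_le_of_sq_le_mul hc₂ hM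
    _ ≤ c₁ * dx + c₂ * dy := by gcongr <;> linarith

/-- The step sizes of the accelerated method; `a` stands for `‖A‖`. -/
structure AccelSchedule (γ a : ℝ) (θ τ σ : ℕ → ℝ) : Prop where
  γ_pos : 0 < γ
  a_pos : 0 < a
  θ_zero_pos : 0 < θ 0
  θ_zero_le_one : θ 0 ≤ 1
  σ_zero_pos : 0 < σ 0
  τ_zero : τ 0 = 1 / (a ^ 2 * σ 0)
  θ_succ : ∀ k, θ (k + 1) = 1 / √(1 + γ * τ k)
  τ_succ : ∀ k, τ (k + 1) = θ (k + 1) * τ k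
  σ_succ : ∀ k, σ (k + 1) = σ k / θ (k + 1)

namespace AccelSchedule

variable {γ a : ℝ} {θ τ σ : ℕ → ℝ}

theorem tau_pos (h : AccelSchedule γ a θ τ σ) (k : ℕ) : 0 < τ k := by
  have := h.γ_pos
  induction k with
  | zero => rw [h.τ_zero]; have := h.a_pos; have := h.σ_zero_pos; positivity
  | succ k ih => rw [h.τ_succ, h.θ_succ]; positivity

theorem theta_succ_sq (h : AccelSchedule γ a θ τ σ) (k : ℕ) :
    θ (k + 1) ^ 2 * (1 + γ * τ k) = 1 := by
  have : 0 < 1 + γ * τ k := by have := h.γ_pos; have := h.tau_pos k; positivity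
  rw [h.θ_succ, div_pow, one_pow, Real.sq_sqrt this.le, one_div_mul_cancel this.ne']

theorem theta_pos (h : AccelSchedule γ a θ τ σ) : ∀ k, 0 < θ k
  | 0 => h.θ_zero_pos
  | k + 1 => by have := h.γ_pos; have := h.tau_pos k; rw [h.θ_succ]; positivity

theorem theta_le_one (h : AccelSchedule γ a θ τ σ) : ∀ k, θ k ≤ 1
  | 0 => h.θ_zero_le_one
  | k + 1 => by
    have := h.theta_succ_sq k
    have := h.theta_pos (k + 1)
    have := mul_pos h.γ_pos (h.tau_pos k)
    nlinarith

theorem sigma_pos (h : AccelSchedule γ a θ τ σ) : ∀ k, 0 < σ k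
  | 0 => h.σ_zero_pos
  | k + 1 => by rw [h.σ_succ]; exact div_pos (h.sigma_pos k) (h.theta_pos (k + 1))

theorem tau_mul_sigma (h : AccelSchedule γ a θ τ σ) : ∀ k, τ k * σ k * a ^ 2 = 1
  | 0 => by rw [h.τ_zero]; have := h.a_pos; have := h.σ_zero_pos; field_simp
  | k + 1 => by
    have := h.theta_pos (k + 1)
    rw [h.τ_succ, h.σ_succ, ← h.tau_mul_sigma k]
    field_simp

theorem tau_antitone (h : AccelSchedule γ a θ τ σ) : Antitone τ :=
  antitone_nat_of_succ_le fun k => by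
    rw [h.τ_succ]
    exact mul_le_of_le_one_left (h.tau_pos k).le (h.theta_le_one (k + 1))

theorem sigma_succ_mul (h : AccelSchedule γ a θ τ σ) (k : ℕ) (dx dy dy' c : ℝ) :
    σ (k + 1) * (1 / τ (k + 1) * dx + 1 / σ (k + 1) * dy + 1 / σ (k + 1) * dy'
      + θ (k + 1) * c) =
    σ k * ((γ + 1 / τ k) * dx + 1 / σ k * dy + 1 / σ k * dy' + c) := by
  have := h.theta_pos (k + 1)
  have := h.tau_pos k
  have := h.sigma_pos k
  have hθ := h.theta_succ_sq k
  rw [h.σ_succ, h.τ_succ]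
  field_simp
  linear_combination (-(σ k * dx)) * hθ

theorem sq_theta_mul_le (h : AccelSchedule γ a θ τ σ) (k : ℕ) :
    (θ (k + 1) * a) ^ 2 ≤ (1 / τ (k + 1) - γ / (1 + γ * τ 0)) * (1 / σ (k + 1)) := by
  have hγ := h.γ_pos
  have hs := h.theta_pos (k + 1)
  have hT := h.tau_pos k
  have hT0 := h.tau_pos 0
  have hsq := h.theta_succ_sq k
  have hP : 0 < 1 + γ * τ 0 := by positivity
  have hTle : τ k ≤ τ 0 := h.tau_antitone (Nat.zero_le k)
  have hsP : 1 ≤ θ (k + 1) * (1 + γ * τ 0) := by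
    have hP2 : 1 + γ * τ k ≤ (1 + γ * τ 0) ^ 2 := by
      nlinarith [mul_le_mul_of_nonneg_left hTle hγ.le, mul_pos hγ hT0]
    have : 1 ≤ (θ (k + 1) * (1 + γ * τ 0)) ^ 2 := by
      calc 1 = θ (k + 1) ^ 2 * (1 + γ * τ k) := hsq.symm
        _ ≤ θ (k + 1) ^ 2 * (1 + γ * τ 0) ^ 2 := by gcongr
        _ = _ := by ring
    simpa [abs_of_pos (mul_pos hs hP)] using (one_le_sq_iff_one_le_abs _).1 this
  have hkey : θ (k + 1) ^ 2 ≤ 1 - γ * τ (k + 1) / (1 + γ * τ 0) := by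
    rw [h.τ_succ, le_sub_iff_add_le, ← le_sub_iff_add_le', div_le_iff₀ hP]
    nlinarith [mul_nonneg (mul_pos (mul_pos hγ hT) hs).le (sub_nonneg.2 hsP)]
  have hσ : 1 / σ (k + 1) = τ (k + 1) * a ^ 2 := by
    have := h.sigma_pos (k + 1)
    field_simp
    linear_combination -h.tau_mul_sigma (k + 1)
  have hτ' := h.tau_pos (k + 1)
  calc (θ (k + 1) * a) ^ 2 ≤ a ^ 2 * (1 - γ * τ (k + 1) / (1 + γ * τ 0)) := by
        rw [mul_pow, mul_comm]; exact mul_le_mul_of_nonneg_left hkey (sq_nonneg a)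
    _ = _ := by rw [hσ]; field_simp

end AccelSchedule

theorem pdhg_step_le {X Y : Type*} [NormedAddCommGroup X] [NormedSpace ℝ X]
    [NormedAddCommGroup Y] [NormedSpace ℝ Y] (A : X →L[ℝ] Y)
    {φX : X → ℝ} {gX : X → X →L[ℝ] ℝ} {φY : (Y →L[ℝ] ℝ) → ℝ} {gY : (Y →L[ℝ] ℝ) → Y}
    {DX : X → X → ℝ} {DY : (Y →L[ℝ] ℝ) → (Y →L[ℝ] ℝ) → ℝ}
    (hDX : ∀ x x', DX x x' = φX x - φX x' - gX x' (x - x'))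
    (hDY : ∀ p q, DY p q = φY p - φY q - (p - q) (gY q))
    {g : X → ℝ} {hst : (Y →L[ℝ] ℝ) → ℝ} {L : X → (Y →L[ℝ] ℝ) → ℝ}
    (hL : ∀ x p, L x p = g x + p (A x) - hst p)
    {SX : Set X} {SY : Set (Y →L[ℝ] ℝ)} {γ θ τ σ : ℝ}
    (hg : ConvexOn ℝ SX fun x => g x - γ * φX x) (hh : ConvexOn ℝ SY hst)
    (hθ : 0 ≤ θ) (hθ1 : θ ≤ 1) (hτ : 0 < τ) (hσ : 0 < σ) (hτσ : τ * σ * ‖A‖ ^ 2 = 1)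
    {x x' xs : X} {p₀ p p' ys : Y →L[ℝ] ℝ}
    (hx' : x' ∈ SX) (hxs : xs ∈ SX) (hp' : p' ∈ SY) (hys : ys ∈ SY)
    (hdX : HasDerivAt (fun t : ℝ => φX (x' + t • (xs - x'))) (gX x' (xs - x')) 0)
    (hdY : HasDerivAt (fun t : ℝ => φY (p' + t • (ys - p'))) ((ys - p') (gY p')) 0)
    (hscX : 1 / 2 * ‖x' - x‖ ^ 2 ≤ DX x' x) (hscY : 1 / 2 * ‖p - p₀‖ ^ 2 ≤ DY p p₀)
    (hminX : IsMinOn (fun y => g y + (p + θ • (p - p₀)) (A y) + 1 / τ * DX y x) SX x')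
    (hminY : IsMinOn (fun q => hst q - q (A x') + 1 / σ * DY q p) SY p')
    (hsad₁ : L xs p' ≤ L xs ys) (hsad₂ : L xs ys ≤ L x' ys) :
    (γ + 1 / τ) * DX xs x' + 1 / σ * DY ys p' + 1 / σ * DY p' p + (p' - p) (A (xs - x')) ≤
      1 / τ * DX xs x + 1 / σ * DY ys p + 1 / σ * DY p p₀ + θ * (p - p₀) (A (xs - x)) := by
  have hx := hminX.add_mul_bregman_le
    (hg.add_linear_add_bregman_sub ((p + θ • (p - p₀)).comp A).toLinearMap (gX x).toLinearMap
      (hDX · x)) hx' hxs hdX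
  -- the dual half-step is the case `γ = 0`, with linear part `q ↦ -q (A x')`
  have hy := hminY.add_mul_bregman_le (c := 1 / σ)
    (((show ConvexOn ℝ SY fun q => hst q - 0 * φY q by simpa using hh).add_linear_add_bregman_sub
      (c := 1 / σ)
      (-(ContinuousLinearMap.apply ℝ ℝ (A x')).toLinearMap)
      (ContinuousLinearMap.apply ℝ ℝ (gY p)).toLinearMap (hDY · p)).congr fun q _ => by
        simp [sub_eq_add_neg]) hp' hys hdY
  rw [← hDX] at hx
  rw [← hDY] at hy
  have hM : (θ * ‖A‖) ^ 2 ≤ 1 / τ * (1 / σ) := by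
    rw [div_mul_div_comm, one_mul, le_div_iff₀ (by positivity)]
    calc (θ * ‖A‖) ^ 2 * (τ * σ) = θ ^ 2 * (τ * σ * ‖A‖ ^ 2) := by ring
      _ ≤ 1 := by rw [hτσ, mul_one]; exact pow_le_one₀ hθ hθ1
  rw [norm_sub_rev] at hscX
  have hcross := pairing_le_of_sq_le_mul A (p - p₀) (x - x') hθ (one_div_pos.2 hσ) hM hscX hscY
  rw [hL, hL] at hsad₁ hsad₂
  simp only [map_sub, add_apply, sub_apply, smul_apply, smul_eq_mul] at hx hy hcross hsad₁ hsad₂ ⊢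
  linarith

theorem accsc_global_bound_general
    {X Y : Type*} [NormedAddCommGroup X] [NormedSpace ℝ X]
    [NormedAddCommGroup Y] [NormedSpace ℝ Y]
    (A : X →L[ℝ] Y)
    (φX : X → ℝ) (SX : Set X) (gX : X → (X →L[ℝ] ℝ))
    (φY : (Y →L[ℝ] ℝ) → ℝ) (SY : Set (Y →L[ℝ] ℝ)) (gY : (Y →L[ℝ] ℝ) → Y)
    (hφYconv : ConvexOn ℝ SY φY)
    (hφXdiff : ∀ x ∈ interior SX, ∀ w : X,
      HasDerivAt (fun t : ℝ => φX (x + t • w)) (gX x w) 0)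
    (hφYdiff : ∀ p ∈ interior SY, ∀ q : Y →L[ℝ] ℝ,
      HasDerivAt (fun t : ℝ => φY (p + t • q)) (q (gY p)) 0)
    (DX : X → X → ℝ) (hDXdef : ∀ x x', DX x x' = φX x - φX x' - gX x' (x - x'))
    (DY : (Y →L[ℝ] ℝ) → (Y →L[ℝ] ℝ) → ℝ)
    (hDYdef : ∀ p q, DY p q = φY p - φY q - (p - q) (gY q))
    (hscX : ∀ x ∈ SX, ∀ x' ∈ interior SX, (1/2) * ‖x - x'‖ ^ 2 ≤ DX x x')
    (hscY : ∀ p ∈ SY, ∀ q ∈ interior SY, (1/2) * ‖p - q‖ ^ 2 ≤ DY p q)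
    (g : X → ℝ) (Sg : Set X)
    (hst : (Y →L[ℝ] ℝ) → ℝ) (Sh : Set (Y →L[ℝ] ℝ))
    (hhconv : ConvexOn ℝ Sh hst)
    (L : X → (Y →L[ℝ] ℝ) → ℝ) (hLdef : ∀ x p, L x p = g x + p (A x) - hst p)
    (γg : ℝ) (hγg : 0 < γg)
    (hA6 : ConvexOn ℝ (Sg ∩ SX) (fun x => g x - γg * φX x))
    (hAne : A ≠ 0)
    (θ τ σ : ℕ → ℝ) (hθ0 : 0 < θ 0 ∧ θ 0 ≤ 1) (hσ0 : 0 < σ 0)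
    (hτ0 : τ 0 = 1 / (‖A‖ ^ 2 * σ 0))
    (hθrec : ∀ k : ℕ, θ (k+1) = 1 / Real.sqrt (1 + γg * τ k))
    (hτrec : ∀ k : ℕ, τ (k+1) = θ (k+1) * τ k)
    (hσrec : ∀ k : ℕ, σ (k+1) = σ k / θ (k+1))
    (u : ℕ → X) (v : ℕ → (Y →L[ℝ] ℝ))
    (hu : ∀ k, u k ∈ Sg ∩ interior SX)
    (hv : ∀ k, v k ∈ Sh ∩ interior SY)
    (hstepx : ∀ k : ℕ, ∀ x ∈ Sg ∩ SX,
      g (u (k+1)) + (v k + θ k • (v k - v (k-1))) (A (u (k+1)))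
          + (1/τ k) * DX (u (k+1)) (u k) ≤
        g x + (v k + θ k • (v k - v (k-1))) (A x) + (1/τ k) * DX x (u k))
    (hstepy : ∀ k : ℕ, ∀ p ∈ Sh ∩ SY,
      -hst p + p (A (u (k+1))) - (1/σ k) * DY p (v k) ≤
        -hst (v (k+1)) + (v (k+1)) (A (u (k+1))) - (1/σ k) * DY (v (k+1)) (v k))
    (Δ : ℕ → X → (Y →L[ℝ] ℝ) → ℝ)
    (hΔdef : ∀ (k : ℕ) (x : X) (p : Y →L[ℝ] ℝ),
      Δ k x p = (1/τ k) * DX x (u k) + (1/σ k) * DY p (v k)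
        + (1/σ k) * DY (v k) (v (k-1)) + θ k * ((v k - v (k-1)) (A (x - u k))))
    (xs : X) (ys : Y →L[ℝ] ℝ) (hxs : xs ∈ Sg ∩ SX) (hys : ys ∈ Sh ∩ SY)
    (hsaddle1 : ∀ p ∈ Sh, L xs p ≤ L xs ys)
    (hsaddle2 : ∀ x ∈ Sg, L xs ys ≤ L x ys)
    :
    ∀ K : ℕ, 1 ≤ K →
      (γg / (1 + γg * τ 0)) * DX xs (u K) + (1/σ K) * DY ys (v K) ≤ Δ K xs ys ∧
      Δ K xs ys ≤ (σ 0 / σ K) * Δ 0 xs ys := by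
  intro K hK
  have hs : AccelSchedule γg ‖A‖ θ τ σ :=
    ⟨hγg, norm_pos_iff.2 hAne, hθ0.1, hθ0.2, hσ0, hτ0, hθrec, hτrec, hσrec⟩
  have hh : ConvexOn ℝ (Sh ∩ SY) hst :=
    hhconv.subset Set.inter_subset_left (hhconv.1.inter hφYconv.1)
  have hstep : ∀ k, σ (k + 1) * Δ (k + 1) xs ys ≤ σ k * Δ k xs ys := fun k => by
    rw [hΔdef, hΔdef, Nat.add_sub_cancel, hs.sigma_succ_mul]
    refine mul_le_mul_of_nonneg_left ?_ (hs.sigma_pos k).le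
    exact pdhg_step_le A hDXdef hDYdef hLdef hA6 hh (hs.theta_pos k).le (hs.theta_le_one k)
      (hs.tau_pos k) (hs.sigma_pos k) (hs.tau_mul_sigma k)
      ⟨(hu (k + 1)).1, interior_subset (hu (k + 1)).2⟩ hxs
      ⟨(hv (k + 1)).1, interior_subset (hv (k + 1)).2⟩ hys
      (hφXdiff _ (hu (k + 1)).2 _) (hφYdiff _ (hv (k + 1)).2 _)
      (hscX _ (interior_subset (hu (k + 1)).2) _ (hu k).2)
      (hscY _ (interior_subset (hv k).2) _ (hv (k - 1)).2)
      (hstepx k) (isMinOn_iff.2 fun p hp => by linarith [hstepy k p hp])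
      (hsaddle1 _ (hv (k + 1)).1) (hsaddle2 _ (hu (k + 1)).1)
  obtain ⟨m, rfl⟩ := Nat.exists_eq_add_of_le' hK
  refine ⟨?_, ?_⟩
  · have hDX := hscX xs hxs.2 _ (hu (m + 1)).2
    rw [norm_sub_rev] at hDX
    have hcross := pairing_le_of_sq_le_mul A (v (m + 1) - v m) (u (m + 1) - xs)
      (hs.theta_pos _).le (one_div_pos.2 (hs.sigma_pos _)) (hs.sq_theta_mul_le m) hDX
      (hscY _ (interior_subset (hv _).2) _ (hv m).2)
    rw [hΔdef, Nat.add_sub_cancel]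
    simp only [map_sub] at hcross ⊢
    linarith
  · have := antitone_nat_of_succ_le (f := fun k => σ k * Δ k xs ys) hstep (Nat.zero_le (m + 1))
    rw [div_mul_eq_mul_div, le_div_iff₀ (hs.sigma_pos _)]
    linarith

theorem accsc_global_bound
    {X Y : Type*} [NormedAddCommGroup X] [NormedSpace ℝ X] [CompleteSpace X]
    [NormedAddCommGroup Y] [NormedSpace ℝ Y] [CompleteSpace Y]
    (A : X →L[ℝ] Y)
    (φX : X → ℝ) (SX : Set X) (gX : X → (X →L[ℝ] ℝ))
    (φY : (Y →L[ℝ] ℝ) → ℝ) (SY : Set (Y →L[ℝ] ℝ)) (gY : (Y →L[ℝ] ℝ) → Y)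
    (hSXne : SX.Nonempty) (hφXconv : ConvexOn ℝ SX φX)
    (hφXlsc : LowerSemicontinuousOn φX SX)
    (hSYne : SY.Nonempty) (hφYconv : ConvexOn ℝ SY φY)
    (hφYlsc : LowerSemicontinuousOn φY SY)
    (hφXdiff : ∀ x ∈ interior SX, ∀ w : X,
      HasDerivAt (fun t : ℝ => φX (x + t • w)) (gX x w) 0)
    (hφYdiff : ∀ p ∈ interior SY, ∀ q : Y →L[ℝ] ℝ,
      HasDerivAt (fun t : ℝ => φY (p + t • q)) (q (gY p)) 0)
    (DX : X → X → ℝ) (hDXdef : ∀ x x', DX x x' = φX x - φX x' - gX x' (x - x'))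
    (DY : (Y →L[ℝ] ℝ) → (Y →L[ℝ] ℝ) → ℝ)
    (hDYdef : ∀ p q, DY p q = φY p - φY q - (p - q) (gY q))
    (hscX : ∀ x ∈ SX, ∀ x' ∈ interior SX, (1/2) * ‖x - x'‖ ^ 2 ≤ DX x x')
    (hscY : ∀ p ∈ SY, ∀ q ∈ interior SY, (1/2) * ‖p - q‖ ^ 2 ≤ DY p q)
    (g : X → ℝ) (Sg : Set X) (hSgne : Sg.Nonempty)
    (hgconv : ConvexOn ℝ Sg g) (hglsc : LowerSemicontinuousOn g Sg)
    (hst : (Y →L[ℝ] ℝ) → ℝ) (Sh : Set (Y →L[ℝ] ℝ)) (hShne : Sh.Nonempty)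
    (hhconv : ConvexOn ℝ Sh hst) (hhlsc : LowerSemicontinuousOn hst Sh)
    (L : X → (Y →L[ℝ] ℝ) → ℝ) (hLdef : ∀ x p, L x p = g x + p (A x) - hst p)
    (γg : ℝ) (hγg : 0 < γg)
    (hA6 : ConvexOn ℝ (Sg ∩ SX) (fun x => g x - γg * φX x))
    (hAne : A ≠ 0)
    (θ τ σ : ℕ → ℝ) (hθ0 : 0 < θ 0 ∧ θ 0 ≤ 1) (hσ0 : 0 < σ 0)
    (hτ0 : τ 0 = 1 / (‖A‖ ^ 2 * σ 0))
    (hθrec : ∀ k : ℕ, θ (k+1) = 1 / Real.sqrt (1 + γg * τ k))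
    (hτrec : ∀ k : ℕ, τ (k+1) = θ (k+1) * τ k)
    (hσrec : ∀ k : ℕ, σ (k+1) = σ k / θ (k+1))
    (u : ℕ → X) (v : ℕ → (Y →L[ℝ] ℝ))
    (hu : ∀ k, u k ∈ Sg ∩ interior SX)
    (hv : ∀ k, v k ∈ Sh ∩ interior SY)
    (hstepx : ∀ k : ℕ, ∀ x ∈ Sg ∩ SX,
      g (u (k+1)) + (v k + θ k • (v k - v (k-1))) (A (u (k+1)))
          + (1/τ k) * DX (u (k+1)) (u k) ≤
        g x + (v k + θ k • (v k - v (k-1))) (A x) + (1/τ k) * DX x (u k))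
    (hstepy : ∀ k : ℕ, ∀ p ∈ Sh ∩ SY,
      -hst p + p (A (u (k+1))) - (1/σ k) * DY p (v k) ≤
        -hst (v (k+1)) + (v (k+1)) (A (u (k+1))) - (1/σ k) * DY (v (k+1)) (v k))
    (Δ : ℕ → X → (Y →L[ℝ] ℝ) → ℝ)
    (hΔdef : ∀ (k : ℕ) (x : X) (p : Y →L[ℝ] ℝ),
      Δ k x p = (1/τ k) * DX x (u k) + (1/σ k) * DY p (v k)
        + (1/σ k) * DY (v k) (v (k-1)) + θ k * ((v k - v (k-1)) (A (x - u k))))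
    (xs : X) (ys : Y →L[ℝ] ℝ) (hxs : xs ∈ Sg ∩ SX) (hys : ys ∈ Sh ∩ SY)
    (hsaddle1 : ∀ p ∈ Sh, L xs p ≤ L xs ys)
    (hsaddle2 : ∀ x ∈ Sg, L xs ys ≤ L x ys)
    :
    ∀ K : ℕ, 1 ≤ K →
      (γg / (1 + γg * τ 0)) * DX xs (u K) + (1/σ K) * DY ys (v K) ≤ Δ K xs ys ∧
      Δ K xs ys ≤ (σ 0 / σ K) * Δ 0 xs ys :=
  accsc_global_bound_general A φX SX gX φY SY gY hφYconv hφXdiff hφYdiff DX hDXdef DY hDYdef hscX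
    hscY g Sg hst Sh hhconv L hLdef γg hγg hA6 hAne θ τ σ hθ0 hσ0 hτ0 hθrec hτrec hσrec u v hu hv
    hstepx hstepy Δ hΔdef xs ys hxs hys hsaddle1 hsaddle2
end

section
/- Let L > 0, γ > 0, σ_0 > 0, θ_0 ∈ (0,1], set τ_0 = 1/(L²σ_0), and define real sequences for k ≥ 0 by θ_{k+1} = 1/√(1 + γ τ_k), τ_{k+1} = θ_{k+1}·τ_k, σ_{k+1} = σ_k/θ_{k+1}. Then for every K ≥ 1, the average quantity T_K = Σ_{k=1}^{K} σ_{k−1}/σ_0 satisfies T_K = L²·(σ_K² − σ_0²)/(γ·σ_0). -/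
open Filter Topology

theorem accsc_T_formula (L γ : ℝ) (hL : 0 < L) (hγ : 0 < γ)
    (θ τ σ : ℕ → ℝ) (hθ0 : 0 < θ 0 ∧ θ 0 ≤ 1) (hσ0 : 0 < σ 0)
    (hτ0 : τ 0 = 1 / (L ^ 2 * σ 0))
    (hθrec : ∀ k : ℕ, θ (k+1) = 1 / Real.sqrt (1 + γ * τ k))
    (hτrec : ∀ k : ℕ, τ (k+1) = θ (k+1) * τ k)
    (hσrec : ∀ k : ℕ, σ (k+1) = σ k / θ (k+1))
    (T : ℕ → ℝ) (hT : ∀ K : ℕ, T K = ∑ k ∈ Finset.Icc 1 K, σ (k-1) / σ 0) :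
    ∀ K : ℕ, 1 ≤ K → T K = L ^ 2 * ((σ K) ^ 2 - (σ 0) ^ 2) / (γ * σ 0) := by
  have hL2 : (0:ℝ) < L ^ 2 := by positivity
  -- invariant: τ k > 0, σ k > 0, τ k * σ k = 1 / L^2
  have key : ∀ k : ℕ, 0 < τ k ∧ 0 < σ k ∧ τ k * σ k = 1 / L ^ 2 := by
    intro k
    induction k with
    | zero =>
      refine ⟨by rw [hτ0]; positivity, hσ0, ?_⟩
      rw [hτ0]; field_simp
    | succ n ih =>
      obtain ⟨hτ, hσ, hprod⟩ := ih
      have h1 : (0:ℝ) < 1 + γ * τ n := by positivity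
      have hsqrt : 0 < Real.sqrt (1 + γ * τ n) := Real.sqrt_pos.mpr h1
      have hθ : 0 < θ (n+1) := by rw [hθrec n]; positivity
      refine ⟨by rw [hτrec n]; positivity, by rw [hσrec n]; positivity, ?_⟩
      have heq : θ (n+1) * τ n * (σ n / θ (n+1)) = τ n * σ n := by
        field_simp
      rw [hτrec n, hσrec n, heq, hprod]
  -- step identity
  have hstep : ∀ k : ℕ, σ (k+1) ^ 2 = σ k ^ 2 + γ / L ^ 2 * σ k := by
    intro k
    obtain ⟨hτ, hσ, hprod⟩ := key k
    have h1 : (0:ℝ) < 1 + γ * τ k := by positivity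
    have hsq : Real.sqrt (1 + γ * τ k) ^ 2 = 1 + γ * τ k := Real.sq_sqrt h1.le
    have hsqrt : 0 < Real.sqrt (1 + γ * τ k) := Real.sqrt_pos.mpr h1
    rw [hσrec k, hθrec k]
    rw [div_div_eq_mul_div, div_one, mul_pow, hsq]
    have : γ / L ^ 2 * σ k = γ * (τ k * σ k) * σ k := by
      rw [hprod]; ring
    rw [this]; ring
  -- telescoping sum
  have hsum : ∀ K : ℕ, σ K ^ 2 - σ 0 ^ 2 = γ / L ^ 2 * ∑ k ∈ Finset.range K, σ k := by
    intro K
    induction K with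
    | zero => simp
    | succ n ih =>
      rw [Finset.sum_range_succ, hstep n]
      rw [mul_add]
      linarith [ih]
  intro K hK
  rw [hT K]
  have hre : ∑ k ∈ Finset.Icc 1 K, σ (k-1) / σ 0 = (∑ k ∈ Finset.range K, σ k) / σ 0 := by
    rw [Finset.sum_div]
    rw [show Finset.Icc 1 K = Finset.Ico 1 (K+1) by rw [Finset.Ico_add_one_right_eq_Icc],
      Finset.sum_Ico_eq_sum_range]
    simp
  rw [hre, hsum K]
  have hγ' : γ ≠ 0 := hγ.ne'
  field_simp
end

section
/- Let L > 0, γ > 0, σ_0 > 0, θ_0 ∈ (0,1], set τ_0 = 1/(L²σ_0), and define real sequences for k ≥ 0 by θ_{k+1} = 1/√(1 + γ τ_k), τ_{k+1} = θ_{k+1}·τ_k, σ_{k+1} = σ_k/θ_{k+1}. Set a = γ/(2L²) and, for K ≥ 1, T_K = Σ_{k=1}^{K} σ_{k−1}/σ_0. Then for every K ≥ 1: (σ_0/(a + σ_0))·K + (a·σ_0/(2(a + σ_0)²))·K² ≤ T_K ≤ K + (a/(2σ_0))·K². -/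
open Filter Topology

set_option maxHeartbeats 1000000 in
theorem accsc_T_bounds (L γ : ℝ) (hL : 0 < L) (hγ : 0 < γ)
    (θ τ σ : ℕ → ℝ) (hθ0 : 0 < θ 0 ∧ θ 0 ≤ 1) (hσ0 : 0 < σ 0)
    (hτ0 : τ 0 = 1 / (L ^ 2 * σ 0))
    (hθrec : ∀ k : ℕ, θ (k+1) = 1 / Real.sqrt (1 + γ * τ k))
    (hτrec : ∀ k : ℕ, τ (k+1) = θ (k+1) * τ k)
    (hσrec : ∀ k : ℕ, σ (k+1) = σ k / θ (k+1))
    (a : ℝ) (ha : a = γ / (2 * L ^ 2))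
    (T : ℕ → ℝ) (hT : ∀ K : ℕ, T K = ∑ k ∈ Finset.Icc 1 K, σ (k-1) / σ 0) :
    ∀ K : ℕ, 1 ≤ K →
      (σ 0 / (a + σ 0)) * (K : ℝ) + (a * σ 0 / (2 * (a + σ 0) ^ 2)) * (K : ℝ) ^ 2 ≤ T K ∧
      T K ≤ (K : ℝ) + (a / (2 * σ 0)) * (K : ℝ) ^ 2 := by
  have hL2 : (0:ℝ) < L ^ 2 := by positivity
  have ha' : 0 < a := by rw [ha]; positivity
  -- positivity of σ and τ
  have hpos : ∀ k, 0 < σ k ∧ 0 < τ k := by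
    intro k
    induction k with
    | zero => exact ⟨hσ0, by rw [hτ0]; positivity⟩
    | succ n ih =>
      obtain ⟨hs, ht⟩ := ih
      have h1 : 0 < 1 + γ * τ n := by positivity
      have hsq : 0 < Real.sqrt (1 + γ * τ n) := Real.sqrt_pos.mpr h1
      have hθp : 0 < θ (n+1) := by rw [hθrec]; positivity
      exact ⟨by rw [hσrec]; positivity, by rw [hτrec]; positivity⟩
  have hθp : ∀ k, 0 < θ (k+1) := by
    intro k
    have ht := (hpos k).2
    have h1 : 0 < 1 + γ * τ k := by positivity
    have hsq : 0 < Real.sqrt (1 + γ * τ k) := Real.sqrt_pos.mpr h1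
    rw [hθrec]; positivity
  -- invariant
  have hinv : ∀ k, τ k * σ k = 1 / L ^ 2 := by
    intro k
    induction k with
    | zero => rw [hτ0]; field_simp
    | succ n ih =>
      rw [hτrec, hσrec, ← ih]
      have hne := (hθp n).ne'
      field_simp
  -- key recursion for σ²
  have hstep : ∀ k, σ (k+1) ^ 2 = σ k ^ 2 + 2 * a * σ k := by
    intro k
    have ht := (hpos k).2
    have hs := (hpos k).1
    have h1 : (0:ℝ) ≤ 1 + γ * τ k := by positivity
    have hsq : σ (k+1) ^ 2 = σ k ^ 2 * (1 + γ * τ k) := by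
      rw [hσrec, hθrec, div_div_eq_mul_div, div_one, mul_pow,
        Real.sq_sqrt h1]
    have hi := hinv k
    have hγτ : γ * τ k * σ k = γ / L ^ 2 := by rw [mul_assoc, hi]; ring
    have h2a' : γ / L ^ 2 = 2 * a := by rw [ha]; field_simp
    have heq : γ * τ k * σ k = 2 * a := hγτ.trans h2a'
    rw [hsq]
    linear_combination σ k * heq
  -- upper bound on σ k
  have hupper : ∀ k : ℕ, σ k ≤ σ 0 + a * k := by
    intro k
    induction k with
    | zero => simp
    | succ n ih =>
      have hs := (hpos n).1
      have hs' := (hpos (n+1)).1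
      have h := hstep n
      have hle : σ (n+1) ≤ σ n + a := by nlinarith [sq_nonneg (σ (n+1) - σ n - a)]
      push_cast
      linarith
  -- lower bound on σ k
  set c : ℝ := 2 * a * σ 0 / (2 * σ 0 + a) with hc
  have hd : (0:ℝ) < 2 * σ 0 + a := by positivity
  have hce : c * (2 * σ 0 + a) = 2 * a * σ 0 := by
    rw [hc, div_mul_cancel₀ _ hd.ne']
  have hcpos : 0 < c := by rw [hc]; positivity
  have hca : c < a := by nlinarith [hce]
  have hc2 : c ^ 2 ≤ 2 * (a - c) * σ 0 := by
    nlinarith [hce, sq_nonneg a, mul_pos ha' hσ0]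
  have hlower : ∀ k : ℕ, σ 0 + c * k ≤ σ k := by
    intro k
    induction k with
    | zero => simp
    | succ n ih =>
      have hs := (hpos n).1
      have hs' := (hpos (n+1)).1
      have h := hstep n
      have hs0 : σ 0 ≤ σ n := by nlinarith [Nat.cast_nonneg (α := ℝ) n, hcpos]
      have hge : σ n + c ≤ σ (n+1) := by
        nlinarith [sq_nonneg (σ (n+1) - σ n - c),
          mul_le_mul_of_nonneg_left hs0 (by linarith : (0:ℝ) ≤ 2*(a-c))]
      push_cast
      linarith
  -- rewrite T as a range sum
  have hTr : ∀ K : ℕ, T K = ∑ k ∈ Finset.range K, σ k / σ 0 := by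
    intro K
    rw [hT]
    induction K with
    | zero => simp
    | succ n ih =>
      rw [Finset.sum_Icc_succ_top (Nat.le_add_left 1 n), Finset.sum_range_succ, ih]
      simp
  -- Gauss sum
  have hgauss : ∀ n : ℕ, ∑ i ∈ Finset.range n, (i:ℝ) = n * (n - 1) / 2 := by
    intro n
    induction n with
    | zero => simp
    | succ m ih => rw [Finset.sum_range_succ, ih]; push_cast; ring
  intro K hK
  have hKr : (1:ℝ) ≤ (K:ℝ) := by exact_mod_cast hK
  have hK0 : (0:ℝ) ≤ (K:ℝ) := by positivity
  constructor
  · -- lower bound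
    have hsum : (K:ℝ) + (c / σ 0) * ((K:ℝ) * ((K:ℝ) - 1) / 2) ≤ T K := by
      rw [hTr]
      have hterm : ∀ k ∈ Finset.range K, 1 + (c / σ 0) * (k:ℝ) ≤ σ k / σ 0 := by
        intro k _
        have hlk := hlower k
        have hk0 : (0:ℝ) ≤ (k:ℝ) := Nat.cast_nonneg k
        rw [le_div_iff₀ hσ0]
        have heq : (1 + c / σ 0 * (k:ℝ)) * σ 0 = σ 0 + c * (k:ℝ) := by
          field_simp
        rw [heq]
        exact hlk
      calc (K:ℝ) + (c / σ 0) * ((K:ℝ) * ((K:ℝ) - 1) / 2)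
          = ∑ k ∈ Finset.range K, (1 + (c / σ 0) * (k:ℝ)) := by
            rw [Finset.sum_add_distrib, Finset.sum_const, ← Finset.mul_sum, hgauss]
            simp
        _ ≤ ∑ k ∈ Finset.range K, σ k / σ 0 := Finset.sum_le_sum hterm
    refine le_trans ?_ hsum
    -- coefficient comparison
    have hq : (0:ℝ) < a + σ 0 := by positivity
    have h1 : σ 0 / (a + σ 0) ≤ 2 * σ 0 / (2 * σ 0 + a) := by
      rw [div_le_div_iff₀ hq hd]; nlinarith
    have h2 : a * σ 0 / (2 * (a + σ 0) ^ 2) ≤ a / (2 * σ 0 + a) := by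
      rw [div_le_div_iff₀ (by positivity) hd]
      nlinarith [sq_nonneg (a + σ 0), mul_pos ha' hσ0, sq_nonneg a]
    have heq : (K:ℝ) + (c / σ 0) * ((K:ℝ) * ((K:ℝ) - 1) / 2)
        = (2 * σ 0 / (2 * σ 0 + a)) * (K:ℝ) + (a / (2 * σ 0 + a)) * (K:ℝ) ^ 2 := by
      rw [hc]
      field_simp
      ring
    rw [heq]
    have hK2 : (0:ℝ) ≤ (K:ℝ)^2 := by positivity
    nlinarith [mul_le_mul_of_nonneg_right h1 hK0, mul_le_mul_of_nonneg_right h2 hK2]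
  · -- upper bound
    have hsum : T K ≤ (K:ℝ) + (a / σ 0) * ((K:ℝ) * ((K:ℝ) - 1) / 2) := by
      rw [hTr]
      have hterm : ∀ k ∈ Finset.range K, σ k / σ 0 ≤ 1 + (a / σ 0) * (k:ℝ) := by
        intro k _
        have huk := hupper k
        rw [div_le_iff₀ hσ0]
        have heq : (1 + a / σ 0 * (k:ℝ)) * σ 0 = σ 0 + a * (k:ℝ) := by
          field_simp
        rw [heq]
        exact huk
      calc ∑ k ∈ Finset.range K, σ k / σ 0
          ≤ ∑ k ∈ Finset.range K, (1 + (a / σ 0) * (k:ℝ)) := Finset.sum_le_sum hterm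
        _ = (K:ℝ) + (a / σ 0) * ((K:ℝ) * ((K:ℝ) - 1) / 2) := by
            rw [Finset.sum_add_distrib, Finset.sum_const, ← Finset.mul_sum, hgauss]
            simp
    refine le_trans hsum ?_
    have hds : 0 < a / σ 0 := by positivity
    have hcmp : (a / σ 0) * ((K:ℝ) * ((K:ℝ) - 1) / 2) ≤ (a / (2 * σ 0)) * (K:ℝ)^2 := by
      have h2 : a / (2 * σ 0) = (a / σ 0) / 2 := by
        rw [div_div]; ring_nf
      rw [h2]
      nlinarith
    linarith
end

section
/- Let (x_s, y_s⋆) ∈ (dom g ∩ dom φ_X) × (dom h⋆ ∩ dom φ_{Y⋆}) be a saddle point of L. Then the iterates x_k of the accelerated nonlinear PDHG method for strongly convex problems converge strongly to x_s, i.e. lim_{k→∞} ‖x_k − x_s‖ = 0. -/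
open Filter Topology Set

set_option maxHeartbeats 1000000

lemma acc_young {a b m x y : ℝ} (hx : 0 ≤ x) (hy : 0 ≤ y) (ha : 0 < a)
    (hm : m ^ 2 ≤ a * b) : m * (x * y) ≤ a * x ^ 2 / 2 + b * y ^ 2 / 2 := by
  nlinarith [sq_nonneg (a * x - m * y), sq_nonneg (a * x + m * y),
    mul_nonneg (mul_nonneg hx hy) ha.le, sq_nonneg y, sq_nonneg x,
    mul_nonneg (sq_nonneg y) (sub_nonneg.2 hm)]

lemma acc_convexOn_lin {E : Type*} [AddCommGroup E] [Module ℝ E] {C : Set E}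
    (hC : Convex ℝ C) (f : E → ℝ)
    (hadd : ∀ a b, f (a + b) = f a + f b)
    (hsmul : ∀ (r : ℝ) a, f (r • a) = r * f a) : ConvexOn ℝ C f := by
  refine ⟨hC, fun a _ b _ p q _ _ _ => le_of_eq ?_⟩
  rw [hadd, hsmul, hsmul]; simp [smul_eq_mul]

lemma acc_key {X : Type*} [NormedAddCommGroup X] [NormedSpace ℝ X]
    {C : Set X} {ψ φ : X → ℝ} {c d : ℝ}
    (hψ : ConvexOn ℝ C ψ) {u x : X} (hu : u ∈ C) (hx : x ∈ C)
    (hd : HasDerivAt (fun t : ℝ => φ (u + t • (x - u))) d 0)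
    (hmin : ∀ t : ℝ, t ∈ Set.Ioc (0:ℝ) 1 →
      ψ u + c * φ u ≤ ψ (u + t • (x - u)) + c * φ (u + t • (x - u))) :
    ψ u ≤ ψ x + c * d := by
  set f : ℝ → ℝ := fun t => φ (u + t • (x - u)) with hf
  have hf0 : f 0 = φ u := by simp [hf]
  have hT : Tendsto (fun t => c * ((f t - f 0) / t)) (𝓝[>] (0:ℝ)) (𝓝 (c * d)) := by
    have h1 : Tendsto (slope f 0) (𝓝[≠] (0:ℝ)) (𝓝 d) :=
      hasDerivAt_iff_tendsto_slope.1 hd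
    have h2 : Tendsto (slope f 0) (𝓝[>] (0:ℝ)) (𝓝 d) :=
      h1.mono_left (nhdsWithin_mono _ (fun t ht => by
        simp only [Set.mem_compl_iff, Set.mem_singleton_iff]
        exact ne_of_gt ht))
    have h3 : (fun t => c * ((f t - f 0) / t)) = fun t => c * slope f 0 t := by
      funext t; rw [slope_def_field]; ring_nf
    rw [h3]
    exact h2.const_mul c
  have hev : ∀ᶠ t in 𝓝[>] (0:ℝ), ψ u - ψ x ≤ c * ((f t - f 0) / t) := by
    filter_upwards [Ioc_mem_nhdsGT_of_mem (by constructor <;> norm_num :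
      (0:ℝ) ∈ Set.Ico (0:ℝ) 1)] with t ht
    obtain ⟨ht0, ht1⟩ := ht
    have hconv : ψ (u + t • (x - u)) ≤ (1 - t) * ψ u + t * ψ x := by
      have h := hψ.2 hu hx (by linarith : (0:ℝ) ≤ 1 - t) ht0.le (by ring)
      have he : (1 - t) • u + t • x = u + t • (x - u) := by module
      rw [he] at h
      simpa [smul_eq_mul] using h
    have hm := hmin t ⟨ht0, ht1⟩
    have hkey : t * (ψ u - ψ x) ≤ c * (f t - f 0) := by
      rw [hf0]; nlinarith [hm, hconv]
    rw [mul_div_assoc'] at *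
    rw [le_div_iff₀ ht0]
    linarith [hkey]
  have := ge_of_tendsto hT hev
  linarith

theorem accsc_primal_convergence
    {X Y : Type*} [NormedAddCommGroup X] [NormedSpace ℝ X] [CompleteSpace X]
    [NormedAddCommGroup Y] [NormedSpace ℝ Y] [CompleteSpace Y]
    (A : X →L[ℝ] Y)
    (φX : X → ℝ) (SX : Set X) (gX : X → (X →L[ℝ] ℝ))
    (φY : (Y →L[ℝ] ℝ) → ℝ) (SY : Set (Y →L[ℝ] ℝ)) (gY : (Y →L[ℝ] ℝ) → Y)
    (hSXne : SX.Nonempty) (hφXconv : ConvexOn ℝ SX φX)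
    (hφXlsc : LowerSemicontinuousOn φX SX)
    (hSYne : SY.Nonempty) (hφYconv : ConvexOn ℝ SY φY)
    (hφYlsc : LowerSemicontinuousOn φY SY)
    (hφXdiff : ∀ x ∈ interior SX, ∀ w : X,
      HasDerivAt (fun t : ℝ => φX (x + t • w)) (gX x w) 0)
    (hφYdiff : ∀ p ∈ interior SY, ∀ q : Y →L[ℝ] ℝ,
      HasDerivAt (fun t : ℝ => φY (p + t • q)) (q (gY p)) 0)
    (DX : X → X → ℝ) (hDXdef : ∀ x x', DX x x' = φX x - φX x' - gX x' (x - x'))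
    (DY : (Y →L[ℝ] ℝ) → (Y →L[ℝ] ℝ) → ℝ)
    (hDYdef : ∀ p q, DY p q = φY p - φY q - (p - q) (gY q))
    (hscX : ∀ x ∈ SX, ∀ x' ∈ interior SX, (1/2) * ‖x - x'‖ ^ 2 ≤ DX x x')
    (hscY : ∀ p ∈ SY, ∀ q ∈ interior SY, (1/2) * ‖p - q‖ ^ 2 ≤ DY p q)
    (g : X → ℝ) (Sg : Set X) (hSgne : Sg.Nonempty)
    (hgconv : ConvexOn ℝ Sg g) (hglsc : LowerSemicontinuousOn g Sg)
    (hst : (Y →L[ℝ] ℝ) → ℝ) (Sh : Set (Y →L[ℝ] ℝ)) (hShne : Sh.Nonempty)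
    (hhconv : ConvexOn ℝ Sh hst) (hhlsc : LowerSemicontinuousOn hst Sh)
    (L : X → (Y →L[ℝ] ℝ) → ℝ) (hLdef : ∀ x p, L x p = g x + p (A x) - hst p)
    (γg : ℝ) (hγg : 0 < γg)
    (hA6 : ConvexOn ℝ (Sg ∩ SX) (fun x => g x - γg * φX x))
    (hAne : A ≠ 0)
    (θ τ σ : ℕ → ℝ) (hθ0 : 0 < θ 0 ∧ θ 0 ≤ 1) (hσ0 : 0 < σ 0)
    (hτ0 : τ 0 = 1 / (‖A‖ ^ 2 * σ 0))
    (hθrec : ∀ k : ℕ, θ (k+1) = 1 / Real.sqrt (1 + γg * τ k))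
    (hτrec : ∀ k : ℕ, τ (k+1) = θ (k+1) * τ k)
    (hσrec : ∀ k : ℕ, σ (k+1) = σ k / θ (k+1))
    (u : ℕ → X) (v : ℕ → (Y →L[ℝ] ℝ))
    (hu : ∀ k, u k ∈ Sg ∩ interior SX)
    (hv : ∀ k, v k ∈ Sh ∩ interior SY)
    (hstepx : ∀ k : ℕ, ∀ x ∈ Sg ∩ SX,
      g (u (k+1)) + (v k + θ k • (v k - v (k-1))) (A (u (k+1)))
          + (1/τ k) * DX (u (k+1)) (u k) ≤
        g x + (v k + θ k • (v k - v (k-1))) (A x) + (1/τ k) * DX x (u k))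
    (hstepy : ∀ k : ℕ, ∀ p ∈ Sh ∩ SY,
      -hst p + p (A (u (k+1))) - (1/σ k) * DY p (v k) ≤
        -hst (v (k+1)) + (v (k+1)) (A (u (k+1))) - (1/σ k) * DY (v (k+1)) (v k))
    (xs : X) (ys : Y →L[ℝ] ℝ) (hxs : xs ∈ Sg ∩ SX) (hys : ys ∈ Sh ∩ SY)
    (hsaddle1 : ∀ p ∈ Sh, L xs p ≤ L xs ys)
    (hsaddle2 : ∀ x ∈ Sg, L xs ys ≤ L x ys)
    :
    Tendsto (fun k => ‖u k - xs‖) atTop (nhds 0) := by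
  have hAop : 0 < ‖A‖ := norm_pos_iff.2 hAne
  -- ### parameter facts
  have hbase : ∀ k, (0 < θ k ∧ θ k ≤ 1) ∧ 0 < τ k ∧ 0 < σ k := by
    intro k
    induction k with
    | zero =>
      refine ⟨hθ0, ?_, hσ0⟩
      rw [hτ0]; positivity
    | succ n ih =>
      obtain ⟨⟨hθp, hθle⟩, hτp, hσp⟩ := ih
      have hs1 : (1:ℝ) ≤ Real.sqrt (1 + γg * τ n) :=
        Real.one_le_sqrt.2 (by nlinarith)
      have hsp : 0 < Real.sqrt (1 + γg * τ n) := lt_of_lt_of_le one_pos hs1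
      have hθp' : 0 < θ (n+1) := by rw [hθrec]; positivity
      refine ⟨⟨hθp', ?_⟩, ?_, ?_⟩
      · rw [hθrec]; rw [div_le_one hsp]; exact hs1
      · rw [hτrec]; positivity
      · rw [hσrec]; positivity
  have hθpos : ∀ k, 0 < θ k := fun k => (hbase k).1.1
  have hθle : ∀ k, θ k ≤ 1 := fun k => (hbase k).1.2
  have hτpos : ∀ k, 0 < τ k := fun k => (hbase k).2.1
  have hσpos : ∀ k, 0 < σ k := fun k => (hbase k).2.2
  have hθsq : ∀ k, θ (k+1) ^ 2 * (1 + γg * τ k) = 1 := by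
    intro k
    rw [hθrec, div_pow, one_pow,
      Real.sq_sqrt (by nlinarith [hτpos k] : (0:ℝ) ≤ 1 + γg * τ k),
      one_div_mul_cancel (by nlinarith [hτpos k] : (1:ℝ) + γg * τ k ≠ 0)]
  have hτσ : ∀ k, ‖A‖ ^ 2 * (τ k * σ k) = 1 := by
    intro k
    induction k with
    | zero => rw [hτ0]; field_simp
    | succ n ih =>
      have hne : θ (n+1) ≠ 0 := (hθpos _).ne'
      rw [hτrec, hσrec,
        show θ (n+1) * τ n * (σ n / θ (n+1)) = τ n * σ n by field_simp]
      exact ih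
  have hτmono : ∀ k, τ (k+1) ≤ τ k := by
    intro k
    rw [hτrec]
    nlinarith [hθle (k+1), hθpos (k+1), hτpos k]
  have hτle0 : ∀ k, τ k ≤ τ 0 := by
    intro k
    induction k with
    | zero => exact le_refl _
    | succ n ih => exact le_trans (hτmono n) ih
  have hτbnd : ∀ k : ℕ, 1 / τ 0 ^ 2 + k * (γg / τ 0) ≤ 1 / τ k ^ 2 := by
    intro k
    induction k with
    | zero => simp
    | succ n ih =>
      have h1 : 1 / τ (n+1) ^ 2 = 1 / τ n ^ 2 + γg / τ n := by
        have hs := hθsq n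
        have h2 : τ (n+1) ^ 2 = θ (n+1) ^ 2 * τ n ^ 2 := by rw [hτrec]; ring
        rw [h2]
        have hθn : θ (n+1) ^ 2 ≠ 0 := pow_ne_zero 2 (hθpos _).ne'
        have hτn : τ n ≠ 0 := (hτpos n).ne'
        field_simp
        rw [div_eq_iff hθn]; linear_combination -hs
      rw [h1]
      have : γg / τ 0 ≤ γg / τ n :=
        div_le_div_of_nonneg_left hγg.le (hτpos n) (hτle0 n)
      push_cast
      linarith
  -- ### step inequality for x
  have ineqX : ∀ k, g (u (k+1)) + (v k + θ k • (v k - v (k-1))) (A (u (k+1)))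
      + (1/τ k) * DX (u (k+1)) (u k) + (γg + 1/τ k) * DX xs (u (k+1))
      ≤ g xs + (v k + θ k • (v k - v (k-1))) (A xs) + (1/τ k) * DX xs (u k) := by
    intro k
    have hCconv : Convex ℝ (Sg ∩ SX) := hgconv.1.inter hφXconv.1
    set w := u (k+1) with hw
    set yt := v k + θ k • (v k - v (k-1)) with hyt
    have hwmem : w ∈ Sg ∩ SX := ⟨(hu (k+1)).1, interior_subset (hu (k+1)).2⟩
    have hψ : ConvexOn ℝ (Sg ∩ SX)
        (fun x => (g x - γg * φX x) + (yt (A x) - (1/τ k) * gX (u k) x)) :=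
      hA6.add (acc_convexOn_lin hCconv _
        (by intro a b; simp only [map_add]; ring)
        (by intro r a; simp only [map_smul, smul_eq_mul]; ring))
    have hkey := acc_key (c := γg + 1/τ k) (φ := φX) hψ hwmem hxs
        (hφXdiff w (hu (k+1)).2 (xs - w)) ?_
    · rw [hDXdef, hDXdef, hDXdef]
      simp only [map_sub] at hkey ⊢
      linarith [hkey]
    · intro t ht
      have hmem : w + t • (xs - w) ∈ Sg ∩ SX := by
        have h := hCconv hwmem hxs (by linarith [ht.1, ht.2] : (0:ℝ) ≤ 1 - t)
          ht.1.le (by ring)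
        have he : (1 - t) • w + t • xs = w + t • (xs - w) := by module
        rwa [he] at h
      have h := hstepx k _ hmem
      rw [hDXdef, hDXdef] at h
      simp only [map_sub] at h ⊢
      linarith [h]
  -- ### step inequality for y
  have ineqY : ∀ k, hst (v (k+1)) - (v (k+1)) (A (u (k+1)))
      + (1/σ k) * DY (v (k+1)) (v k) + (1/σ k) * DY ys (v (k+1))
      ≤ hst ys - ys (A (u (k+1))) + (1/σ k) * DY ys (v k) := by
    intro k
    have hCconv : Convex ℝ (Sh ∩ SY) := hhconv.1.inter hφYconv.1
    set w := v (k+1) with hw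
    have hwmem : w ∈ Sh ∩ SY := ⟨(hv (k+1)).1, interior_subset (hv (k+1)).2⟩
    have hψ : ConvexOn ℝ (Sh ∩ SY)
        (fun p => hst p + (-(p (A (u (k+1)))) - (1/σ k) * (p (gY (v k))))) :=
      (hhconv.subset inter_subset_left hCconv).add (acc_convexOn_lin hCconv _
        (by intro a b; simp only [ContinuousLinearMap.add_apply]; ring)
        (by intro r a; simp only [ContinuousLinearMap.coe_smul', Pi.smul_apply,
              smul_eq_mul]; ring))
    have hkey := acc_key (c := 1/σ k) (φ := φY) hψ hwmem hys
        (hφYdiff w (hv (k+1)).2 (ys - w)) ?_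
    · rw [hDYdef, hDYdef, hDYdef]
      simp only [ContinuousLinearMap.sub_apply] at hkey ⊢
      linarith [hkey]
    · intro t ht
      have hmem : w + t • (ys - w) ∈ Sh ∩ SY := by
        have h := hCconv hwmem hys (by linarith [ht.1, ht.2] : (0:ℝ) ≤ 1 - t)
          ht.1.le (by ring)
        have he : (1 - t) • w + t • ys = w + t • (ys - w) := by module
        rwa [he] at h
      have h := hstepy k _ hmem
      rw [hDYdef, hDYdef] at h
      simp only [ContinuousLinearMap.sub_apply, ContinuousLinearMap.add_apply,
        ContinuousLinearMap.coe_smul', Pi.smul_apply, smul_eq_mul] at h ⊢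
      linarith [h]
  -- ### Lyapunov function
  obtain ⟨Φ, hΦdef⟩ : ∃ Φ : ℕ → ℝ, Φ = fun k =>
      (σ k/σ 0) * DX xs (u k) / τ k + DY ys (v k) / σ 0
      - (σ k/σ 0) * θ k * ((v k - v (k-1)) (A (u k) - A xs))
      + ‖v k - v (k-1)‖^2/(2*σ 0) := ⟨_, rfl⟩
  have hΦstep : ∀ k, Φ (k+1) ≤ Φ k := by
    intro k
    have h3 := hsaddle1 (v (k+1)) (hv (k+1)).1
    have h4 := hsaddle2 (u (k+1)) (hu (k+1)).1
    rw [hLdef, hLdef] at h3 h4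
    have hstar : -((v (k+1) - v k) (A (u (k+1)) - A xs))
        + θ k * ((v k - v (k-1)) (A (u k) - A xs))
        + θ k * ((v k - v (k-1)) (A (u (k+1)) - A (u k)))
        + (1/τ k) * DX (u (k+1)) (u k) + (1/σ k) * DY (v (k+1)) (v k)
        + (γg + 1/τ k) * DX xs (u (k+1)) + (1/σ k) * DY ys (v (k+1))
        ≤ (1/τ k) * DX xs (u k) + (1/σ k) * DY ys (v k) := by
      have h1 := ineqX k
      have h2 := ineqY k
      simp only [map_sub, ContinuousLinearMap.sub_apply,
        ContinuousLinearMap.add_apply, ContinuousLinearMap.coe_smul',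
        Pi.smul_apply, smul_eq_mul] at h1 h2 h3 h4 ⊢
      linarith [h1, h2, h3, h4]
    have hΓpos : (0:ℝ) < σ k / σ 0 := div_pos (hσpos k) hσ0
    have hmul := mul_le_mul_of_nonneg_left hstar hΓpos.le
    -- strong convexity bounds
    have hDXlb := hscX (u (k+1)) (interior_subset (hu (k+1)).2) (u k) (hu k).2
    have hDYlb := hscY (v (k+1)) (interior_subset (hv (k+1)).2) (v k) (hv k).2
    have ineq5 := mul_le_mul_of_nonneg_left hDXlb
      (mul_nonneg (div_nonneg (hσpos k).le hσ0.le)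
        (by exact le_of_lt (by have := hτpos k; positivity) : (0:ℝ) ≤ 1/τ k))
    have ineq4 : ‖v (k+1) - v k‖^2/(2*σ 0) ≤ DY (v (k+1)) (v k)/σ 0 := by
      rw [show ‖v (k+1) - v k‖^2/(2*σ 0) = ((1/2)*‖v (k+1) - v k‖^2)/σ 0 by ring]
      exact div_le_div_of_nonneg_right hDYlb hσ0.le
    -- cross term bound
    have h5 : -(‖v k - v (k-1)‖ * (‖A‖ * ‖u (k+1) - u k‖))
        ≤ (v k - v (k-1)) (A (u (k+1)) - A (u k)) := by
      have h6 : ‖(v k - v (k-1)) (A (u (k+1)) - A (u k))‖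
          ≤ ‖v k - v (k-1)‖ * (‖A‖ * ‖u (k+1) - u k‖) := by
        calc ‖(v k - v (k-1)) (A (u (k+1)) - A (u k))‖
            ≤ ‖v k - v (k-1)‖ * ‖A (u (k+1)) - A (u k)‖ :=
              (v k - v (k-1)).le_opNorm _
          _ ≤ ‖v k - v (k-1)‖ * (‖A‖ * ‖u (k+1) - u k‖) := by
              apply mul_le_mul_of_nonneg_left _ (norm_nonneg _)
              rw [← map_sub]
              exact A.le_opNorm _
      rw [Real.norm_eq_abs] at h6
      exact (abs_le.1 h6).1
    have h5m := mul_le_mul_of_nonneg_left h5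
      (mul_nonneg (div_nonneg (hσpos k).le hσ0.le) (hθpos k).le)
    -- Young
    have hy1 : (σ k/σ 0) * θ k * ‖A‖ * (‖u (k+1) - u k‖ * ‖v k - v (k-1)‖)
        ≤ ((σ k/σ 0)*(1/τ k)) * ‖u (k+1) - u k‖^2/2
          + (θ k^2/σ 0) * ‖v k - v (k-1)‖^2/2 := by
      apply acc_young (norm_nonneg _) (norm_nonneg _)
        (mul_pos (div_pos (hσpos k) hσ0) (by have := hτpos k; positivity : (0:ℝ) < 1/τ k))
      apply le_of_eq
      have h7 := hτσ k
      have h1 : τ k ≠ 0 := (hτpos k).ne'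
      have h2 : σ 0 ≠ 0 := hσ0.ne'
      field_simp
      linear_combination (θ k^2*σ k) * h7
    have ineq7 : (θ k^2/σ 0)*‖v k - v (k-1)‖^2/2 ≤ ‖v k - v (k-1)‖^2/(2*σ 0) := by
      have hθ1 : θ k^2 ≤ 1 := by nlinarith [hθle k, hθpos k]
      calc (θ k^2/σ 0)*‖v k - v (k-1)‖^2/2
          = θ k^2 * (‖v k - v (k-1)‖^2/(2*σ 0)) := by ring
        _ ≤ 1 * (‖v k - v (k-1)‖^2/(2*σ 0)) :=
            mul_le_mul_of_nonneg_right hθ1 (by positivity)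
        _ = ‖v k - v (k-1)‖^2/(2*σ 0) := one_mul _
    -- identities
    have idc : (σ k/σ 0) * ((γg + 1/τ k) * DX xs (u (k+1)))
        = (σ (k+1)/σ 0) * DX xs (u (k+1)) / τ (k+1) := by
      rw [hσrec, hτrec]
      have h8 := hθsq k
      have hθn : θ (k+1) ≠ 0 := (hθpos _).ne'
      have hτn : τ k ≠ 0 := (hτpos _).ne'
      have hσn : σ 0 ≠ 0 := hσ0.ne'
      field_simp
      linear_combination (σ k * DX xs (u (k+1))) * h8
    have idE : (σ (k+1)/σ 0) * θ (k+1) * ((v (k+1) - v k) (A (u (k+1)) - A xs))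
        = (σ k/σ 0) * ((v (k+1) - v k) (A (u (k+1)) - A xs)) := by
      rw [hσrec]
      have hθn : θ (k+1) ≠ 0 := (hθpos _).ne'
      field_simp
    have idσ1 : (σ k/σ 0) * ((1/σ k) * DY ys (v (k+1))) = DY ys (v (k+1))/σ 0 := by
      have : σ k ≠ 0 := (hσpos k).ne'
      field_simp
    have idσ2 : (σ k/σ 0) * ((1/σ k) * DY (v (k+1)) (v k))
        = DY (v (k+1)) (v k)/σ 0 := by
      have : σ k ≠ 0 := (hσpos k).ne'
      field_simp
    have idσ3 : (σ k/σ 0) * ((1/σ k) * DY ys (v k)) = DY ys (v k)/σ 0 := by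
      have : σ k ≠ 0 := (hσpos k).ne'
      field_simp
    simp only [hΦdef]
    simp only [map_sub, ContinuousLinearMap.sub_apply, Nat.add_sub_cancel] at hmul idE h5m ⊢
    ring_nf at hmul ineq5 ineq4 h5m hy1 ineq7 idc idE idσ1 idσ2 idσ3 ⊢
    linarith [hmul, ineq5, ineq4, h5m, hy1, ineq7, idc, idE, idσ1, idσ2, idσ3]
  -- Φ bounded by Φ 0
  have hΦle : ∀ N, Φ N ≤ Φ 0 := by
    intro N
    induction N with
    | zero => exact le_refl _
    | succ n ih => exact (hΦstep n).trans ih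
  have hΦ0 : Φ 0 = DX xs (u 0)/τ 0 + DY ys (v 0)/σ 0 := by
    simp only [hΦdef]
    norm_num
    rw [div_self hσ0.ne', one_mul]
  -- lower bound on Φ
  have hlow : ∀ j, (1 - θ j) * ((σ j/σ 0)/τ j) * DX xs (u j) ≤ Φ j := by
    intro j
    have hdd : 0 ≤ DY ys (v j) := by
      have h := hscY ys hys.2 (v j) (hv j).2
      nlinarith [sq_nonneg ‖ys - v j‖]
    have hΔlb : (1/2)*‖xs - u j‖^2 ≤ DX xs (u j) := hscX xs hxs.2 (u j) (hu j).2
    have he : (v j - v (j-1)) (A (u j) - A xs)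
        ≤ ‖v j - v (j-1)‖ * (‖A‖ * ‖xs - u j‖) := by
      have h6 : ‖(v j - v (j-1)) (A (u j) - A xs)‖
          ≤ ‖v j - v (j-1)‖ * (‖A‖ * ‖xs - u j‖) := by
        calc ‖(v j - v (j-1)) (A (u j) - A xs)‖
            ≤ ‖v j - v (j-1)‖ * ‖A (u j) - A xs‖ :=
              (v j - v (j-1)).le_opNorm _
          _ ≤ ‖v j - v (j-1)‖ * (‖A‖ * ‖xs - u j‖) := by
              apply mul_le_mul_of_nonneg_left _ (norm_nonneg _)
              rw [← map_sub, ← norm_neg, ← map_neg, neg_sub]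
              exact A.le_opNorm _
      rw [Real.norm_eq_abs] at h6
      exact (abs_le.1 h6).2
    have hem := mul_le_mul_of_nonneg_left he
      (mul_nonneg (div_nonneg (hσpos j).le hσ0.le) (hθpos j).le)
    have hy2 : (σ j/σ 0) * θ j * ‖A‖ * (‖xs - u j‖ * ‖v j - v (j-1)‖)
        ≤ ((σ j/σ 0)*θ j*(1/τ j)) * ‖xs - u j‖^2/2
          + (θ j/σ 0) * ‖v j - v (j-1)‖^2/2 := by
      apply acc_young (norm_nonneg _) (norm_nonneg _)
        (by have h1 := hσpos j; have h2 := hθpos j; have h3 := hτpos j; positivity)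
      apply le_of_eq
      have h7 := hτσ j
      have h1 : τ j ≠ 0 := (hτpos j).ne'
      have h2 : σ 0 ≠ 0 := hσ0.ne'
      field_simp
      linear_combination (θ j^2*σ j) * h7
    have hΔm := mul_le_mul_of_nonneg_left hΔlb
      (by have h1 := hσpos j; have h2 := hθpos j; have h3 := hτpos j; positivity
        : (0:ℝ) ≤ (σ j/σ 0)*θ j*(1/τ j))
    have hθB : (θ j/σ 0) * ‖v j - v (j-1)‖^2/2 ≤ ‖v j - v (j-1)‖^2/(2*σ 0) := by
      calc (θ j/σ 0) * ‖v j - v (j-1)‖^2/2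
          = θ j * (‖v j - v (j-1)‖^2/(2*σ 0)) := by ring
        _ ≤ 1 * (‖v j - v (j-1)‖^2/(2*σ 0)) :=
            mul_le_mul_of_nonneg_right (hθle j) (by positivity)
        _ = _ := one_mul _
    have hddσ : 0 ≤ DY ys (v j)/σ 0 := div_nonneg hdd hσ0.le
    simp only [hΦdef]
    simp only [map_sub, ContinuousLinearMap.sub_apply] at hem ⊢
    ring_nf at hem hy2 hΔm hθB hddσ ⊢
    linarith [hem, hy2, hΔm, hθB, hddσ]
  -- quantitative bound on 1 - θ (k+1)
  have h1θ : ∀ k, γg * τ k / (2*(1 + γg * τ 0)) ≤ 1 - θ (k+1) := by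
    intro k
    have hsq : Real.sqrt (1 + γg * τ k)^2 = 1 + γg*τ k :=
      Real.sq_sqrt (by nlinarith [hτpos k])
    have hs1 : 1 ≤ Real.sqrt (1 + γg * τ k) :=
      Real.one_le_sqrt.2 (by nlinarith [hτpos k])
    set s := Real.sqrt (1 + γg * τ k) with hsdef
    have hspos : 0 < s := lt_of_lt_of_le one_pos hs1
    have hinv : s * (1/s) = 1 := mul_one_div_cancel hspos.ne'
    rw [hθrec, ← hsdef]
    rw [div_le_iff₀ (by nlinarith [hτpos 0] : (0:ℝ) < 2*(1+γg*τ 0))]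
    have hkey : (s - 1) * (2*(1+γg*τ 0) - s^2 - s) ≥ 0 := by
      apply mul_nonneg (by linarith)
      nlinarith [hτle0 k, hτpos k, hs1, hsq]
    have h9 : (1 - 1/s)*(2*(1+γg*τ 0)) = (s-1)*(2*(1+γg*τ 0))/s := by
      field_simp
    rw [h9, le_div_iff₀ hspos]
    have hsq3 : s^3 = (1+γg*τ k)*s := by linear_combination s * hsq
    nlinarith [hkey, hsq3, hsq]
  -- Φ 0 nonneg
  have hΦ0nn : 0 ≤ Φ 0 := by
    rw [hΦ0]
    have h1 : 0 ≤ DX xs (u 0) := by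
      have h := hscX xs hxs.2 (u 0) (hu 0).2
      nlinarith [sq_nonneg ‖xs - u 0‖]
    have h2 : 0 ≤ DY ys (v 0) := by
      have h := hscY ys hys.2 (v 0) (hv 0).2
      nlinarith [sq_nonneg ‖ys - v 0‖]
    exact add_nonneg (div_nonneg h1 (hτpos 0).le) (div_nonneg h2 hσ0.le)
  -- final per-step bound
  obtain ⟨C, hCdef⟩ : ∃ C : ℝ, C = Φ 0 * (σ 0 * ‖A‖^2) * (2*(1+γg*τ 0)) / γg :=
    ⟨_, rfl⟩
  have hCnn : 0 ≤ C := by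
    rw [hCdef]
    have h2C : (0:ℝ) ≤ 2*(1+γg*τ 0) := by nlinarith [hτpos 0]
    exact div_nonneg (mul_nonneg (mul_nonneg hΦ0nn
      (mul_nonneg hσ0.le (sq_nonneg _))) h2C) hγg.le
  have hΔbnd : ∀ k, DX xs (u (k+1)) ≤ C * τ (k+1) := by
    intro k
    have hA1 : (1 - θ (k+1)) * ((σ (k+1)/σ 0)/τ (k+1)) * DX xs (u (k+1)) ≤ Φ 0 :=
      (hlow (k+1)).trans (hΦle (k+1))
    have hq := h1θ k
    have hΔnn : 0 ≤ DX xs (u (k+1)) := by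
      have h := hscX xs hxs.2 (u (k+1)) (hu (k+1)).2
      nlinarith [sq_nonneg ‖xs - u (k+1)‖]
    have hGp : (0:ℝ) < (σ (k+1)/σ 0)/τ (k+1) :=
      div_pos (div_pos (hσpos _) hσ0) (hτpos _)
    have hB : γg * τ k / (2*(1 + γg * τ 0)) * ((σ (k+1)/σ 0)/τ (k+1))
        * DX xs (u (k+1)) ≤ Φ 0 := by
      nlinarith [hA1, mul_le_mul_of_nonneg_right hq
        (mul_nonneg hGp.le hΔnn)]
    have hGeq : (σ (k+1)/σ 0)/τ (k+1) = 1/(σ 0*‖A‖^2*τ (k+1)^2) := by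
      have h7 := hτσ (k+1)
      have h1 : τ (k+1) ≠ 0 := (hτpos _).ne'
      have h2 : σ 0 ≠ 0 := hσ0.ne'
      have h3 : ‖A‖ ≠ 0 := hAop.ne'
      field_simp
      linear_combination h7
    rw [hGeq] at hB
    obtain ⟨P, hPdef⟩ : ∃ P : ℝ, P = 2*(1 + γg * τ 0) := ⟨_, rfl⟩
    obtain ⟨Q, hQdef⟩ : ∃ Q : ℝ, Q = σ 0*‖A‖^2*τ (k+1)^2 := ⟨_, rfl⟩
    have hPpos : 0 < P := by rw [hPdef]; nlinarith [hτpos 0]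
    have hQpos : 0 < Q := by
      rw [hQdef]
      have := hτpos (k+1)
      positivity
    rw [← hPdef, ← hQdef] at hB
    have hfin : DX xs (u (k+1)) ≤ Φ 0 * (P * Q) / (γg * τ k) := by
      rw [le_div_iff₀ (mul_pos hγg (hτpos k))]
      calc DX xs (u (k+1)) * (γg * τ k)
          = (γg * τ k / P * (1/Q) * DX xs (u (k+1))) * (P * Q) := by
            field_simp
        _ ≤ Φ 0 * (P * Q) := by
            apply mul_le_mul_of_nonneg_right hB
            exact mul_nonneg hPpos.le hQpos.le
    refine hfin.trans ?_
    have e1 : Φ 0 * (P * Q) / (γg * τ k) = C * (τ (k+1)^2/τ k) := by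
      rw [hCdef, hPdef, hQdef]
      have h1 : τ k ≠ 0 := (hτpos k).ne'
      have h2 : γg ≠ 0 := hγg.ne'
      field_simp
    have e2 : τ (k+1)^2/τ k ≤ τ (k+1) := by
      rw [div_le_iff₀ (hτpos k)]
      nlinarith [hτmono k, hτpos (k+1)]
    rw [e1]
    exact mul_le_mul_of_nonneg_left e2 hCnn
  -- ### convergence of τ to 0
  have hτtend : Tendsto τ atTop (𝓝 0) := by
    have hRpos : ∀ n : ℕ, (0:ℝ) < 1/τ 0^2 + n*(γg/τ 0) := by
      intro n
      have h1 : (0:ℝ) < 1/τ 0^2 := by have := hτpos 0; positivity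
      have h2 : (0:ℝ) ≤ n*(γg/τ 0) :=
        mul_nonneg (Nat.cast_nonneg n) (div_nonneg hγg.le (hτpos 0).le)
      linarith
    have hb : ∀ n : ℕ, τ n ≤ Real.sqrt (1/(1/τ 0^2 + n*(γg/τ 0))) := by
      intro n
      have h := hτbnd n
      have h2 : τ n^2 ≤ 1/(1/τ 0^2 + n*(γg/τ 0)) := by
        rw [le_div_iff₀ (hRpos n)]
        have h3 : (0:ℝ) < 1/τ n^2 := by have := hτpos n; positivity
        have h4 := mul_le_mul_of_nonneg_left h (sq_nonneg (τ n))
        have h5 : τ n^2 * (1/τ n^2) = 1 := by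
          rw [one_div, mul_inv_cancel₀ (pow_ne_zero 2 (hτpos n).ne')]
        calc τ n^2 * (1/τ 0^2 + n*(γg/τ 0)) ≤ τ n^2 * (1/τ n^2) := h4
          _ = 1 := h5
      calc τ n = Real.sqrt (τ n^2) := (Real.sqrt_sq (hτpos n).le).symm
        _ ≤ Real.sqrt (1/(1/τ 0^2 + n*(γg/τ 0))) := Real.sqrt_le_sqrt h2
    have hinner : Tendsto (fun n : ℕ => 1/(1/τ 0^2 + n*(γg/τ 0))) atTop (𝓝 0) := by
      have h1 : Tendsto (fun n : ℕ => (n:ℝ)*(γg/τ 0)) atTop atTop :=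
        Tendsto.atTop_mul_const (div_pos hγg (hτpos 0))
          tendsto_natCast_atTop_atTop
      have h2 : Tendsto (fun n : ℕ => 1/τ 0^2 + (n:ℝ)*(γg/τ 0)) atTop atTop :=
        tendsto_atTop_add_const_left _ _ h1
      simpa only [one_div, Pi.inv_def] using h2.inv_tendsto_atTop
    have hsqrt0 : Tendsto (fun n : ℕ => Real.sqrt (1/(1/τ 0^2 + n*(γg/τ 0))))
        atTop (𝓝 0) := by
      have hc := Real.continuous_sqrt.tendsto 0
      rw [Real.sqrt_zero] at hc
      exact hc.comp hinner
    exact squeeze_zero (fun n => (hτpos n).le) hb hsqrt0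
  -- ### conclusion
  have hbnd : ∀ᶠ n in atTop, ‖u n - xs‖ ≤ Real.sqrt (2*C*τ n) := by
    filter_upwards [eventually_ge_atTop 1] with n hn
    obtain ⟨k, rfl⟩ : ∃ k, n = k + 1 := ⟨n - 1, by omega⟩
    have h1 : (1/2)*‖xs - u (k+1)‖^2 ≤ DX xs (u (k+1)) :=
      hscX xs hxs.2 (u (k+1)) (hu (k+1)).2
    have h2 := hΔbnd k
    have h3 : ‖u (k+1) - xs‖^2 ≤ 2*C*τ (k+1) := by
      rw [norm_sub_rev]
      linarith
    calc ‖u (k+1) - xs‖ = Real.sqrt (‖u (k+1) - xs‖^2) :=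
          (Real.sqrt_sq (norm_nonneg _)).symm
      _ ≤ Real.sqrt (2*C*τ (k+1)) := Real.sqrt_le_sqrt h3
  have hsq2 : Tendsto (fun n => Real.sqrt (2*C*τ n)) atTop (𝓝 0) := by
    have h1 : Tendsto (fun n => 2*C*τ n) atTop (𝓝 0) := by
      have := hτtend.const_mul (2*C)
      simpa using this
    have hc := Real.continuous_sqrt.tendsto 0
    rw [Real.sqrt_zero] at hc
    exact hc.comp h1
  exact squeeze_zero' (Eventually.of_forall fun n => norm_nonneg _) hbnd hsq2
end

section
/- Let θ ∈ (0,1] and τ, σ > 0 satisfy τ·σ·θ·‖A‖² = 1. Then for every x ∈ dom φ_X, x_k ∈ int(dom φ_X), y⋆ ∈ dom φ_{Y⋆}, and y_k⋆, y_{k−1}⋆ ∈ int(dom φ_{Y⋆}), the quantity Δ_k = (1/τ)·D_X(x, x_k) + (1/σ)·D_Y(y⋆, y_k⋆) + (θ/σ)·D_Y(y_k⋆, y_{k−1}⋆) + θ·⟨y_k⋆ − y_{k−1}⋆, A(x − x_k)⟩ satisfies Δ_k ≥ (1/σ)·D_Y(y⋆, y_k⋆). -/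
open Filter Topology

theorem const_delta_lower_bound
    {X Y : Type*} [NormedAddCommGroup X] [NormedSpace ℝ X] [CompleteSpace X]
    [NormedAddCommGroup Y] [NormedSpace ℝ Y] [CompleteSpace Y]
    (A : X →L[ℝ] Y)
    (φX : X → ℝ) (SX : Set X) (gX : X → (X →L[ℝ] ℝ))
    (φY : (Y →L[ℝ] ℝ) → ℝ) (SY : Set (Y →L[ℝ] ℝ)) (gY : (Y →L[ℝ] ℝ) → Y)
    (hSXne : SX.Nonempty) (hφXconv : ConvexOn ℝ SX φX)
    (hφXlsc : LowerSemicontinuousOn φX SX)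
    (hSYne : SY.Nonempty) (hφYconv : ConvexOn ℝ SY φY)
    (hφYlsc : LowerSemicontinuousOn φY SY)
    (hφXdiff : ∀ x ∈ interior SX, ∀ w : X,
      HasDerivAt (fun t : ℝ => φX (x + t • w)) (gX x w) 0)
    (hφYdiff : ∀ p ∈ interior SY, ∀ q : Y →L[ℝ] ℝ,
      HasDerivAt (fun t : ℝ => φY (p + t • q)) (q (gY p)) 0)
    (DX : X → X → ℝ) (hDXdef : ∀ x x', DX x x' = φX x - φX x' - gX x' (x - x'))
    (DY : (Y →L[ℝ] ℝ) → (Y →L[ℝ] ℝ) → ℝ)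
    (hDYdef : ∀ p q, DY p q = φY p - φY q - (p - q) (gY q))
    (hscX : ∀ x ∈ SX, ∀ x' ∈ interior SX, (1/2) * ‖x - x'‖ ^ 2 ≤ DX x x')
    (hscY : ∀ p ∈ SY, ∀ q ∈ interior SY, (1/2) * ‖p - q‖ ^ 2 ≤ DY p q)
    (θ τ σ : ℝ) (hθ : 0 < θ ∧ θ ≤ 1) (hτ : 0 < τ) (hσ : 0 < σ)
    (hid : τ * σ * θ * ‖A‖ ^ 2 = 1) :
    ∀ x ∈ SX, ∀ xk ∈ interior SX, ∀ p ∈ SY, ∀ pk ∈ interior SY, ∀ pk1 ∈ interior SY,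
      (1/σ) * DY p pk ≤
        (1/τ) * DX x xk + (1/σ) * DY p pk + (θ/σ) * DY pk pk1
          + θ * ((pk - pk1) (A (x - xk))) := by
  intro x hx xk hxk p hp pk hpk pk1 hpk1
  have hX := hscX x hx xk hxk
  have hY := hscY pk (interior_subset hpk) pk1 hpk1
  set a := ‖x - xk‖ with ha
  set b := ‖pk - pk1‖ with hb
  have ha0 : 0 ≤ a := norm_nonneg _
  have hb0 : 0 ≤ b := norm_nonneg _
  have hA0 : 0 ≤ ‖A‖ := norm_nonneg _
  have hpair : -(b * (‖A‖ * a)) ≤ (pk - pk1) (A (x - xk)) := by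
    have h1 : |(pk - pk1) (A (x - xk))| ≤ b * ‖A (x - xk)‖ := (pk - pk1).le_opNorm _
    have h2 : ‖A (x - xk)‖ ≤ ‖A‖ * a := A.le_opNorm _
    have h3 := neg_abs_le ((pk - pk1) (A (x - xk)))
    nlinarith
  have h3 : -(θ * ‖A‖ * a * b) ≤ θ * ((pk - pk1) (A (x - xk))) := by
    nlinarith [mul_le_mul_of_nonneg_left hpair hθ.1.le]
  have hid2 : (τ * σ * θ * ‖A‖) ^ 2 = τ * σ * θ := by
    have : (τ * σ * θ * ‖A‖) ^ 2 = (τ * σ * θ) * (τ * σ * θ * ‖A‖ ^ 2) := by ring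
    rw [this, hid, mul_one]
  have hid3 : (τ * σ * θ * ‖A‖) ^ 2 * b ^ 2 = τ * σ * θ * b ^ 2 := by rw [hid2]
  have hm : 2 * (τ * σ) * (θ * ‖A‖ * a * b) ≤ σ * a ^ 2 + τ * θ * b ^ 2 := by
    nlinarith [sq_nonneg (σ * a - τ * σ * θ * ‖A‖ * b), hσ, hid3]
  have hkey : θ * ‖A‖ * a * b ≤ (1/τ) * ((1/2) * a ^ 2) + (θ/σ) * ((1/2) * b ^ 2) := by
    rw [← sub_nonneg]
    have h : (1/τ) * ((1/2) * a ^ 2) + (θ/σ) * ((1/2) * b ^ 2) - θ * ‖A‖ * a * b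
        = (σ * a ^ 2 + τ * θ * b ^ 2 - 2 * (τ * σ) * (θ * ‖A‖ * a * b)) / (2 * τ * σ) := by
      field_simp
    rw [h]
    apply div_nonneg (by linarith) (by positivity)
  have h1 : (1/τ) * ((1/2) * a ^ 2) ≤ (1/τ) * DX x xk :=
    mul_le_mul_of_nonneg_left hX (by positivity)
  have h2 : (θ/σ) * ((1/2) * b ^ 2) ≤ (θ/σ) * DY pk pk1 :=
    mul_le_mul_of_nonneg_left hY (div_nonneg hθ.1.le hσ.le)
  linarith
end
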